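/- arXiv:2311.11709 — 10 statements merged into one kernel-verified Lean document; each statement's English description precedes it below -/
import Mathlib

section
/- Let A : ℝ → ℝ be locally integrable, 1-periodic, nonnegative, and let λ ≥ 0 satisfy λ ≤ ∫₀¹ A(s) ds. Define ψ(t) := sup over t₁ ≤ t of ∫_{t₁}^{t} (λ − A(s)) ds. Then ψ is nonnegative, Lipschitz continuous (when A is bounded), 1-periodic, and the supremum in its definition is attained for some t₁ ∈ [t−1, t]. -/
open MeasureTheory

/-- Basic properties of `ψ(t) = sup_{t₁ ≤ t} ∫_{t₁}^t (λ − A(s)) ds`: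
nonnegative, Lipschitz, 1-periodic, and the supremum is attained in `[t−1, t]`. -/
theorem psi_basic_properties (A : ℝ → ℝ) (lam : ℝ)
    (hmeas : Measurable A) (hbd : ∃ M, ∀ t, |A t| ≤ M)
    (hnn : ∀ t, 0 ≤ A t) (hper : ∀ t, A (t + 1) = A t)
    (hlam0 : 0 ≤ lam) (hlam1 : lam ≤ ∫ s in (0:ℝ)..1, A s)
    (ψ : ℝ → ℝ)
    (hψ : ∀ t, ψ t = sSup ((fun t₁ => ∫ s in t₁..t, (lam - A s)) '' Set.Iic t)) :
    (∀ t, 0 ≤ ψ t) ∧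
    (∃ K : NNReal, LipschitzWith K ψ) ∧
    (∀ t, ψ (t + 1) = ψ t) ∧
    (∀ t, ∃ t₁ ∈ Set.Icc (t - 1) t, ψ t = ∫ s in t₁..t, (lam - A s)) := by
  obtain ⟨M, hM⟩ := hbd
  have hM0 : 0 ≤ M := (abs_nonneg _).trans (hM 0)
  -- integrability
  have hintA : ∀ a b : ℝ, IntervalIntegrable A volume a b := by
    intro a b
    rw [intervalIntegrable_iff]
    refine Integrable.mono' (g := fun _ => M) ?_ ?_ ?_
    · exact (integrableOn_const_iff).mpr (Or.inr measure_Ioc_lt_top)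
    · exact hmeas.aestronglyMeasurable.restrict
    · exact ae_of_all _ fun s => hM s
  have hinth : ∀ a b : ℝ, IntervalIntegrable (fun s => lam - A s) volume a b :=
    fun a b => (intervalIntegrable_const).sub (hintA a b)
  -- pointwise bound
  have hbnd : ∀ s, |lam - A s| ≤ lam + M := by
    intro s
    calc |lam - A s| ≤ |lam| + |A s| := abs_sub _ _
    _ ≤ lam + M := by rw [abs_of_nonneg hlam0]; linarith [hM s]
  -- continuity in the lower endpoint
  have hcont : ∀ t : ℝ, Continuous fun t₁ => ∫ s in t₁..t, (lam - A s) := by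
    intro t
    have h1 : Continuous fun t₁ => ∫ s in t..t₁, (lam - A s) :=
      intervalIntegral.continuous_primitive hinth t
    have h2 := h1.neg
    convert h2 using 2 with t₁
    exact intervalIntegral.integral_symm t t₁
  -- periodicity of the integrand
  have hperh : Function.Periodic (fun s => lam - A s) 1 := fun s => by simp [hper s]
  -- integral over a unit interval is nonpositive
  have hunit : ∀ a : ℝ, (∫ s in a..a+1, (lam - A s)) ≤ 0 := by
    intro a
    rw [hperh.intervalIntegral_add_eq a 0]
    have : (∫ s in (0:ℝ)..(0+1:ℝ), (lam - A s)) = lam - ∫ s in (0:ℝ)..1, A s := by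
      rw [show ((0:ℝ)+1 = 1) by norm_num,
        intervalIntegral.integral_sub intervalIntegrable_const (hintA 0 1)]
      simp
    rw [this]
    linarith
  -- shifting the lower endpoint up by 1 does not decrease the integral
  have hshift : ∀ t t₁ : ℝ, t₁ + 1 ≤ t →
      (∫ s in t₁..t, (lam - A s)) ≤ ∫ s in (t₁+1)..t, (lam - A s) := by
    intro t t₁ _
    have hsplit : (∫ s in t₁..(t₁+1), (lam - A s)) + (∫ s in (t₁+1)..t, (lam - A s))
        = ∫ s in t₁..t, (lam - A s) :=
      intervalIntegral.integral_add_adjacent_intervals (hinth _ _) (hinth _ _)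
    linarith [hunit t₁]
  -- any lower endpoint can be pushed into [t-1, t]
  have hreduce : ∀ t t₁ : ℝ, t₁ ≤ t → ∃ t₂ ∈ Set.Icc (t-1) t,
      (∫ s in t₁..t, (lam - A s)) ≤ ∫ s in t₂..t, (lam - A s) := by
    intro t
    have key : ∀ n : ℕ, ∀ t₁ : ℝ, t₁ ≤ t → t - t₁ ≤ n → ∃ t₂ ∈ Set.Icc (t-1) t,
        (∫ s in t₁..t, (lam - A s)) ≤ ∫ s in t₂..t, (lam - A s) := by
      intro n
      induction n with
      | zero =>
        intro t₁ h1 h2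
        push_cast at h2
        exact ⟨t₁, ⟨by linarith, h1⟩, le_refl _⟩
      | succ n ih =>
        intro t₁ h1 h2
        by_cases hc : t - 1 ≤ t₁
        · exact ⟨t₁, ⟨hc, h1⟩, le_refl _⟩
        · push_neg at hc
          have h3 : t₁ + 1 ≤ t := by linarith
          push_cast at h2
          obtain ⟨t₂, ht₂, hle⟩ := ih (t₁+1) h3 (by linarith)
          exact ⟨t₂, ht₂, (hshift t t₁ h3).trans hle⟩
    intro t₁ h1
    exact key ⌈t - t₁⌉₊ t₁ h1 (Nat.le_ceil _)
  -- the supremum is attained at a maximizer in [t-1, t]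
  have hmax : ∀ t : ℝ, ∃ t₂ ∈ Set.Icc (t-1) t,
      (∀ t₁ ≤ t, (∫ s in t₁..t, (lam - A s)) ≤ ∫ s in t₂..t, (lam - A s)) ∧
      ψ t = ∫ s in t₂..t, (lam - A s) := by
    intro t
    obtain ⟨t₂, ht₂, hismax⟩ := (isCompact_Icc (a := t-1) (b := t)).exists_isMaxOn
      ⟨t, by constructor <;> linarith⟩ ((hcont t).continuousOn)
    have hub : ∀ t₁ ≤ t, (∫ s in t₁..t, (lam - A s)) ≤ ∫ s in t₂..t, (lam - A s) := by
      intro t₁ h1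
      obtain ⟨t₃, ht₃, hle⟩ := hreduce t t₁ h1
      exact hle.trans (hismax ht₃)
    refine ⟨t₂, ht₂, hub, ?_⟩
    rw [hψ]
    apply le_antisymm
    · refine csSup_le ⟨_, ⟨t, le_refl t, rfl⟩⟩ ?_
      rintro x ⟨t₁, h1, rfl⟩
      exact hub t₁ h1
    · refine le_csSup ⟨∫ s in t₂..t, (lam - A s), ?_⟩ ⟨t₂, ht₂.2, rfl⟩
      rintro x ⟨t₁, h1, rfl⟩
      exact hub t₁ h1
  -- nonnegativity
  have hnn' : ∀ t, 0 ≤ ψ t := by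
    intro t
    obtain ⟨t₂, _, hub, heq⟩ := hmax t
    have := hub t (le_refl t)
    simpa [heq] using this
  refine ⟨hnn', ?_, ?_, ?_⟩
  · -- Lipschitz
    have hlip1 : ∀ x y : ℝ, ψ x - ψ y ≤ (lam + M) * |x - y| := by
      intro x y
      obtain ⟨t₁, ht₁, _, heq⟩ := hmax x
      by_cases hc : t₁ ≤ y
      · obtain ⟨t₂, _, hub', heq'⟩ := hmax y
        have hy : (∫ s in t₁..y, (lam - A s)) ≤ ψ y := heq' ▸ hub' t₁ hc
        have hsplit : (∫ s in t₁..y, (lam - A s)) + (∫ s in y..x, (lam - A s))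
            = ∫ s in t₁..x, (lam - A s) :=
          intervalIntegral.integral_add_adjacent_intervals (hinth _ _) (hinth _ _)
        have hb : |∫ s in y..x, (lam - A s)| ≤ (lam + M) * |x - y| := by
          have := intervalIntegral.norm_integral_le_of_norm_le_const
            (a := y) (b := x) (C := lam + M) (f := fun s => lam - A s)
            (fun s _ => by simpa [Real.norm_eq_abs] using hbnd s)
          simpa [Real.norm_eq_abs] using this
        have := abs_le.mp hb
        rw [heq]
        linarith
      · push_neg at hc
        have hb : |∫ s in t₁..x, (lam - A s)| ≤ (lam + M) * |x - t₁| := by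
          have := intervalIntegral.norm_integral_le_of_norm_le_const
            (a := t₁) (b := x) (C := lam + M) (f := fun s => lam - A s)
            (fun s _ => by simpa [Real.norm_eq_abs] using hbnd s)
          simpa [Real.norm_eq_abs] using this
        have h1 := (abs_le.mp hb).2
        have h2 : |x - t₁| ≤ |x - y| := by
          rw [abs_of_nonneg (by linarith [ht₁.2] : (0:ℝ) ≤ x - t₁),
            abs_of_nonneg (by linarith [ht₁.2] : (0:ℝ) ≤ x - y)]
          linarith
        have h3 : (lam + M) * |x - t₁| ≤ (lam + M) * |x - y| := by
          apply mul_le_mul_of_nonneg_left h2; linarith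
        have := hnn' y
        rw [heq]
        linarith
    refine ⟨⟨lam + M, by linarith⟩, LipschitzWith.of_dist_le_mul fun x y => ?_⟩
    rw [Real.dist_eq, Real.dist_eq]
    have h1 := hlip1 x y
    have h2 := hlip1 y x
    rw [abs_sub_comm y x] at h2
    rw [abs_le]
    change -((lam + M) * |x - y|) ≤ ψ x - ψ y ∧ ψ x - ψ y ≤ (lam + M) * |x - y|
    constructor <;> linarith
  · -- periodicity
    intro t
    have hstep : ∀ t₁ : ℝ, (∫ s in (t₁+1)..(t+1), (lam - A s)) = ∫ s in t₁..t, (lam - A s) := by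
      intro t₁
      rw [← intervalIntegral.integral_comp_add_right (fun s => lam - A s) 1]
      simp only [hper]
    rw [hψ, hψ]
    congr 1
    rw [show Set.Iic (t+1) = (fun x => x + 1) '' Set.Iic t from (Set.image_add_const_Iic 1 t).symm,
      ← Set.image_comp]
    exact Set.image_congr' (fun t₁ => hstep t₁)
  · -- attainment
    intro t
    obtain ⟨t₂, ht₂, _, heq⟩ := hmax t
    exact ⟨t₂, ht₂, heq⟩
end

section
/- Let A : ℝ → ℝ be bounded, measurable, nonnegative and 1-periodic, and let 0 ≤ λ ≤ ∫₀¹ A. Define ψ_λ(t) := max_{t₁ ≤ t} ∫_{t₁}^t (λ − A(s)) ds. Then ψ_λ is differentiable almost everywhere and ψ_λ'(t) = λ − A(t) at a.e. point t with ψ_λ(t) > 0, while ψ_λ'(t) = 0 at a.e. point t with ψ_λ(t) = 0. -/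
open MeasureTheory

lemma sSup_const_sub_image {T : Set ℝ} (hT : T.Nonempty) (hB : BddBelow T) (a : ℝ) :
    sSup ((fun x => a - x) '' T) = a - sInf T := by
  have hBA : BddAbove ((fun x => a - x) '' T) := by
    obtain ⟨b, hb⟩ := hB
    refine ⟨a - b, ?_⟩
    rintro _ ⟨x, hx, rfl⟩
    have := hb hx
    simp only [Set.mem_setOf_eq]
    linarith
  apply le_antisymm
  · apply csSup_le (hT.image _)
    rintro _ ⟨x, hx, rfl⟩
    have := csInf_le hB hx
    dsimp only
    linarith
  · have h : a - sSup ((fun x => a - x) '' T) ≤ sInf T := by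
      apply le_csInf hT
      intro x hx
      have := le_csSup hBA (Set.mem_image_of_mem _ hx)
      linarith
    linarith

lemma ae_hasDerivAt_primitive (g : ℝ → ℝ) (hgmeas : Measurable g) (L : ℝ)
    (hgbd : ∀ t, |g t| ≤ L) :
    ∀ᵐ x : ℝ, HasDerivAt (fun t => ∫ s in (0:ℝ)..t, g s) (g x) x := by
  have hL0 : 0 ≤ L := (abs_nonneg _).trans (hgbd 0)
  have hgint : ∀ a b : ℝ, IntervalIntegrable g volume a b := by
    intro a b
    rw [intervalIntegrable_iff]
    apply Measure.integrableOn_of_bounded measure_Ioc_lt_top.ne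
      hgmeas.aestronglyMeasurable
    exact ae_of_all _ fun x => by simpa [Real.norm_eq_abs] using hgbd x
  have hloc : LocallyIntegrable g volume := by
    rw [locallyIntegrable_iff]
    intro K hK
    exact Measure.integrableOn_of_bounded hK.measure_lt_top.ne
      hgmeas.aestronglyMeasurable (ae_of_all _ fun x => by simpa [Real.norm_eq_abs] using hgbd x)
  filter_upwards [IsUnifLocDoublingMeasure.ae_tendsto_average_norm_sub (volume : Measure ℝ) hloc 1] with x hx
  set F : ℝ → ℝ := fun t => ∫ s in (0:ℝ)..t, g s with hF_def
  have hδ : Filter.Tendsto (fun y : ℝ => |y - x|) (nhdsWithin x {x}ᶜ) (nhdsWithin 0 (Set.Ioi 0)) := by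
    apply tendsto_nhdsWithin_of_tendsto_nhds_of_eventually_within
    · have : Filter.Tendsto (fun y : ℝ => |y - x|) (nhds x) (nhds |x - x|) :=
        (continuous_abs.comp (continuous_id.sub continuous_const)).tendsto x
      simpa using this.mono_left nhdsWithin_le_nhds
    · filter_upwards [self_mem_nhdsWithin] with y hy
      have : y ≠ x := hy
      simpa using abs_pos.2 (sub_ne_zero.2 this)
  have hmem : ∀ᶠ y in nhdsWithin x {x}ᶜ, x ∈ Metric.closedBall x (1 * |y - x|) := by
    filter_upwards with y
    simp [abs_nonneg]
  have havg := hx (fun _ => x) (fun y => |y - x|) hδ hmem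
  have key : ∀ y : ℝ, y ≠ x →
      ‖slope F x y - g x‖ ≤ 2 * ⨍ z in Metric.closedBall x |y - x|, ‖g z - g x‖ := by
    intro y hy
    set r := |y - x| with hr
    have hr0 : 0 < r := abs_pos.2 (sub_ne_zero.2 hy)
    have hFy : F y - F x = ∫ s in x..y, g s := by
      have := intervalIntegral.integral_add_adjacent_intervals (hgint 0 x) (hgint x y)
      simp only [hF_def]
      linarith
    have h1 : slope F x y - g x = (y - x)⁻¹ * (∫ s in x..y, (g s - g x)) := by
      rw [slope_def_field, div_eq_inv_mul,
        intervalIntegral.integral_sub (hgint x y) intervalIntegrable_const,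
        intervalIntegral.integral_const, hFy]
      have hyx : y - x ≠ 0 := sub_ne_zero.2 hy
      field_simp
      rw [smul_eq_mul]
    have h2 : ‖∫ s in x..y, (g s - g x)‖ ≤ ∫ z in Set.uIoc x y, ‖g z - g x‖ :=
      intervalIntegral.norm_integral_le_integral_norm_uIoc
    have hsub : Set.uIoc x y ⊆ Metric.closedBall x r := by
      intro z hz
      rw [Real.closedBall_eq_Icc]
      rcases le_total x y with h | h
      · rw [Set.uIoc_of_le h] at hz
        have hry : r = y - x := by rw [hr, abs_of_nonneg (by linarith : (0:ℝ) ≤ y - x)]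
        exact ⟨by linarith [hz.1], by linarith [hz.2]⟩
      · rw [Set.uIoc_comm, Set.uIoc_of_le h] at hz
        have hry : r = x - y := by rw [hr, abs_of_nonpos (by linarith : y - x ≤ 0)]; ring
        exact ⟨by linarith [hz.1], by linarith [hz.2]⟩
    have hint : IntegrableOn (fun z => ‖g z - g x‖) (Metric.closedBall x r) volume := by
      apply Measure.integrableOn_of_bounded (M := L + |g x|)
      · rw [Real.volume_closedBall]; exact ENNReal.ofReal_lt_top.ne
      · exact ((hgmeas.sub measurable_const).norm).aestronglyMeasurable
      · refine ae_of_all _ fun z => ?_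
        simp only [Real.norm_eq_abs, abs_abs]
        calc |g z - g x| ≤ |g z| + |g x| := abs_sub _ _
        _ ≤ L + |g x| := by linarith [hgbd z]
    have h3 : (∫ z in Set.uIoc x y, ‖g z - g x‖) ≤ ∫ z in Metric.closedBall x r, ‖g z - g x‖ :=
      setIntegral_mono_set hint (ae_of_all _ fun z => norm_nonneg _)
        (HasSubset.Subset.eventuallyLE hsub)
    have h4 : (∫ z in Metric.closedBall x r, ‖g z - g x‖)
        = (2 * r) * ⨍ z in Metric.closedBall x r, ‖g z - g x‖ := by
      rw [setAverage_eq, Real.volume_real_closedBall (by positivity)]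
      rw [smul_eq_mul, ← mul_assoc, mul_inv_cancel₀ (by positivity), one_mul]
    rw [h1]
    rw [norm_mul, norm_inv, Real.norm_eq_abs, Real.norm_eq_abs, ← hr]
    calc r⁻¹ * |∫ s in x..y, (g s - g x)|
        ≤ r⁻¹ * ((2 * r) * ⨍ z in Metric.closedBall x r, ‖g z - g x‖) := by
          apply mul_le_mul_of_nonneg_left _ (by positivity)
          rw [← h4]
          exact le_trans (by simpa [Real.norm_eq_abs] using h2) h3
      _ = 2 * ⨍ z in Metric.closedBall x r, ‖g z - g x‖ := by
          field_simp
  rw [hasDerivAt_iff_tendsto_slope]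
  have havg2 : Filter.Tendsto (fun y => 2 * ⨍ z in Metric.closedBall x |y - x|, ‖g z - g x‖)
      (nhdsWithin x {x}ᶜ) (nhds 0) := by
    simpa using havg.const_mul 2
  have hslope : Filter.Tendsto (fun y => slope F x y - g x) (nhdsWithin x {x}ᶜ) (nhds 0) := by
    apply squeeze_zero_norm' _ havg2
    filter_upwards [self_mem_nhdsWithin] with y hy
    exact key y hy
  have := hslope.add (tendsto_const_nhds (x := g x))
  simpa using this

/-- Almost everywhere, `ψ_λ` is differentiable with `ψ_λ' = λ − A` where `ψ_λ > 0`
and `ψ_λ' = 0` where `ψ_λ = 0`. -/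
theorem psi_derivative_ae (A : ℝ → ℝ) (lam : ℝ)
    (hmeas : Measurable A) (hbd : ∃ M, ∀ t, |A t| ≤ M)
    (hnn : ∀ t, 0 ≤ A t) (hper : ∀ t, A (t + 1) = A t)
    (hlam0 : 0 ≤ lam) (hlam1 : lam ≤ ∫ s in (0:ℝ)..1, A s)
    (ψ : ℝ → ℝ)
    (hψ : ∀ t, ψ t = sSup ((fun t₁ => ∫ s in t₁..t, (lam - A s)) '' Set.Iic t)) :
    ∀ᵐ t : ℝ, (0 < ψ t → HasDerivAt ψ (lam - A t) t) ∧ (ψ t = 0 → HasDerivAt ψ 0 t) := by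
  obtain ⟨M, hM⟩ := hbd
  have hM0 : 0 ≤ M := (abs_nonneg _).trans (hM 0)
  set g : ℝ → ℝ := fun s => lam - A s with hg_def
  have hgmeas : Measurable g := measurable_const.sub hmeas
  set L : ℝ := |lam| + M + 1 with hL_def
  have hL0 : 0 < L := by positivity
  have hgbd : ∀ t, |g t| ≤ L := by
    intro t
    calc |g t| ≤ |lam| + |A t| := abs_sub _ _
    _ ≤ L := by linarith [hM t]
  have hgint : ∀ a b : ℝ, IntervalIntegrable g volume a b := by
    intro a b
    rw [intervalIntegrable_iff]
    exact Measure.integrableOn_of_bounded measure_Ioc_lt_top.ne hgmeas.aestronglyMeasurable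
      (ae_of_all _ fun x => by simpa [Real.norm_eq_abs] using hgbd x)
  have hAint : ∀ a b : ℝ, IntervalIntegrable A volume a b := by
    intro a b
    rw [intervalIntegrable_iff]
    exact Measure.integrableOn_of_bounded measure_Ioc_lt_top.ne hmeas.aestronglyMeasurable
      (ae_of_all _ fun x => by simpa [Real.norm_eq_abs] using hM x)
  set F : ℝ → ℝ := fun t => ∫ s in (0:ℝ)..t, g s with hF_def
  have hFsub : ∀ a b : ℝ, F b - F a = ∫ s in a..b, g s := by
    intro a b
    have := intervalIntegral.integral_add_adjacent_intervals (hgint 0 a) (hgint a b)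
    simp only [hF_def]
    linarith
  have hFlip : ∀ a b : ℝ, |F b - F a| ≤ L * |b - a| := by
    intro a b
    rw [hFsub a b]
    simpa [Real.norm_eq_abs] using
      intervalIntegral.norm_integral_le_of_norm_le_const
        (C := L) (f := g) (a := a) (b := b) (fun x _ => by simpa [Real.norm_eq_abs] using hgbd x)
  have hgper : ∀ s, g (s + 1) = g s := by
    intro s
    simp only [hg_def, hper]
  have hc : F 1 ≤ 0 := by
    have h1 : F 1 = lam - ∫ s in (0:ℝ)..1, A s := by
      simp only [hF_def, hg_def]
      rw [intervalIntegral.integral_sub intervalIntegrable_const (hAint 0 1),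
        intervalIntegral.integral_const]
      simp
    linarith
  have hFper : ∀ t, F (t + 1) = F t + F 1 := by
    intro t
    have h1 : F (t + 1) - F 1 = ∫ s in (1:ℝ)..(t + 1), g s := hFsub 1 (t + 1)
    have h2 := intervalIntegral.integral_comp_add_right (a := 0) (b := t) (f := g) 1
    simp only [hgper] at h2
    rw [zero_add] at h2
    have h3 : F t = ∫ s in (1:ℝ)..(t + 1), g s := by
      rw [← h2]
    linarith
  have hFiter : ∀ (n : ℕ) (t : ℝ), F (t + n) = F t + n * F 1 := by
    intro n
    induction n with
    | zero => simp
    | succ k ih =>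
      intro t
      have he : (t + ((k : ℕ) + 1 : ℕ) : ℝ) = (t + k) + 1 := by push_cast; ring
      rw [he, hFper, ih]
      push_cast
      ring
  have hlower : ∀ t t₁ : ℝ, t₁ ≤ t → F t - L ≤ F t₁ := by
    intro t t₁ h
    set n : ℕ := ⌈t - t₁⌉₊ with hn_def
    have hn1 : t - t₁ ≤ n := Nat.le_ceil _
    have hn2 : (n : ℝ) < t - t₁ + 1 := Nat.ceil_lt_add_one (by linarith)
    have h1 : F (t₁ + n) = F t₁ + n * F 1 := hFiter n t₁
    have h2 := hFlip t (t₁ + n)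
    have h3 : |t₁ + n - t| ≤ 1 := by
      rw [abs_le]; constructor <;> linarith
    have h4 : (n : ℝ) * F 1 ≤ 0 := mul_nonpos_of_nonneg_of_nonpos n.cast_nonneg hc
    have h5 : L * |t₁ + n - t| ≤ L * 1 := mul_le_mul_of_nonneg_left h3 hL0.le
    have h6 := abs_le.mp h2
    have h7 := h6.1
    linarith
  set m : ℝ → ℝ := fun t => sInf (F '' Set.Iic t) with hm_def
  have hSne : ∀ t : ℝ, (F '' Set.Iic t).Nonempty :=
    fun t => ⟨F t, t, Set.mem_Iic.mpr le_rfl, rfl⟩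
  have hSbdd : ∀ t : ℝ, BddBelow (F '' Set.Iic t) := by
    intro t
    refine ⟨F t - L, ?_⟩
    rintro _ ⟨t₁, ht₁, rfl⟩
    exact hlower t t₁ ht₁
  have hmle : ∀ t : ℝ, m t ≤ F t :=
    fun t => csInf_le (hSbdd t) ⟨t, Set.mem_Iic.mpr le_rfl, rfl⟩
  have hm_anti : ∀ a b : ℝ, a ≤ b → m b ≤ m a :=
    fun a b h => csInf_le_csInf (hSbdd b) (hSne a)
      (Set.image_mono (Set.Iic_subset_Iic.mpr h))
  have hψeq' : ∀ t : ℝ, ψ t = F t - m t := by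
    intro t
    rw [hψ t]
    have himg : ((fun t₁ => ∫ s in t₁..t, (lam - A s)) '' Set.Iic t)
        = (fun x => F t - x) '' (F '' Set.Iic t) := by
      rw [← Set.image_comp]
      apply Set.image_congr
      intro u _
      show (∫ s in u..t, (lam - A s)) = F t - F u
      rw [hFsub u t]
    rw [himg, sSup_const_sub_image (hSne t) (hSbdd t)]
  have hψnn : ∀ t : ℝ, 0 ≤ ψ t := by
    intro t
    rw [hψeq' t]
    linarith [hmle t]
  have hm_lip_aux : ∀ a b : ℝ, b ≤ a → m b ≤ m a + L * (a - b) := by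
    intro a b hba
    have h : m b - L * (a - b) ≤ m a := by
      apply le_csInf (hSne a)
      rintro y ⟨s, hs, rfl⟩
      have hsa : s ≤ a := Set.mem_Iic.mp hs
      by_cases hsb : s ≤ b
      · have h1 := csInf_le (hSbdd b) ⟨s, Set.mem_Iic.mpr hsb, rfl⟩
        have h2 : 0 ≤ L * (a - b) := mul_nonneg hL0.le (by linarith)
        linarith
      · push_neg at hsb
        have h2 := hFlip b s
        have h3 : |s - b| ≤ a - b := by
          rw [abs_of_pos (by linarith)]; linarith
        have h4 := hmle b
        have h5 : L * |s - b| ≤ L * (a - b) := mul_le_mul_of_nonneg_left h3 hL0.le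
        have h6 := (abs_le.mp h2).1
        linarith
    linarith
  have hm_lipR : ∀ a b : ℝ, |m a - m b| ≤ L * |a - b| := by
    intro a b
    rcases le_total a b with h | h
    · have h1 := hm_anti a b h
      have h2 := hm_lip_aux b a h
      rw [abs_of_nonneg (by linarith : (0:ℝ) ≤ m a - m b), abs_of_nonpos (by linarith : a - b ≤ 0)]
      linarith
    · have h1 := hm_anti b a h
      have h2 := hm_lip_aux a b h
      rw [abs_of_nonpos (by linarith : m a - m b ≤ 0), abs_of_nonneg (by linarith : (0:ℝ) ≤ a - b)]
      linarith
  have hm_lip : LipschitzWith (Real.toNNReal L) m := by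
    apply LipschitzWith.of_dist_le_mul
    intro a b
    rw [Real.dist_eq, Real.dist_eq, Real.coe_toNNReal L hL0.le]
    exact hm_lipR a b
  have hm_const : ∀ t : ℝ, 0 < ψ t → ∀ t', |t' - t| ≤ ψ t / (2 * L) → m t' = m t := by
    intro t hpos t' ht'
    have hψt : ψ t = F t - m t := hψeq' t
    have hεpos : 0 < ψ t / (2 * L) := div_pos hpos (by linarith)
    have hLε : L * (ψ t / (2 * L)) = ψ t / 2 := by
      field_simp
    have hFs : ∀ s : ℝ, |s - t| ≤ ψ t / (2 * L) → m t + ψ t / 2 ≤ F s := by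
      intro s hs
      have h2 := hFlip t s
      have h5 : L * |s - t| ≤ ψ t / 2 := by
        calc L * |s - t| ≤ L * (ψ t / (2 * L)) := mul_le_mul_of_nonneg_left hs hL0.le
        _ = ψ t / 2 := hLε
      have h6 := (abs_le.mp h2).1
      have h8 : -(ψ t / 2) ≤ -(L * |s - t|) := neg_le_neg h5
      have h9 : -(ψ t / 2) ≤ F s - F t := h8.trans h6
      linarith [h9, hψt]
    have ht'1 := (abs_le.mp ht').1
    have ht'2 := (abs_le.mp ht').2
    apply le_antisymm
    · apply le_of_forall_pos_le_add
      intro δ hδ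
      have hδ' : 0 < min δ (ψ t / 2) := lt_min hδ (by linarith)
      have hmt0 : m t = sInf (F '' Set.Iic t) := rfl
      have hlt : sInf (F '' Set.Iic t) < m t + min δ (ψ t / 2) := by
        rw [← hmt0]; linarith
      obtain ⟨y, ⟨s, hs, rfl⟩, hy⟩ := exists_lt_of_csInf_lt (hSne t) hlt
      have hst : s ≤ t := Set.mem_Iic.mp hs
      have hst' : s ≤ t' := by
        by_contra hcon
        push_neg at hcon
        have habs : |s - t| ≤ ψ t / (2 * L) := by
          rw [abs_le]
          constructor
          · linarith
          · linarith
        have h7 := hFs s habs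
        have h8 : min δ (ψ t / 2) ≤ ψ t / 2 := min_le_right _ _
        linarith
      calc m t' ≤ F s := csInf_le (hSbdd t') ⟨s, Set.mem_Iic.mpr hst', rfl⟩
      _ ≤ m t + δ := by
          have h8 : min δ (ψ t / 2) ≤ δ := min_le_left _ _
          linarith
    · apply le_csInf (hSne t')
      rintro y ⟨s, hs, rfl⟩
      have hst' : s ≤ t' := Set.mem_Iic.mp hs
      by_cases hst : s ≤ t
      · exact csInf_le (hSbdd t) ⟨s, Set.mem_Iic.mpr hst, rfl⟩
      · push_neg at hst
        have habs : |s - t| ≤ ψ t / (2 * L) := by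
          rw [abs_le]
          constructor
          · linarith
          · linarith
        have h7 := hFs s habs
        linarith
  have hm_deriv : ∀ t : ℝ, 0 < ψ t → HasDerivAt m 0 t := by
    intro t hpos
    have hεpos : 0 < ψ t / (2 * L) := div_pos hpos (by linarith)
    have hev : m =ᶠ[nhds t] fun _ => m t := by
      filter_upwards [Metric.ball_mem_nhds t hεpos] with y hy
      exact hm_const t hpos y (le_of_lt (by rw [Metric.mem_ball, Real.dist_eq] at hy; exact hy))
    exact (hasDerivAt_const t (m t)).congr_of_eventuallyEq hev
  have hF_deriv : ∀ᵐ x : ℝ, HasDerivAt F (g x) x := by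
    have := ae_hasDerivAt_primitive g hgmeas L hgbd
    simpa only [← hF_def] using this
  have hm_diff : ∀ᵐ x : ℝ, DifferentiableAt ℝ m x := hm_lip.ae_differentiableAt
  have hψfun : ψ = fun y => F y - m y := funext hψeq'
  filter_upwards [hF_deriv, hm_diff] with t hFt hmt
  refine ⟨fun hpos => ?_, fun hzero => ?_⟩
  · have h : HasDerivAt (fun y => F y - m y) (g t - 0) t := hFt.sub (hm_deriv t hpos)
    rw [hψfun]
    convert h using 1
    simp [hg_def]
  · rw [hψfun]
    have hd : DifferentiableAt ℝ (fun y => F y - m y) t := hFt.differentiableAt.sub hmt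
    have hmin : IsLocalMin (fun y => F y - m y) t := by
      apply Filter.Eventually.of_forall
      intro y
      have h1 : F t - m t = 0 := by rw [← hψeq' t]; exact hzero
      have h2 : 0 ≤ F y - m y := by rw [← hψeq' y]; exact hψnn y
      show F t - m t ≤ F y - m y
      linarith
    have h0 : deriv (fun y => F y - m y) t = 0 := hmin.deriv_eq_zero
    rw [← h0]
    exact hd.hasDerivAt
end

section
/- Let A be bounded, measurable, nonnegative, 1-periodic, let λ ∈ [0, ∫₀¹ A], and define the flux F_λ(t) := λ if (1/(t−t₁)) ∫_{t₁}^t A(s) ds ≥ λ for all t₁ < t, and F_λ(t) := A(t) otherwise. Then F_λ(t) ≤ A(t) at every point t of approximate continuity of A (hence almost everywhere), and ∫₀¹ F_λ(t) dt = λ. -/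
open MeasureTheory

open Set Filter Topology intervalIntegral

lemma lipschitz_integral_deriv {f : ℝ → ℝ} {C : NNReal} (hf : LipschitzWith C f) (a b : ℝ) :
    ∫ t in a..b, deriv f t = f b - f a := by
  have hcont : Continuous f := hf.continuous
  have hint : ∀ x y : ℝ, IntervalIntegrable f volume x y := fun x y => hcont.intervalIntegrable x y
  set G : ℝ → ℝ := fun x => ∫ t in (0:ℝ)..x, f t with hG
  have hGint : ∀ x y : ℝ, ∫ t in x..y, f t = G y - G x := by
    intro x y
    have := integral_add_adjacent_intervals (hint 0 x) (hint x y)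
    simp only [hG]; linarith
  have hGd : ∀ x : ℝ, HasDerivAt G (f x) x := fun x =>
    integral_hasDerivAt_right (hint 0 x)
      (hcont.stronglyMeasurable.stronglyMeasurableAtFilter) hcont.continuousAt
  -- sequence
  set u : ℕ → ℝ := fun n => 1 / ((n : ℝ) + 1) with hu
  have hupos : ∀ n, 0 < u n := fun n => by positivity
  have hu0 : Tendsto u atTop (𝓝[≠] 0) := by
    apply tendsto_nhdsWithin_of_tendsto_nhds_of_eventually_within
    · exact tendsto_one_div_add_atTop_nhds_zero_nat
    · exact Eventually.of_forall fun n => (hupos n).ne'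
  have hslope : ∀ x : ℝ, Tendsto (fun n => (G (x + u n) - G x) / u n) atTop (𝓝 (f x)) := by
    intro x
    have := (hasDerivAt_iff_tendsto_slope_zero.1 (hGd x)).comp hu0
    simpa [Function.comp_def, smul_eq_mul, div_eq_inv_mul] using this
  set D : ℕ → ℝ → ℝ := fun n t => (f (t + u n) - f t) / u n with hD
  have hDint : ∀ n, ∫ t in a..b, D n t = ((G (b + u n) - G b) - (G (a + u n) - G a)) / u n := by
    intro n
    have h1 : ∫ t in a..b, f (t + u n) = G (b + u n) - G (a + u n) := by
      rw [integral_comp_add_right, hGint]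
    have h2 : IntervalIntegrable (fun t => f (t + u n)) volume a b :=
      (hcont.comp (continuous_id.add continuous_const)).intervalIntegrable a b
    simp only [hD, div_eq_inv_mul, ← smul_eq_mul, intervalIntegral.integral_smul]
    rw [intervalIntegral.integral_sub h2 (hint a b), h1, hGint]
    simp only [smul_eq_mul]; ring
  have hB : Tendsto (fun n => ∫ t in a..b, D n t) atTop (𝓝 (f b - f a)) := by
    rw [funext hDint]
    have := ((hslope b).sub (hslope a))
    apply this.congr
    intro n; rw [div_sub_div_same]
  have hC : Tendsto (fun n => ∫ t in a..b, D n t) atTop (𝓝 (∫ t in a..b, deriv f t)) := by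
    apply intervalIntegral.tendsto_integral_filter_of_dominated_convergence (fun _ => (C : ℝ))
    · exact Eventually.of_forall fun n =>
        ((hcont.comp (continuous_id.add continuous_const)).sub hcont).div_const _
          |>.aestronglyMeasurable
    · refine Eventually.of_forall fun n => Eventually.of_forall fun x _ => ?_
      have := hf.dist_le_mul (x + u n) x
      rw [Real.dist_eq, Real.dist_eq] at this
      simp only [hD, Real.norm_eq_abs, abs_div, abs_of_pos (hupos n)]
      rw [div_le_iff₀ (hupos n)]
      simpa [abs_of_pos (hupos n)] using this
    · exact intervalIntegrable_const
    · have hae : ∀ᵐ x : ℝ, DifferentiableAt ℝ f x := hf.ae_differentiableAt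
      filter_upwards [hae] with x hx _
      have := (hasDerivAt_iff_tendsto_slope_zero.1 hx.hasDerivAt).comp hu0
      apply this.congr
      intro n
      simp [hD, Function.comp_def, smul_eq_mul, div_eq_inv_mul]
  exact tendsto_nhds_unique hC hB



/-- The junction flux `F_λ` satisfies `F_λ ≤ A` a.e. and `∫₀¹ F_λ = λ`. -/
theorem flux_le_and_integral (A : ℝ → ℝ) (lam : ℝ)
    (hmeas : Measurable A) (hbd : ∃ M, ∀ t, |A t| ≤ M)
    (hnn : ∀ t, 0 ≤ A t) (hper : ∀ t, A (t + 1) = A t)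
    (hlam0 : 0 ≤ lam) (hlam1 : lam ≤ ∫ s in (0:ℝ)..1, A s)
    (F : ℝ → ℝ)
    (hF1 : ∀ t, (∀ t₁ < t, lam * (t - t₁) ≤ ∫ s in t₁..t, A s) → F t = lam)
    (hF2 : ∀ t, ¬ (∀ t₁ < t, lam * (t - t₁) ≤ ∫ s in t₁..t, A s) → F t = A t) :
    (∀ᵐ t : ℝ, F t ≤ A t) ∧ (∫ t in (0:ℝ)..1, F t) = lam := by
  obtain ⟨M, hM⟩ := hbd
  have hM0 : 0 ≤ M := le_trans (abs_nonneg _) (hM 0)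
  set L : ℝ := |lam| + M with hLdef
  have hL0 : 0 ≤ L := by positivity
  have hbound : ∀ s, |lam - A s| ≤ L :=
    fun s => le_trans (abs_sub _ _) (add_le_add le_rfl (hM s))
  -- integrability
  have hAint : ∀ x y : ℝ, IntervalIntegrable A volume x y := by
    intro x y
    rw [intervalIntegrable_iff]
    exact Measure.integrableOn_of_bounded (M := M) measure_Ioc_lt_top.ne
      hmeas.aestronglyMeasurable (Eventually.of_forall fun s => by simpa using hM s)
  have hLAint : ∀ x y : ℝ, IntervalIntegrable (fun s => lam - A s) volume x y :=
    fun x y => intervalIntegrable_const.sub (hAint x y)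
  set g : ℝ → ℝ := fun t => ∫ s in (0:ℝ)..t, (lam - A s) with hgdef
  have hg_sub : ∀ x y : ℝ, ∫ s in x..y, (lam - A s) = g y - g x := by
    intro x y
    have := integral_add_adjacent_intervals (hLAint 0 x) (hLAint x y)
    simp only [hgdef]; linarith
  have hg_val : ∀ x y : ℝ, g y - g x = lam * (y - x) - ∫ s in x..y, A s := by
    intro x y
    rw [← hg_sub x y, intervalIntegral.integral_sub intervalIntegrable_const (hAint x y),
      intervalIntegral.integral_const, smul_eq_mul]
    ring
  have hg_lipR : ∀ x y : ℝ, |g y - g x| ≤ L * |y - x| := by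
    intro x y
    rw [← hg_sub]
    have := intervalIntegral.norm_integral_le_of_norm_le_const
      (C := L) (f := fun s => lam - A s) (a := x) (b := y)
      (fun s _ => by simpa using hbound s)
    simpa [Real.norm_eq_abs] using this
  set I : ℝ := ∫ s in (0:ℝ)..1, A s with hIdef
  have hIlam : lam ≤ I := hlam1
  have hshiftA : ∀ t : ℝ, ∫ s in t..(t+1), A s = I := by
    intro t
    have hperA : Function.Periodic A 1 := hper
    have := hperA.intervalIntegral_add_eq t 0
    simpa using this
  have hg1 : ∀ t : ℝ, g (t + 1) = g t + (lam - I) := by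
    intro t
    have h1 := hg_val t (t + 1)
    rw [hshiftA t] at h1
    have : t + 1 - t = 1 := by ring
    rw [this] at h1
    linarith
  have hgn : ∀ (s : ℝ) (n : ℕ), g (s + n) = g s + n * (lam - I) := by
    intro s n
    induction n with
    | zero => simp
    | succ k ih =>
      have : s + (k + 1 : ℕ) = (s + k) + 1 := by push_cast; ring
      rw [this, hg1, ih]; push_cast; ring
  have hglow : ∀ t s : ℝ, s ≤ t → g t - L ≤ g s := by
    intro t s hst
    set n : ℕ := ⌊t - s⌋₊ with hn
    have h1 : (n : ℝ) ≤ t - s := Nat.floor_le (by linarith)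
    have h2 : t - s - 1 < n := by
      have := Nat.sub_one_lt_floor (t - s)
      simpa [hn] using this
    have h3 := hgn s n
    have h4 := hg_lipR (s + n) t
    have h5 : |t - (s + n)| ≤ 1 := by rw [abs_of_nonneg (by linarith)]; linarith
    have h6 : L * |t - (s + n)| ≤ L := by
      calc L * |t - (s + n)| ≤ L * 1 := mul_le_mul_of_nonneg_left h5 hL0
      _ = L := mul_one L
    have h7 : (n : ℝ) * (lam - I) ≤ 0 :=
      mul_nonpos_of_nonneg_of_nonpos (Nat.cast_nonneg n) (by linarith)
    have h8 := abs_le.1 h4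
    linarith [h8.1, h8.2]
  -- the running minimum m
  set m : ℝ → ℝ := fun t => sInf (g '' Iic t) with hmdef
  have hne : ∀ t : ℝ, (g '' Iic t).Nonempty := fun t => ⟨g t, mem_image_of_mem g self_mem_Iic⟩
  have hbb : ∀ t : ℝ, BddBelow (g '' Iic t) := by
    intro t
    refine ⟨g t - L, ?_⟩
    rintro x ⟨s, hs, rfl⟩
    exact hglow t s hs
  have hm_le : ∀ t s : ℝ, s ≤ t → m t ≤ g s := fun t s h => csInf_le (hbb t) (mem_image_of_mem _ h)
  have hm_ge : ∀ (t : ℝ) (c : ℝ), (∀ s ≤ t, c ≤ g s) → c ≤ m t := by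
    intro t c h
    refine le_csInf (hne t) ?_
    rintro x ⟨s, hs, rfl⟩
    exact h s hs
  have hm_leg : ∀ t : ℝ, m t ≤ g t := fun t => hm_le t t le_rfl
  have hm_anti : ∀ x y : ℝ, x ≤ y → m y ≤ m x :=
    fun x y h => hm_ge x (m y) (fun s hs => hm_le y s (hs.trans h))
  have hm_aux : ∀ x y : ℝ, x ≤ y → m x - L * (y - x) ≤ m y := by
    intro x y h
    apply hm_ge
    intro s hs
    by_cases hsx : s ≤ x
    · have := hm_le x s hsx
      nlinarith [mul_nonneg hL0 (by linarith : (0:ℝ) ≤ y - x)]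
    · push_neg at hsx
      have h1 := abs_le.1 (hg_lipR x s)
      have h2 : |s - x| ≤ y - x := by rw [abs_of_nonneg (by linarith)]; linarith
      have h3 : L * |s - x| ≤ L * (y - x) := mul_le_mul_of_nonneg_left h2 hL0
      have h4 := hm_leg x
      linarith [h1.1]
  have hm_lipR : ∀ x y : ℝ, |m y - m x| ≤ L * |y - x| := by
    intro x y
    rcases le_total x y with h | h
    · have h1 := hm_anti x y h
      have h2 := hm_aux x y h
      rw [abs_of_nonpos (show m y - m x ≤ 0 by linarith),
        abs_of_nonneg (show (0:ℝ) ≤ y - x by linarith)]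
      linarith
    · have h1 := hm_anti y x h
      have h2 := hm_aux y x h
      rw [abs_of_nonneg (show (0:ℝ) ≤ m y - m x by linarith),
        abs_of_nonpos (show y - x ≤ 0 by linarith)]
      linarith
  set L' : NNReal := ⟨L, hL0⟩ with hL'
  have hg_lip : LipschitzWith L' g := by
    apply LipschitzWith.of_dist_le_mul
    intro x y
    rw [Real.dist_eq, Real.dist_eq]
    exact hg_lipR y x
  have hm_lip : LipschitzWith L' m := by
    apply LipschitzWith.of_dist_le_mul
    intro x y
    rw [Real.dist_eq, Real.dist_eq]
    exact hm_lipR y x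
  have hm1 : ∀ t : ℝ, m (t + 1) = m t + (lam - I) := by
    intro t
    apply le_antisymm
    · have h : ∀ s ≤ t, m (t + 1) - (lam - I) ≤ g s := by
        intro s hs
        have h1 := hm_le (t + 1) (s + 1) (by linarith)
        have h2 := hg1 s
        linarith
      have := hm_ge t _ h
      linarith
    · apply hm_ge
      intro s hs
      have h1 : g s = g (s - 1) + (lam - I) := by
        have := hg1 (s - 1)
        rwa [sub_add_cancel] at this
      have h2 := hm_le t (s - 1) (by linarith)
      linarith
  -- characterization of the constraint set
  have hS_iff : ∀ t : ℝ, (∀ t₁ < t, lam * (t - t₁) ≤ ∫ s in t₁..t, A s) ↔ g t ≤ m t := by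
    intro t
    constructor
    · intro h
      apply hm_ge
      intro s hs
      rcases eq_or_lt_of_le hs with rfl | hlt
      · exact le_rfl
      · have h2 := h s hlt
        have h4 := hg_val s t
        linarith
    · intro h t₁ ht₁
      have h2 := hm_le t t₁ ht₁.le
      have h4 := hg_val t₁ t
      linarith
  have hFeq : ∀ t : ℝ, F t = A t + Set.indicator {x : ℝ | g x ≤ m x} (fun x => lam - A x) t := by
    intro t
    by_cases h : g t ≤ m t
    · rw [hF1 t ((hS_iff t).2 h), Set.indicator_of_mem (show t ∈ {x : ℝ | g x ≤ m x} from h)]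
      ring
    · rw [hF2 t fun hc => h ((hS_iff t).1 hc), Set.indicator_of_notMem (show t ∉ {x : ℝ | g x ≤ m x} from h)]
      ring
  -- Lebesgue differentiation
  have hA_loc : LocallyIntegrable A volume := by
    intro x
    refine ⟨Icc (x - 1) (x + 1), Icc_mem_nhds (by linarith) (by linarith), ?_⟩
    exact Measure.integrableOn_of_bounded (M := M) measure_Icc_lt_top.ne
      hmeas.aestronglyMeasurable (Eventually.of_forall fun s => by simpa using hM s)
  have havg : ∀ᵐ t : ℝ,
      Tendsto (fun y => ⨍ s in Icc y t, A s) (𝓝[<] t) (𝓝 (A t)) ∧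
      Tendsto (fun y => ⨍ s in Icc t y, A s) (𝓝[>] t) (𝓝 (A t)) := by
    filter_upwards [(IsUnifLocDoublingMeasure.vitaliFamily (volume : Measure ℝ) 1).ae_tendsto_average
      hA_loc] with x hx
    exact ⟨hx.comp (Real.tendsto_Icc_vitaliFamily_left x),
      hx.comp (Real.tendsto_Icc_vitaliFamily_right x)⟩
  have havg_eq : ∀ x y : ℝ, x < y → ⨍ s in Icc x y, A s = (∫ s in x..y, A s) / (y - x) := by
    intro x y h
    rw [setAverage_eq, MeasureTheory.integral_Icc_eq_integral_Ioc,
      ← intervalIntegral.integral_of_le h.le, Real.volume_real_Icc_of_le h.le, smul_eq_mul]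
    rw [div_eq_inv_mul]
  have h_lamle : ∀ᵐ t : ℝ, g t ≤ m t → lam ≤ A t := by
    filter_upwards [havg] with t ht hmem
    obtain ⟨hl, -⟩ := ht
    have hc := (hS_iff t).2 hmem
    apply ge_of_tendsto hl
    filter_upwards [self_mem_nhdsWithin] with y (hy : y < t)
    rw [havg_eq y t hy, le_div_iff₀ (by linarith : (0:ℝ) < t - y)]
    exact hc y hy
  have h_gderiv : ∀ᵐ t : ℝ, HasDerivAt g (lam - A t) t := by
    filter_upwards [havg] with t ht
    obtain ⟨hl, hr⟩ := ht
    rw [hasDerivAt_iff_tendsto_slope, ← nhdsLT_sup_nhdsGT, tendsto_sup]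
    constructor
    · apply Tendsto.congr' _ (tendsto_const_nhds.sub hl)
      filter_upwards [self_mem_nhdsWithin] with y (hy : y < t)
      have h4 := hg_val y t
      rw [slope_def_field, havg_eq y t hy]
      have hne : t - y ≠ 0 := by intro h; exact absurd h (by intro hh; linarith)
      have hne2 : y - t ≠ 0 := by intro h; apply hne; linarith
      field_simp
      nlinarith [hg_val y t]
    · apply Tendsto.congr' _ (tendsto_const_nhds.sub hr)
      filter_upwards [self_mem_nhdsWithin] with y (hy : t < y)
      have h4 := hg_val t y
      rw [slope_def_field, havg_eq t y hy]
      have hne : y - t ≠ 0 := by intro h; exact absurd h (by intro hh; linarith)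
      field_simp
      nlinarith [hg_val t y]
  have h_mdiff : ∀ᵐ t : ℝ, DifferentiableAt ℝ m t := hm_lip.ae_differentiableAt
  have h_derivS : ∀ᵐ t : ℝ, g t ≤ m t → deriv m t = lam - A t := by
    filter_upwards [h_gderiv, h_mdiff] with t hg' hmd hmem
    have hψd : DifferentiableAt ℝ (fun x => g x - m x) t := hg'.differentiableAt.sub hmd
    have hmin : IsLocalMin (fun x => g x - m x) t := by
      apply Filter.Eventually.of_forall
      intro y
      have := hm_leg y
      have := hm_leg t
      simp only
      linarith
    have h0 : deriv (fun x => g x - m x) t = 0 := hmin.deriv_eq_zero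
    rw [deriv_fun_sub hg'.differentiableAt hmd, hg'.deriv] at h0
    linarith
  have h_derivSc : ∀ t : ℝ, ¬ g t ≤ m t → deriv m t = 0 := by
    intro t ht
    push_neg at ht
    set ε : ℝ := g t - m t with hε
    have hεpos : 0 < ε := by simp only [hε]; linarith
    set δ : ℝ := ε / (2 * (L + 1)) with hδ
    have hδpos : 0 < δ := by positivity
    have hδε : δ * (2 * (L + 1)) = ε := div_mul_cancel₀ _ (by positivity)
    have hLδ : L * δ ≤ ε / 2 := by nlinarith [hδpos.le]
    have hconst : ∀ u ∈ Icc (t - δ) (t + δ), m u = m (t - δ) := by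
      intro u hu
      apply le_antisymm (hm_anti _ _ hu.1)
      apply hm_ge
      intro s hs
      by_cases hsx : s ≤ t - δ
      · exact hm_le _ s hsx
      · push_neg at hsx
        have hu2 : u ≤ t + δ := hu.2
        have h1 := abs_le.1 (hg_lipR t s)
        have h2 : |s - t| ≤ δ := abs_le.2 ⟨by linarith, by linarith⟩
        have h3 : L * |s - t| ≤ L * δ := mul_le_mul_of_nonneg_left h2 hL0
        have h4 := abs_le.1 (hm_lipR t (t - δ))
        have h5 : |t - δ - t| = δ := by rw [show t - δ - t = -δ by ring, abs_neg,
          abs_of_pos hδpos]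
        rw [h5] at h4
        linarith [h1.1, h4.2]
    have hev : m =ᶠ[𝓝 t] fun _ => m (t - δ) := by
      filter_upwards [Icc_mem_nhds (show t - δ < t by linarith) (show t < t + δ by linarith)]
        with u hu
      exact hconst u hu
    rw [hev.deriv_eq, deriv_const]
  -- assembling the integral
  have hS_meas : MeasurableSet {x : ℝ | g x ≤ m x} :=
    (isClosed_le hg_lip.continuous hm_lip.continuous).measurableSet
  have hind_int : IntervalIntegrable
      (fun x => Set.indicator {x : ℝ | g x ≤ m x} (fun x => lam - A x) x) volume 0 1 := by
    rw [intervalIntegrable_iff]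
    apply Measure.integrableOn_of_bounded (M := L) measure_Ioc_lt_top.ne
      ((measurable_const.sub hmeas).indicator hS_meas).aestronglyMeasurable
    apply Eventually.of_forall
    intro s
    by_cases h : s ∈ {x : ℝ | g x ≤ m x}
    · rw [Set.indicator_of_mem h]; simpa using hbound s
    · rw [Set.indicator_of_notMem h]; simpa using hL0
  have h_int_ind : ∫ x in (0:ℝ)..1,
      Set.indicator {x : ℝ | g x ≤ m x} (fun x => lam - A x) x = m 1 - m 0 := by
    rw [intervalIntegral.integral_congr_ae ?_, lipschitz_integral_deriv hm_lip 0 1]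
    filter_upwards [h_derivS] with x hx _
    by_cases h : g x ≤ m x
    · rw [Set.indicator_of_mem (show x ∈ {x : ℝ | g x ≤ m x} from h), hx h]
    · rw [Set.indicator_of_notMem (show x ∉ {x : ℝ | g x ≤ m x} from h), h_derivSc x h]
  have hm10 : m 1 - m 0 = lam - I := by
    have := hm1 0
    rw [zero_add] at this
    linarith
  constructor
  · filter_upwards [h_lamle] with t ht
    by_cases hc : ∀ t₁ < t, lam * (t - t₁) ≤ ∫ s in t₁..t, A s
    · rw [hF1 t hc]
      exact ht ((hS_iff t).1 hc)
    · rw [hF2 t hc]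
  · rw [intervalIntegral.integral_congr (g := fun t => A t +
      Set.indicator {x : ℝ | g x ≤ m x} (fun x => lam - A x) t) (fun t _ => hFeq t),
      intervalIntegral.integral_add (hAint 0 1) hind_int, h_int_ind, hm10]
    simp only [← hIdef]
    ring
end

section
/- With A bounded measurable nonnegative 1-periodic and 0 ≤ λ ≤ λ̄ ≤ ∫₀¹ A, one has F_λ(t) ≤ F_{λ̄}(t) for almost every t, where F_μ is defined as the junction flux: F_μ(t) = μ if all averages (1/(t−t₁))∫_{t₁}^t A ≥ μ for t₁ < t, and F_μ(t) = A(t) otherwise. Consequently, for any measurable 1-periodic set I ⊆ ℝ, the map λ ↦ ∫₀¹ F_λ(t) 𝟙_I(t) dt is nondecreasing on [0, ∫₀¹ A]. -/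
open MeasureTheory Set Filter Topology

/-- Bounded measurable functions are interval integrable. -/
lemma aux_intInt {A : ℝ → ℝ} (hmeas : Measurable A) {M : ℝ} (hM : ∀ t, |A t| ≤ M) :
    ∀ a b : ℝ, IntervalIntegrable A volume a b := by
  intro a b
  rw [intervalIntegrable_iff]
  exact Integrable.mono' (g := fun _ => M)
    (integrableOn_const measure_Ioc_lt_top.ne)
    hmeas.aestronglyMeasurable.restrict (Eventually.of_forall fun t => hM t)

lemma aux_locInt {A : ℝ → ℝ} (hmeas : Measurable A) {M : ℝ} (hM : ∀ t, |A t| ≤ M) :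
    LocallyIntegrable A volume := by
  intro x
  refine ⟨Icc (x - 1) (x + 1), Icc_mem_nhds (by linarith) (by linarith), ?_⟩
  refine Integrable.mono' (integrable_const M) hmeas.aestronglyMeasurable.restrict ?_
  exact Eventually.of_forall fun t => hM t

/-- Lebesgue differentiation: at a.e. point, any `μ` dominated by all left averages
of `A` at `x` satisfies `μ ≤ A x`. -/
lemma aux_key {A : ℝ → ℝ} (hmeas : Measurable A) {M : ℝ} (hM : ∀ t, |A t| ≤ M) :
    ∀ᵐ x : ℝ, ∀ μ : ℝ, (∀ t₁ < x, μ * (x - t₁) ≤ ∫ s in t₁..x, A s) → μ ≤ A x := by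
  have hloc : LocallyIntegrable A volume := aux_locInt hmeas hM
  filter_upwards [(IsUnifLocDoublingMeasure.vitaliFamily (volume : Measure ℝ) 1).ae_tendsto_average hloc]
    with x hx μ hμ
  have htend : Tendsto (fun y => ⨍ s in Icc y x, A s) (𝓝[<] x) (𝓝 (A x)) :=
    hx.comp (Real.tendsto_Icc_vitaliFamily_left x)
  refine ge_of_tendsto htend ?_
  filter_upwards [self_mem_nhdsWithin] with y (hy : y < x)
  have hpos : (0:ℝ) < x - y := by linarith
  have havg : ⨍ s in Icc y x, A s = (x - y)⁻¹ * ∫ s in y..x, A s := by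
    rw [setAverage_eq, MeasureTheory.integral_Icc_eq_integral_Ioc,
      ← intervalIntegral.integral_of_le hy.le, Real.volume_real_Icc_of_le hy.le,
      smul_eq_mul]
  rw [havg, le_inv_mul_iff₀ hpos, mul_comm]
  exact hμ y hy

/-- a.e. monotonicity of the flux. -/
lemma aux_ae_mono {A : ℝ → ℝ} (hmeas : Measurable A) {M : ℝ} (hM : ∀ t, |A t| ≤ M)
    {F : ℝ → ℝ → ℝ}
    (hF1 : ∀ μ t, (∀ t₁ < t, μ * (t - t₁) ≤ ∫ s in t₁..t, A s) → F μ t = μ)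
    (hF2 : ∀ μ t, ¬ (∀ t₁ < t, μ * (t - t₁) ≤ ∫ s in t₁..t, A s) → F μ t = A t)
    {lam lam' : ℝ} (h : lam ≤ lam') :
    ∀ᵐ t : ℝ, F lam t ≤ F lam' t := by
  filter_upwards [aux_key hmeas hM] with x hx
  by_cases h' : ∀ t₁ < x, lam' * (x - t₁) ≤ ∫ s in t₁..x, A s
  · have hl : ∀ t₁ < x, lam * (x - t₁) ≤ ∫ s in t₁..x, A s := by
      intro t₁ ht₁
      refine le_trans ?_ (h' t₁ ht₁)
      have : (0:ℝ) ≤ x - t₁ := by linarith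
      nlinarith
    rw [hF1 lam x hl, hF1 lam' x h']
    exact h
  · rw [hF2 lam' x h']
    by_cases hl : ∀ t₁ < x, lam * (x - t₁) ≤ ∫ s in t₁..x, A s
    · rw [hF1 lam x hl]; exact hx lam hl
    · rw [hF2 lam x hl]

/-- Measurability of the "all averages above `μ`" set. -/
lemma aux_S_meas {A : ℝ → ℝ} (hmeas : Measurable A) {M : ℝ} (hM : ∀ t, |A t| ≤ M) (μ : ℝ) :
    MeasurableSet {t : ℝ | ∀ t₁ < t, μ * (t - t₁) ≤ ∫ s in t₁..t, A s} := by
  have hii := aux_intInt hmeas hM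
  have hcont : ∀ a : ℝ, Continuous fun t : ℝ => ∫ s in a..t, A s :=
    fun a => intervalIntegral.continuous_primitive (fun c d => hii c d) a
  have hS : {t : ℝ | ∀ t₁ < t, μ * (t - t₁) ≤ ∫ s in t₁..t, A s} =
      ⋂ q : ℚ, {t : ℝ | (q:ℝ) < t → μ * (t - q) ≤ ∫ s in (q:ℝ)..t, A s} := by
    ext t
    simp only [mem_iInter, mem_setOf_eq]
    constructor
    · intro h q hq; exact h q hq
    · intro h t₁ ht₁
      -- approximate t₁ from the right by rationals
      set g : ℝ → ℝ := fun r => (∫ s in r..t, A s) - μ * (t - r) with hg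
      have hgc : Continuous g := by
        have hrep : ∀ r : ℝ, (∫ s in r..t, A s)
            = (∫ s in (0:ℝ)..t, A s) - ∫ s in (0:ℝ)..r, A s := by
          intro r
          rw [eq_sub_iff_add_eq, add_comm,
            intervalIntegral.integral_add_adjacent_intervals (hii 0 r) (hii r t)]
        have h1 : Continuous fun r : ℝ => ∫ s in r..t, A s :=
          (continuous_const.sub (hcont 0)).congr fun r => (hrep r).symm
        exact h1.sub (by fun_prop)
      -- choose rationals q_n ∈ (t₁, min t (t₁ + 1/(n+1)))
      have hsel : ∀ n : ℕ, ∃ q : ℚ, t₁ < (q:ℝ) ∧ (q:ℝ) < min t (t₁ + 1/(n+1)) := by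
        intro n
        have hpos : (0:ℝ) < 1/(n+1) := by positivity
        exact exists_rat_btwn (lt_min ht₁ (by linarith))
      choose qn hqn1 hqn2 using hsel
      have hq_lt_t : ∀ n, ((qn n : ℝ)) < t := fun n => (hqn2 n).trans_le (min_le_left _ _)
      have hqtend : Tendsto (fun n => ((qn n : ℝ))) atTop (𝓝 t₁) := by
        have hub : ∀ n : ℕ, ((qn n : ℝ)) ≤ t₁ + 1/(n+1) :=
          fun n => ((hqn2 n).trans_le (min_le_right _ _)).le
        have h2 : Tendsto (fun n : ℕ => t₁ + 1/((n:ℝ)+1)) atTop (𝓝 (t₁ + 0)) :=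
          tendsto_const_nhds.add tendsto_one_div_add_atTop_nhds_zero_nat
        rw [add_zero] at h2
        exact tendsto_of_tendsto_of_tendsto_of_le_of_le tendsto_const_nhds h2
          (fun n => (hqn1 n).le) hub
      have hgq : ∀ n, 0 ≤ g ((qn n : ℝ)) := by
        intro n
        have := h (qn n) (hq_lt_t n)
        simp only [hg, sub_nonneg]
        exact this
      have : 0 ≤ g t₁ := ge_of_tendsto ((hgc.tendsto t₁).comp hqtend)
        (Eventually.of_forall hgq)
      simpa [hg, sub_nonneg] using this
  rw [hS]
  refine MeasurableSet.iInter fun q => ?_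
  have : {t : ℝ | (q:ℝ) < t → μ * (t - q) ≤ ∫ s in (q:ℝ)..t, A s} =
      {t : ℝ | (q:ℝ) < t}ᶜ ∪ {t : ℝ | μ * (t - q) ≤ ∫ s in (q:ℝ)..t, A s} := by
    ext t; simp [imp_iff_not_or]
  rw [this]
  refine MeasurableSet.union (measurableSet_lt measurable_const measurable_id).compl ?_
  exact measurableSet_le (by fun_prop) (hcont q).measurable

lemma aux_F_meas {A : ℝ → ℝ} (hmeas : Measurable A) {M : ℝ} (hM : ∀ t, |A t| ≤ M)
    {F : ℝ → ℝ → ℝ}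
    (hF1 : ∀ μ t, (∀ t₁ < t, μ * (t - t₁) ≤ ∫ s in t₁..t, A s) → F μ t = μ)
    (hF2 : ∀ μ t, ¬ (∀ t₁ < t, μ * (t - t₁) ≤ ∫ s in t₁..t, A s) → F μ t = A t)
    (μ : ℝ) : Measurable (F μ) := by
  classical
  have heq : F μ = Set.piecewise {t : ℝ | ∀ t₁ < t, μ * (t - t₁) ≤ ∫ s in t₁..t, A s}
      (fun _ => μ) A := by
    funext t
    by_cases h : ∀ t₁ < t, μ * (t - t₁) ≤ ∫ s in t₁..t, A s
    · rw [hF1 μ t h, Set.piecewise_eq_of_mem _ _ _ (show t ∈ {t : ℝ | ∀ t₁ < t, μ * (t - t₁) ≤ ∫ s in t₁..t, A s} from h)]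
    · rw [hF2 μ t h, Set.piecewise_eq_of_notMem _ _ _ (show t ∉ {t : ℝ | ∀ t₁ < t, μ * (t - t₁) ≤ ∫ s in t₁..t, A s} from h)]
  rw [heq]
  exact Measurable.piecewise (aux_S_meas hmeas hM μ) measurable_const hmeas

lemma aux_F_bound {A : ℝ → ℝ} {M : ℝ} (hM : ∀ t, |A t| ≤ M)
    {F : ℝ → ℝ → ℝ}
    (hF1 : ∀ μ t, (∀ t₁ < t, μ * (t - t₁) ≤ ∫ s in t₁..t, A s) → F μ t = μ)
    (hF2 : ∀ μ t, ¬ (∀ t₁ < t, μ * (t - t₁) ≤ ∫ s in t₁..t, A s) → F μ t = A t)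
    (μ : ℝ) (t : ℝ) : |F μ t| ≤ max |μ| M := by
  by_cases h : ∀ t₁ < t, μ * (t - t₁) ≤ ∫ s in t₁..t, A s
  · rw [hF1 μ t h]; exact le_max_left _ _
  · rw [hF2 μ t h]; exact (hM t).trans (le_max_right _ _)

/-- Monotonicity of the junction flux `F_μ` in the parameter `μ`, and the resulting
monotonicity of `μ ↦ ∫₀¹ F_μ 𝟙_I`. -/
theorem flux_monotone (A : ℝ → ℝ)
    (hmeas : Measurable A) (hbd : ∃ M, ∀ t, |A t| ≤ M)
    (hnn : ∀ t, 0 ≤ A t) (hper : ∀ t, A (t + 1) = A t)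
    (F : ℝ → ℝ → ℝ)
    (hF1 : ∀ μ t, (∀ t₁ < t, μ * (t - t₁) ≤ ∫ s in t₁..t, A s) → F μ t = μ)
    (hF2 : ∀ μ t, ¬ (∀ t₁ < t, μ * (t - t₁) ≤ ∫ s in t₁..t, A s) → F μ t = A t) :
    (∀ lam lam' : ℝ, 0 ≤ lam → lam ≤ lam' → lam' ≤ (∫ s in (0:ℝ)..1, A s) →
      ∀ᵐ t : ℝ, F lam t ≤ F lam' t) ∧
    (∀ I : Set ℝ, MeasurableSet I → (∀ t, t + 1 ∈ I ↔ t ∈ I) →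
      MonotoneOn (fun μ => ∫ t in (0:ℝ)..1, Set.indicator I (F μ) t)
        (Set.Icc 0 (∫ s in (0:ℝ)..1, A s))) := by
  obtain ⟨M, hM⟩ := hbd
  constructor
  · intro lam lam' _ h _
    exact aux_ae_mono hmeas hM hF1 hF2 h
  · intro I hI _
    intro μ hμ μ' hμ' hle
    have hint : ∀ ν : ℝ, IntervalIntegrable (Set.indicator I (F ν)) volume 0 1 := by
      intro ν
      rw [intervalIntegrable_iff]
      refine Integrable.mono' (g := fun _ => max |ν| M)
        (integrableOn_const measure_Ioc_lt_top.ne)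
        (((aux_F_meas hmeas hM hF1 hF2 ν).indicator hI).aestronglyMeasurable.restrict) ?_
      refine Eventually.of_forall fun t => ?_
      by_cases ht : t ∈ I
      · rw [Set.indicator_of_mem ht]; exact aux_F_bound hM hF1 hF2 ν t
      · rw [Set.indicator_of_notMem ht]
        simp only [norm_zero]
        exact le_trans (abs_nonneg ν) (le_max_left _ _)
    have hae : ∀ᵐ t : ℝ, Set.indicator I (F μ) t ≤ Set.indicator I (F μ') t := by
      filter_upwards [aux_ae_mono hmeas hM hF1 hF2 hle] with t ht
      by_cases htI : t ∈ I
      · rwa [Set.indicator_of_mem htI, Set.indicator_of_mem htI]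
      · rw [Set.indicator_of_notMem htI, Set.indicator_of_notMem htI]
    exact intervalIntegral.integral_mono_ae zero_le_one (hint μ) (hint μ') hae
end

section
/- Let I¹, I² form a measurable 1-periodic partition of ℝ (each locally a finite union of intervals), let A be piecewise constant, 1-periodic, nonnegative, and define λ̂ᵏ(λ) := ∫₀¹ F_λ(t) 𝟙_{Iᵏ}(t) dt for λ ∈ [0, λ̄⁰] with λ̄⁰ := ∫₀¹ A and λ̄ᵏ := ∫₀¹ A·𝟙_{Iᵏ}. Then the maps λ̂¹ and λ̂² are continuous and nondecreasing on [0, λ̄⁰], satisfy λ̂¹(λ) + λ̂²(λ) = λ for all λ ∈ [0, λ̄⁰], and 0 ≤ λ̂ᵏ(λ) ≤ λ̄ᵏ = λ̂ᵏ(λ̄⁰) for k = 1, 2. -/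
open MeasureTheory Set

namespace HLaux

lemma ae_ne (m : ℝ) : ∀ᵐ (t : ℝ), t ≠ m := by
  have h : {t : ℝ | ¬ t ≠ m} = {m} := by ext; simp
  rw [ae_iff, h]; exact measure_singleton m

lemma intInt_of_ae_const {g : ℝ → ℝ} {a b C : ℝ}
    (h : ∀ᵐ t ∂(volume : Measure ℝ), t ∈ Set.uIoc a b → g t = C) :
    IntervalIntegrable g volume a b := by
  have h0 : IntervalIntegrable (fun _ => C) volume a b := intervalIntegrable_const
  rw [intervalIntegrable_iff] at h0 ⊢
  exact h0.congr ((ae_restrict_iff' measurableSet_uIoc).2 (h.mono fun t ht h' => (ht h').symm))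

lemma integral_of_ae_const {g : ℝ → ℝ} {a b C : ℝ}
    (h : ∀ᵐ t ∂(volume : Measure ℝ), t ∈ Set.uIoc a b → g t = C) :
    ∫ t in a..b, g t = (b - a) * C := by
  rw [intervalIntegral.integral_congr_ae h, intervalIntegral.integral_const, smul_eq_mul]

/-- Extraction of a common partition. -/
lemma exists_partition (I1 : Set ℝ) (A : ℝ → ℝ)
    (hloc1 : ∃ S : Finset (ℝ × ℝ), I1 ∩ Set.Ico 0 1 = ⋃ p ∈ S, Set.Ico p.1 p.2)
    (hApc : ∃ S : Finset (ℝ × ℝ), (Set.Ico (0:ℝ) 1 ⊆ ⋃ p ∈ S, Set.Ico p.1 p.2) ∧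
      ∀ p ∈ S, ∃ c, ∀ t ∈ Set.Ico p.1 p.2, A t = c) :
    ∃ n : ℕ, ∃ x : ℕ → ℝ, 0 < n ∧ x 0 = 0 ∧ x n = 1 ∧ (∀ i < n, x i < x (i+1)) ∧
      (∀ i < n, ∃ c, ∀ t ∈ Set.Ico (x i) (x (i+1)), A t = c) ∧
      (∀ i < n, (∀ t ∈ Set.Ico (x i) (x (i+1)), t ∈ I1) ∨
        (∀ t ∈ Set.Ico (x i) (x (i+1)), t ∉ I1)) := by
  classical
  obtain ⟨S1, hS1⟩ := hloc1
  obtain ⟨SA, hSAcov, hSAc⟩ := hApc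
  set E : Finset ℝ := (SA ∪ S1).image Prod.fst ∪ (SA ∪ S1).image Prod.snd with hE
  set D : Finset ℝ := insert 0 (insert 1 (E.filter (fun y => 0 ≤ y ∧ y ≤ 1))) with hD
  have hDmem : ∀ y ∈ D, 0 ≤ y ∧ y ≤ 1 := by
    intro y hy
    simp only [hD, Finset.mem_insert, Finset.mem_filter] at hy
    rcases hy with rfl | rfl | ⟨_, h1, h2⟩
    · norm_num
    · norm_num
    · exact ⟨h1, h2⟩
  have h0D : (0:ℝ) ∈ D := by simp [hD]
  have h1D : (1:ℝ) ∈ D := by simp [hD]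
  set L : List ℝ := D.sort (· ≤ ·) with hL
  have hsort : L.Pairwise (· < ·) := (Finset.sortedLT_sort D).pairwise
  have hmemL : ∀ y, y ∈ D ↔ y ∈ L := fun y => (Finset.mem_sort _).symm
  have hlen2 : 2 ≤ L.length := by
    have : ({0, 1} : Finset ℝ) ⊆ D := by
      rw [Finset.insert_subset_iff, Finset.singleton_subset_iff]; exact ⟨h0D, h1D⟩
    have h2 : ({0, 1} : Finset ℝ).card = 2 := by
      rw [Finset.card_insert_of_notMem (by norm_num), Finset.card_singleton]
    calc 2 = ({0,1} : Finset ℝ).card := h2.symm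
      _ ≤ D.card := Finset.card_le_card this
      _ = L.length := (Finset.length_sort _).symm
  set n : ℕ := L.length - 1 with hn
  set x : ℕ → ℝ := fun i => L.getD i 0 with hx
  have hxg : ∀ i (h : i < L.length), x i = L.get ⟨i, h⟩ := by
    intro i h
    show L.getD i 0 = _
    rw [List.getD_eq_getElem L 0 h, List.get_eq_getElem]
  have hstrict : ∀ i j (hi : i < L.length) (hj : j < L.length), i < j → x i < x j := by
    intro i j hi hj hij
    rw [hxg i hi, hxg j hj]
    exact hsort.sortedLT.strictMono_get (show (⟨i, hi⟩ : Fin _) < ⟨j, hj⟩ from hij)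
  have hmono : ∀ i j (hi : i < L.length) (hj : j < L.length), i ≤ j → x i ≤ x j := by
    intro i j hi hj hij
    rcases eq_or_lt_of_le hij with rfl | h
    · rfl
    · exact (hstrict i j hi hj h).le
  have hidx : ∀ y ∈ D, ∃ i, ∃ h : i < L.length, x i = y := by
    intro y hy
    obtain ⟨i, h, hi⟩ := List.mem_iff_getElem.1 ((hmemL y).1 hy)
    exact ⟨i, h, by rw [hxg i h]; simpa [List.get_eq_getElem] using hi⟩
  have hnpos : 0 < n := by omega
  have hnlt : n < L.length := by omega
  have hxD : ∀ i (h : i < L.length), x i ∈ D := by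
    intro i h
    rw [hxg i h, List.get_eq_getElem]
    exact (hmemL _).mpr (List.getElem_mem h)
  have hx0 : x 0 = 0 := by
    obtain ⟨j, hj, hjx⟩ := hidx 0 h0D
    have h1 : 0 ≤ x 0 := (hDmem _ (hxD 0 (by omega))).1
    have h2 : x 0 ≤ x j := hmono 0 j (by omega) hj (Nat.zero_le _)
    rw [hjx] at h2; linarith
  have hxn : x n = 1 := by
    obtain ⟨j, hj, hjx⟩ := hidx 1 h1D
    have h1 : x n ≤ 1 := (hDmem _ (hxD n hnlt)).2
    have h2 : x j ≤ x n := hmono j n hj hnlt (by omega)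
    rw [hjx] at h2; linarith
  have hlt : ∀ i < n, x i < x (i+1) := fun i hi =>
    hstrict i (i+1) (by omega) (by omega) (Nat.lt_succ_self i)
  -- no element of D strictly between consecutive points
  have hgap : ∀ i < n, ∀ y ∈ D, ¬ (x i < y ∧ y < x (i+1)) := by
    rintro i hi y hy ⟨hy1, hy2⟩
    obtain ⟨j, hj, rfl⟩ := hidx y hy
    rcases le_or_gt j i with h | h
    · exact absurd (hmono j i hj (by omega) h) (not_le.2 hy1)
    · exact absurd (hmono (i+1) j (by omega) hj h) (not_le.2 hy2)
  have hx01 : ∀ i < L.length, 0 ≤ x i ∧ x i ≤ 1 := fun i h => hDmem _ (hxD i h)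
  -- pieces are inside [0,1)
  have hpieceIco : ∀ i < n, Set.Ico (x i) (x (i+1)) ⊆ Set.Ico (0:ℝ) 1 := by
    intro i hi t ht
    exact ⟨le_trans (hx01 i (by omega)).1 ht.1, lt_of_lt_of_le ht.2 (hx01 (i+1) (by omega)).2⟩
  -- endpoints of covering intervals dominate pieces
  have hcover : ∀ i < n, ∀ p : ℝ × ℝ, p ∈ SA ∪ S1 → x i ∈ Set.Ico p.1 p.2 →
      Set.Ico (x i) (x (i+1)) ⊆ Set.Ico p.1 p.2 := by
    intro i hi p hp hxi t ht
    have hp2 : x (i+1) ≤ p.2 := by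
      by_contra hcon
      push_neg at hcon
      have hp2D : p.2 ∈ D := by
        simp only [hD, Finset.mem_insert, Finset.mem_filter, hE, Finset.mem_union,
          Finset.mem_image]
        right; right
        refine ⟨Or.inr ⟨p, Finset.mem_union.1 hp, rfl⟩, le_trans (hx01 i (by omega)).1 (le_of_lt hxi.2),
          le_trans hcon.le (hx01 (i+1) (by omega)).2⟩
      exact hgap i hi p.2 hp2D ⟨hxi.2, hcon⟩
    exact ⟨le_trans hxi.1 ht.1, lt_of_lt_of_le ht.2 hp2⟩
  refine ⟨n, x, hnpos, hx0, hxn, hlt, ?_, ?_⟩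
  · intro i hi
    have hxiIco : x i ∈ Set.Ico (0:ℝ) 1 := hpieceIco i hi ⟨le_refl _, hlt i hi⟩
    obtain ⟨p, hp, hxi⟩ := Set.mem_iUnion₂.1 (hSAcov hxiIco)
    obtain ⟨cc, hcc⟩ := hSAc p hp
    exact ⟨cc, fun t ht => hcc t (hcover i hi p (Finset.mem_union_left _ hp) hxi ht)⟩
  · intro i hi
    by_cases hxi : x i ∈ I1
    · left
      intro t ht
      have : x i ∈ I1 ∩ Set.Ico 0 1 := ⟨hxi, hpieceIco i hi ⟨le_refl _, hlt i hi⟩⟩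
      rw [hS1] at this
      obtain ⟨p, hp, hxip⟩ := Set.mem_iUnion₂.1 this
      have : t ∈ I1 ∩ Set.Ico 0 1 := by
        rw [hS1]
        exact Set.mem_iUnion₂.2 ⟨p, hp, hcover i hi p (Finset.mem_union_right _ hp) hxip ht⟩
      exact this.1
    · right
      intro t ht htI
      have : t ∈ I1 ∩ Set.Ico 0 1 := ⟨htI, hpieceIco i hi ht⟩
      rw [hS1] at this
      obtain ⟨p, hp, htp⟩ := Set.mem_iUnion₂.1 this
      have hp1 : p.1 ≤ x i := by
        by_contra hcon
        push_neg at hcon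
        have hp1D : p.1 ∈ D := by
          simp only [hD, Finset.mem_insert, Finset.mem_filter, hE, Finset.mem_union,
            Finset.mem_image]
          right; right
          refine ⟨Or.inl ⟨p, Or.inr hp, rfl⟩,
            le_trans (hx01 i (by omega)).1 hcon.le,
            le_trans htp.1 (le_trans ht.2.le (hx01 (i+1) (by omega)).2)⟩
        exact hgap i hi p.1 hp1D ⟨hcon, lt_of_le_of_lt htp.1 ht.2⟩
      have : x i ∈ I1 ∩ Set.Ico 0 1 := by
        rw [hS1]
        exact Set.mem_iUnion₂.2 ⟨p, hp, ⟨hp1, lt_of_le_of_lt ht.1 htp.2⟩⟩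
      exact hxi this.1


/-- running maximum over grid values -/
def NN (f : ℕ → ℝ) : ℕ → ℝ
  | 0 => f 0
  | (i+1) => max (NN f i) (f (i+1))

lemma le_NN (f : ℕ → ℝ) : ∀ i, ∀ j ≤ i, f j ≤ NN f i := by
  intro i
  induction i with
  | zero => intro j hj; interval_cases j; exact le_refl _
  | succ k ih =>
    intro j hj
    rcases Nat.lt_succ_iff_lt_or_eq.1 (Nat.lt_succ_of_le hj) with h | rfl
    · exact le_trans (ih j (by omega)) (le_max_left _ _)
    · exact le_max_right _ _

lemma NN_mono (f : ℕ → ℝ) : ∀ {i j}, i ≤ j → NN f i ≤ NN f j := by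
  intro i j hij
  induction j with
  | zero => simp_all
  | succ k ih =>
    rcases Nat.le_succ_iff.mp hij with h | rfl
    · exact le_trans (ih h) (le_max_left _ _)
    · exact le_refl _

lemma NN_exists (f : ℕ → ℝ) : ∀ i, ∃ j ≤ i, NN f i = f j := by
  intro i
  induction i with
  | zero => exact ⟨0, le_refl _, rfl⟩
  | succ k ih =>
    obtain ⟨j, hj, hje⟩ := ih
    rcases le_or_gt (NN f k) (f (k+1)) with h | h
    · exact ⟨k+1, le_refl _, max_eq_right h⟩
    · exact ⟨j, by omega, by rw [show NN f (k+1) = max (NN f k) (f (k+1)) from rfl, max_eq_left h.le, hje]⟩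

/-- bundle of data: a piecewise-constant periodic function with partition -/
structure PC (A : ℝ → ℝ) : Type where
  n : ℕ
  x : ℕ → ℝ
  c : ℕ → ℝ
  hn : 0 < n
  hx0 : x 0 = 0
  hxn : x n = 1
  hlt : ∀ i < n, x i < x (i+1)
  hc : ∀ i < n, ∀ t ∈ Set.Ico (x i) (x (i+1)), A t = c i
  hper : ∀ t, A (t + 1) = A t
  hnn : ∀ t, 0 ≤ A t

/-- the auxiliary function B -/
noncomputable def Bf (A : ℝ → ℝ) (lam u : ℝ) : ℝ := (∫ s in (0:ℝ)..u, A s) - lam * u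

namespace PC

variable {A : ℝ → ℝ} (P : PC A)

lemma mono : ∀ i ≤ P.n, ∀ j ≤ i, P.x j ≤ P.x i := by
  intro i
  induction i with
  | zero => intro _ j hj; interval_cases j; exact le_refl _
  | succ k ih =>
    intro hk j hj
    rcases Nat.le_succ_iff.mp hj with h | rfl
    · exact le_trans (ih (by omega) j h) (P.hlt k (by omega)).le
    · exact le_refl _

lemma x_nonneg {i : ℕ} (hi : i ≤ P.n) : 0 ≤ P.x i := by
  have := P.mono i hi 0 (Nat.zero_le _); rwa [P.hx0] at this

lemma x_le_one {i : ℕ} (hi : i ≤ P.n) : P.x i ≤ 1 := by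
  have := P.mono P.n (le_refl _) i hi; rwa [P.hxn] at this

lemma findm : ∀ m, 0 < m → m ≤ P.n → ∀ u, 0 ≤ u → u ≤ P.x m →
    ∃ j < m, P.x j ≤ u ∧ u ≤ P.x (j+1) := by
  intro m
  induction m with
  | zero => omega
  | succ k ih =>
    intro _ hk u hu hum
    rcases le_or_gt (P.x k) u with h | h
    · exact ⟨k, by omega, h, hum⟩
    · have hkpos : 0 < k := by
        rcases Nat.eq_zero_or_pos k with rfl | h'
        · rw [P.hx0] at h; linarith
        · exact h'
      obtain ⟨j, hj, h1, h2⟩ := ih hkpos (by omega) u hu h.le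
      exact ⟨j, by omega, h1, h2⟩

lemma find {u : ℝ} (h0 : 0 ≤ u) (h1 : u ≤ 1) :
    ∃ j < P.n, P.x j ≤ u ∧ u ≤ P.x (j+1) :=
  P.findm P.n P.hn (le_refl _) u h0 (by rwa [P.hxn])

include P in
lemma Ashift : ∀ (k : ℤ) (t : ℝ), A (t + k) = A t := by
  have hp : Function.Periodic A 1 := P.hper
  intro k t
  simpa using (hp.int_mul k) t

lemma intOn_piece (k : ℤ) {i : ℕ} (hi : i < P.n) :
    IntegrableOn A (Set.Icc ((k:ℝ) + P.x i) (k + P.x (i+1))) volume := by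
  have hae : (fun _ : ℝ => P.c i) =ᵐ[volume.restrict (Set.Icc ((k:ℝ) + P.x i) (k + P.x (i+1)))] A := by
    rw [Filter.EventuallyEq, ae_restrict_iff' measurableSet_Icc]
    filter_upwards [ae_ne (k + P.x (i+1))] with t hne ht
    have h1 : t - k ∈ Set.Ico (P.x i) (P.x (i+1)) := by
      constructor
      · linarith [ht.1]
      · have : t - k ≤ P.x (i+1) := by linarith [ht.2]
        exact lt_of_le_of_ne this (fun h => hne (by linarith))
    have h2 : A (t - k + k) = A (t - k) := P.Ashift k (t - k)
    rw [show t - (k:ℝ) + k = t by ring] at h2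
    rw [h2, P.hc i hi _ h1]
  exact (integrableOn_const measure_Icc_lt_top.ne).congr hae

include P in
lemma intOn_unit (k : ℤ) : IntegrableOn A (Set.Icc (k:ℝ) (k+1)) volume := by
  have key : ∀ m ≤ P.n, 0 < m → IntegrableOn A (Set.Icc ((k:ℝ) + P.x 0) (k + P.x m)) volume := by
    intro m
    induction m with
    | zero => omega
    | succ j ih =>
      intro hj _
      rcases Nat.eq_zero_or_pos j with rfl | hjpos
      · exact P.intOn_piece k (by omega)
      · have h1 := ih (by omega) hjpos
        have h2 := P.intOn_piece k (show j < P.n by omega)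
        have := h1.union h2
        rwa [Set.Icc_union_Icc_eq_Icc
          (by have := P.x_nonneg (show (0:ℕ) ≤ P.n by omega); have := P.mono j (by omega) 0 (by omega); linarith)
          (by have := (P.hlt j (by omega)).le; linarith)] at this
  have := key P.n (le_refl _) P.hn
  rwa [P.hx0, P.hxn, add_zero] at this

include P in
lemma intOn_Icc (a b : ℝ) : IntegrableOn A (Set.Icc a b) volume := by
  rcases le_or_gt a b with hab | hab
  · have hsub : Set.Icc a b ⊆ ⋃ k ∈ Finset.Icc ⌊a⌋ ⌊b⌋, Set.Icc (k:ℝ) (k+1) := by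
      intro t ht
      refine Set.mem_iUnion₂.2 ⟨⌊t⌋, ?_, Int.floor_le t, (Int.lt_floor_add_one t).le⟩
      rw [Finset.mem_Icc]
      exact ⟨Int.floor_le_floor ht.1, Int.floor_le_floor ht.2⟩
    exact ((integrableOn_finset_iUnion.2 (fun k _ => P.intOn_unit k)).mono_set hsub)
  · rw [Set.Icc_eq_empty (not_le.2 hab)]; exact integrableOn_empty

include P in
lemma intInt (a b : ℝ) : IntervalIntegrable A volume a b := by
  rw [intervalIntegrable_iff]
  exact (P.intOn_Icc (a ⊓ b) (a ⊔ b)).mono_set Set.Ioc_subset_Icc_self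

include P in
lemma B_sub (lam t s : ℝ) :
    Bf A lam t - Bf A lam s = (∫ u in s..t, A u) - lam * (t - s) := by
  have h := intervalIntegral.integral_interval_sub_left (P.intInt 0 t) (P.intInt 0 s)
  unfold Bf
  linarith [h]

include P in
lemma cond_iff_B (lam t : ℝ) :
    (∀ t₁ < t, lam * (t - t₁) ≤ ∫ s in t₁..t, A s) ↔
      (∀ t₁ < t, Bf A lam t₁ ≤ Bf A lam t) := by
  refine forall_congr' fun t₁ => imp_congr_right fun _ => ?_
  have h := P.B_sub lam t t₁
  constructor <;> intro <;> linarith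

lemma B_affine (lam : ℝ) {i : ℕ} (hi : i < P.n) {s t : ℝ}
    (hs : s ∈ Set.Icc (P.x i) (P.x (i+1))) (ht : t ∈ Set.Icc (P.x i) (P.x (i+1))) :
    Bf A lam t - Bf A lam s = (P.c i - lam) * (t - s) := by
  rw [P.B_sub]
  have hint : ∫ u in s..t, A u = (t - s) * P.c i := by
    apply HLaux.integral_of_ae_const
    filter_upwards [HLaux.ae_ne (P.x (i+1))] with u hne hu
    have h1 : s ⊓ t < u := hu.1
    have h2 : u ≤ s ⊔ t := hu.2
    have h3 : P.x i ≤ u := le_trans (le_inf hs.1 ht.1) h1.le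
    have h4 : u ≤ P.x (i+1) := le_trans h2 (sup_le hs.2 ht.2)
    exact P.hc i hi u ⟨h3, lt_of_le_of_ne h4 hne⟩
  rw [hint]; ring

include P in
lemma B_add_one (lam u : ℝ) :
    Bf A lam (u + 1) = Bf A lam u + ((∫ s in (0:ℝ)..1, A s) - lam) := by
  have hper : Function.Periodic A 1 := P.hper
  have h1 : (∫ s in u..(u+1), A s) = ∫ s in (0:ℝ)..(0+1:ℝ), A s := hper.intervalIntegral_add_eq u 0
  have h2 := intervalIntegral.integral_add_adjacent_intervals (P.intInt 0 u) (P.intInt u (u+1))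
  unfold Bf
  rw [← h2, h1]
  norm_num
  ring

include P in
lemma B_sub_nat (lam u : ℝ) : ∀ k : ℕ,
    Bf A lam (u - k) = Bf A lam u - k * ((∫ s in (0:ℝ)..1, A s) - lam) := by
  intro k
  induction k with
  | zero => simp
  | succ m ih =>
    have h := P.B_add_one lam (u - (m+1 : ℕ))
    have he : u - (m+1 : ℕ) + 1 = u - (m : ℕ) := by push_cast; ring
    rw [he] at h
    rw [ih] at h
    push_cast
    push_cast at h
    linarith

lemma B_le (lam : ℝ) {u : ℝ} (h0 : 0 ≤ u) (h1 : u ≤ 1) :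
    Bf A lam u ≤ NN (fun j => Bf A lam (P.x j)) P.n := by
  obtain ⟨i, hi, hxi, hxi1⟩ := P.find h0 h1
  have ha := P.B_affine lam hi (s := P.x i) (t := u)
    ⟨le_refl _, (P.hlt i hi).le⟩ ⟨hxi, hxi1⟩
  have hb := P.B_affine lam hi (s := P.x i) (t := P.x (i+1))
    ⟨le_refl _, (P.hlt i hi).le⟩ ⟨(P.hlt i hi).le, le_refl _⟩
  have h2 : Bf A lam u ≤ max (Bf A lam (P.x i)) (Bf A lam (P.x (i+1))) := by
    rcases le_or_gt lam (P.c i) with h | h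
    · refine le_trans ?_ (le_max_right _ _); nlinarith
    · refine le_trans ?_ (le_max_left _ _); nlinarith
  refine le_trans h2 (max_le ?_ ?_)
  · exact le_NN (fun j => Bf A lam (P.x j)) P.n i (by omega)
  · exact le_NN (fun j => Bf A lam (P.x j)) P.n (i+1) (by omega)

/-- the key characterization of the flux condition on a piece -/
lemma cond_iff (lam : ℝ) (hl : lam ≤ ∫ s in (0:ℝ)..1, A s) {i : ℕ} (hi : i < P.n)
    {t : ℝ} (ht : t ∈ Set.Ioc (P.x i) (P.x (i+1))) :
    (∀ t₁ < t, lam * (t - t₁) ≤ ∫ s in t₁..t, A s) ↔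
      max (NN (fun j => Bf A lam (P.x j)) P.n - ((∫ s in (0:ℝ)..1, A s) - lam))
        (NN (fun j => Bf A lam (P.x j)) i) ≤ Bf A lam t := by
  set L0 : ℝ := ∫ s in (0:ℝ)..1, A s with hL0
  set NB : ℕ → ℝ := fun j => Bf A lam (P.x j) with hNB
  rw [P.cond_iff_B]
  have hxipos : 0 ≤ P.x i := P.x_nonneg (by omega)
  have htpos : 0 < t := lt_of_le_of_lt hxipos ht.1
  constructor
  · intro hcond
    refine max_le ?_ ?_
    · obtain ⟨j, hj, hje⟩ := NN_exists NB P.n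
      have hx1 : P.x j ≤ 1 := P.x_le_one hj
      have hlt' : P.x j - 1 < t := by linarith
      have hBm := P.B_sub_nat lam (P.x j) 1
      push_cast at hBm
      have h2 := hcond (P.x j - 1) hlt'
      rw [hje]
      show NB j - (L0 - lam) ≤ Bf A lam t
      simp only [hNB, hL0]
      linarith
    · obtain ⟨j, hj, hje⟩ := NN_exists NB i
      rw [hje]
      exact hcond (P.x j) (lt_of_le_of_lt (P.mono i (by omega) j hj) ht.1)
  · intro hmax t₁ ht₁
    have hKle : NN NB P.n - (L0 - lam) ≤ Bf A lam t := le_trans (le_max_left _ _) hmax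
    have hNile : NN NB i ≤ Bf A lam t := le_trans (le_max_right _ _) hmax
    rcases lt_or_ge t₁ 0 with hneg | hpos
    · set k : ℕ := (-⌊t₁⌋).toNat with hk
      have hfl : (⌊t₁⌋ : ℝ) ≤ t₁ := Int.floor_le t₁
      have hfneg : ⌊t₁⌋ < 0 := by
        by_contra hcon
        push_neg at hcon
        have : (0:ℝ) ≤ ⌊t₁⌋ := by exact_mod_cast hcon
        linarith
      have hk1 : 1 ≤ k := by omega
      have hzz : (k : ℤ) = -⌊t₁⌋ := by omega
      have hkc : (k : ℝ) = -(⌊t₁⌋ : ℝ) := by exact_mod_cast hzz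
      set u : ℝ := t₁ + k with hu
      have hu0 : 0 ≤ u := by
        rw [hu, hkc]
        linarith [Int.floor_le t₁]
      have hu1 : u ≤ 1 := by
        rw [hu, hkc]
        have := Int.lt_floor_add_one t₁
        linarith
      have hBt₁ : Bf A lam t₁ = Bf A lam u - k * (L0 - lam) := by
        have := P.B_sub_nat lam u k
        rw [show u - (k:ℝ) = t₁ by rw [hu]; ring] at this
        exact this
      have hBu : Bf A lam u ≤ NN NB P.n := P.B_le lam hu0 hu1
      have hk1' : (1:ℝ) ≤ (k:ℝ) := by exact_mod_cast hk1
      have hLl : 0 ≤ L0 - lam := by linarith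
      rw [hBt₁]
      nlinarith
    · rcases le_or_gt (P.x i) t₁ with h1 | h1
      · -- t₁ in piece i
        have hmem1 : t₁ ∈ Set.Icc (P.x i) (P.x (i+1)) := ⟨h1, le_trans ht₁.le ht.2⟩
        have hmem2 : t ∈ Set.Icc (P.x i) (P.x (i+1)) := ⟨ht.1.le, ht.2⟩
        have hxx : P.x i ∈ Set.Icc (P.x i) (P.x (i+1)) := ⟨le_refl _, (P.hlt i hi).le⟩
        have ha := P.B_affine lam hi hxx hmem1
        have hb := P.B_affine lam hi hxx hmem2
        rcases le_or_gt lam (P.c i) with h | h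
        · nlinarith
        · have hBxi : NB i ≤ NN NB i := le_NN _ i i (le_refl _)
          have : Bf A lam t₁ ≤ Bf A lam (P.x i) := by nlinarith
          refine le_trans this (le_trans ?_ hNile)
          exact hBxi
      · -- t₁ < x i, find piece j < i
        have hipos : 0 < i := by
          rcases Nat.eq_zero_or_pos i with rfl | h'
          · rw [P.hx0] at h1; linarith
          · exact h'
        obtain ⟨j, hj, hj1, hj2⟩ := P.findm i hipos (by omega) t₁ hpos h1.le
        have hmem1 : t₁ ∈ Set.Icc (P.x j) (P.x (j+1)) := ⟨hj1, hj2⟩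
        have hxx : P.x j ∈ Set.Icc (P.x j) (P.x (j+1)) := ⟨le_refl _, (P.hlt j (by omega)).le⟩
        have h2 : Bf A lam t₁ ≤ max (NB j) (NB (j+1)) := by
          have ha := P.B_affine lam (show j < P.n by omega) hxx hmem1
          have hb := P.B_affine lam (show j < P.n by omega) hxx
            ⟨(P.hlt j (by omega)).le, le_refl _⟩
          rcases le_or_gt lam (P.c j) with h | h
          · refine le_trans ?_ (le_max_right _ _); nlinarith
          · refine le_trans ?_ (le_max_left _ _); nlinarith
        refine le_trans h2 (le_trans (max_le ?_ ?_) hNile)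
        · exact le_NN NB i j (by omega)
        · exact le_NN NB i (j+1) (by omega)

noncomputable def Cg (lam : ℝ) (i : ℕ) : ℝ :=
  max (NN (fun j => Bf A lam (P.x j)) P.n - ((∫ s in (0:ℝ)..1, A s) - lam))
    (NN (fun j => Bf A lam (P.x j)) i)

lemma Cg_succ (lam : ℝ) (i : ℕ) :
    P.Cg lam (i+1) = max (P.Cg lam i) (Bf A lam (P.x (i+1))) := by
  unfold Cg
  rw [show NN (fun j => Bf A lam (P.x j)) (i+1)
      = max (NN (fun j => Bf A lam (P.x j)) i) (Bf A lam (P.x (i+1))) from rfl]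
  rw [max_assoc]

lemma Cg_ge_B (lam : ℝ) (i : ℕ) : Bf A lam (P.x i) ≤ P.Cg lam i :=
  le_trans (le_NN (fun j => Bf A lam (P.x j)) i i (le_refl _)) (le_max_right _ _)

/-- full description of `F lam` on one piece -/
lemma piece_desc (F : ℝ → ℝ → ℝ)
    (hF1 : ∀ μ t, (∀ t₁ < t, μ * (t - t₁) ≤ ∫ s in t₁..t, A s) → F μ t = μ)
    (hF2 : ∀ μ t, ¬ (∀ t₁ < t, μ * (t - t₁) ≤ ∫ s in t₁..t, A s) → F μ t = A t)
    {lam : ℝ} (hL : lam ≤ ∫ s in (0:ℝ)..1, A s) {i : ℕ} (hi : i < P.n) :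
    ∃ ts ∈ Set.Icc (P.x i) (P.x (i+1)),
      (∀ t ∈ Set.Ioo (P.x i) ts, F lam t = P.c i) ∧
      (∀ t ∈ Set.Ioo ts (P.x (i+1)), F lam t = lam) ∧
      P.c i * (ts - P.x i) + lam * (P.x (i+1) - ts)
        = lam * (P.x (i+1) - P.x i) + (Bf A lam (P.x (i+1)) - Bf A lam (P.x i))
          - (P.Cg lam (i+1) - P.Cg lam i) := by
  have hcond : ∀ t ∈ Set.Ioc (P.x i) (P.x (i+1)),
      ((∀ t₁ < t, lam * (t - t₁) ≤ ∫ s in t₁..t, A s) ↔ P.Cg lam i ≤ Bf A lam t) :=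
    fun t ht => P.cond_iff lam hL hi ht
  have hCgeB : Bf A lam (P.x i) ≤ P.Cg lam i := P.Cg_ge_B lam i
  have hxlt := P.hlt i hi
  have haff : ∀ t ∈ Set.Icc (P.x i) (P.x (i+1)),
      Bf A lam t - Bf A lam (P.x i) = (P.c i - lam) * (t - P.x i) :=
    fun t ht => P.B_affine lam hi ⟨le_refl _, hxlt.le⟩ ht
  have haffd := haff (P.x (i+1)) ⟨hxlt.le, le_refl _⟩
  rw [P.Cg_succ lam i]
  by_cases hA : lam < P.c i ∧ P.Cg lam i ≤ Bf A lam (P.x (i+1))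
  · obtain ⟨hslope, hCle⟩ := hA
    have hsl : 0 < P.c i - lam := by linarith
    set ts : ℝ := P.x i + (P.Cg lam i - Bf A lam (P.x i)) / (P.c i - lam) with hts
    have hts1 : P.x i ≤ ts := by
      rw [hts]
      have : 0 ≤ (P.Cg lam i - Bf A lam (P.x i)) / (P.c i - lam) :=
        div_nonneg (by linarith) hsl.le
      linarith
    have hts2 : ts ≤ P.x (i+1) := by
      rw [hts]
      rw [← sub_nonneg]
      have h1 : P.Cg lam i - Bf A lam (P.x i) ≤ (P.c i - lam) * (P.x (i+1) - P.x i) := by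
        linarith
      have h2 : (P.Cg lam i - Bf A lam (P.x i)) / (P.c i - lam) ≤ P.x (i+1) - P.x i :=
        (div_le_iff₀ hsl).2 (by linarith)
      linarith
    have hkey : (P.c i - lam) * (ts - P.x i) = P.Cg lam i - Bf A lam (P.x i) := by
      rw [hts]
      field_simp
      ring
    refine ⟨ts, ⟨hts1, hts2⟩, ?_, ?_, ?_⟩
    · intro t ht
      have htmem : t ∈ Set.Icc (P.x i) (P.x (i+1)) := ⟨ht.1.le, le_trans ht.2.le hts2⟩
      have hB := haff t htmem
      have hlt' : Bf A lam t < P.Cg lam i := by nlinarith [ht.2]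
      have hnc : ¬ (∀ t₁ < t, lam * (t - t₁) ≤ ∫ s in t₁..t, A s) := by
        rw [hcond t ⟨ht.1, htmem.2⟩]
        linarith
      rw [hF2 lam t hnc]
      exact P.hc i hi t ⟨htmem.1, lt_of_lt_of_le ht.2 hts2⟩
    · intro t ht
      have htmem : t ∈ Set.Icc (P.x i) (P.x (i+1)) := ⟨le_trans hts1 ht.1.le, ht.2.le⟩
      have hB := haff t htmem
      have hgt : P.Cg lam i ≤ Bf A lam t := by nlinarith [ht.1]
      exact hF1 lam t ((hcond t ⟨lt_of_le_of_lt hts1 ht.1, ht.2.le⟩).2 hgt)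
    · rw [max_eq_right hCle]
      nlinarith [hkey]
  · have hAB : Bf A lam (P.x (i+1)) ≤ P.Cg lam i := by
      rcases le_or_gt (P.c i) lam with h | h
      · nlinarith
      · rcases not_and_or.1 hA with h' | h'
        · exact absurd h h'
        · exact (not_le.1 h').le
    refine ⟨P.x (i+1), ⟨hxlt.le, le_refl _⟩, ?_, ?_, ?_⟩
    · intro t ht
      have htmem : t ∈ Set.Icc (P.x i) (P.x (i+1)) := ⟨ht.1.le, ht.2.le⟩
      have hB := haff t htmem
      by_cases hcnd : ∀ t₁ < t, lam * (t - t₁) ≤ ∫ s in t₁..t, A s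
      · have hge : P.Cg lam i ≤ Bf A lam t := (hcond t ⟨ht.1, ht.2.le⟩).1 hcnd
        have hceq : P.c i = lam := by
          rcases lt_trichotomy (P.c i) lam with h | h | h
          · nlinarith [ht.1]
          · exact h
          · exfalso
            rcases not_and_or.1 hA with h' | h'
            · exact h' h
            · have : Bf A lam (P.x (i+1)) < P.Cg lam i := not_le.1 h'
              nlinarith [ht.2]
        rw [hF1 lam t hcnd, hceq]
      · rw [hF2 lam t hcnd]
        exact P.hc i hi t ⟨htmem.1, ht.2⟩
    · intro t ht
      exact absurd (lt_trans ht.1 ht.2) (lt_irrefl _)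
    · rw [max_eq_left hAB]
      nlinarith

include P in
/-- integral of an indicator of `F lam` over one piece -/
lemma piece_int (I : Set ℝ) (F : ℝ → ℝ → ℝ) (lam : ℝ) {i : ℕ} (hi : i < P.n)
    (hIc : (∀ t ∈ Set.Ico (P.x i) (P.x (i+1)), t ∈ I) ∨
      (∀ t ∈ Set.Ico (P.x i) (P.x (i+1)), t ∉ I))
    {ts : ℝ} (hts : ts ∈ Set.Icc (P.x i) (P.x (i+1)))
    (h1 : ∀ t ∈ Set.Ioo (P.x i) ts, F lam t = P.c i)
    (h2 : ∀ t ∈ Set.Ioo ts (P.x (i+1)), F lam t = lam) :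
    IntervalIntegrable (Set.indicator I (F lam)) volume (P.x i) (P.x (i+1)) ∧
    ∫ t in (P.x i)..(P.x (i+1)), Set.indicator I (F lam) t
      = Set.indicator I (fun _ => (1:ℝ)) (P.x i) * (P.c i * (ts - P.x i) + lam * (P.x (i+1) - ts)) := by
  classical
  set ε : ℝ := Set.indicator I (fun _ => (1:ℝ)) (P.x i) with hε
  have hxiI : P.x i ∈ Set.Ico (P.x i) (P.x (i+1)) := ⟨le_refl _, P.hlt i hi⟩
  have hind : ∀ t ∈ Set.Ico (P.x i) (P.x (i+1)), ∀ y : ℝ,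
      F lam t = y → Set.indicator I (F lam) t = ε * y := by
    intro t ht y hy
    rcases hIc with hin | hout
    · rw [Set.indicator_of_mem (hin t ht), hε, Set.indicator_of_mem (hin _ hxiI), one_mul, hy]
    · rw [Set.indicator_of_notMem (hout t ht), hε, Set.indicator_of_notMem (hout _ hxiI), zero_mul]
  have hae1 : ∀ᵐ t ∂(volume : Measure ℝ), t ∈ Set.uIoc (P.x i) ts →
      Set.indicator I (F lam) t = ε * P.c i := by
    filter_upwards [HLaux.ae_ne ts] with t hne htm
    rw [Set.uIoc_of_le hts.1] at htm
    have htlt : t < ts := lt_of_le_of_ne htm.2 hne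
    have htI : t ∈ Set.Ico (P.x i) (P.x (i+1)) := ⟨htm.1.le, lt_of_lt_of_le htlt hts.2⟩
    exact hind t htI _ (h1 t ⟨htm.1, htlt⟩)
  have hae2 : ∀ᵐ t ∂(volume : Measure ℝ), t ∈ Set.uIoc ts (P.x (i+1)) →
      Set.indicator I (F lam) t = ε * lam := by
    filter_upwards [HLaux.ae_ne (P.x (i+1))] with t hne htm
    rw [Set.uIoc_of_le hts.2] at htm
    have htlt : t < P.x (i+1) := lt_of_le_of_ne htm.2 hne
    have htI : t ∈ Set.Ico (P.x i) (P.x (i+1)) := ⟨le_trans hts.1 htm.1.le, htlt⟩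
    exact hind t htI _ (h2 t ⟨htm.1, htlt⟩)
  have int1 : IntervalIntegrable (Set.indicator I (F lam)) volume (P.x i) ts :=
    HLaux.intInt_of_ae_const hae1
  have int2 : IntervalIntegrable (Set.indicator I (F lam)) volume ts (P.x (i+1)) :=
    HLaux.intInt_of_ae_const hae2
  refine ⟨int1.trans int2, ?_⟩
  rw [← intervalIntegral.integral_add_adjacent_intervals int1 int2,
    HLaux.integral_of_ae_const hae1, HLaux.integral_of_ae_const hae2]
  ring

include P in
/-- integrability over [0,1] and value of the integral as a sum over pieces -/
lemma global_int (I : Set ℝ)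
    (hIc : ∀ i < P.n, (∀ t ∈ Set.Ico (P.x i) (P.x (i+1)), t ∈ I) ∨
      (∀ t ∈ Set.Ico (P.x i) (P.x (i+1)), t ∉ I))
    (F : ℝ → ℝ → ℝ)
    (hF1 : ∀ μ t, (∀ t₁ < t, μ * (t - t₁) ≤ ∫ s in t₁..t, A s) → F μ t = μ)
    (hF2 : ∀ μ t, ¬ (∀ t₁ < t, μ * (t - t₁) ≤ ∫ s in t₁..t, A s) → F μ t = A t)
    {lam : ℝ} (hL : lam ≤ ∫ s in (0:ℝ)..1, A s)
    (ts : ℕ → ℝ) (hts : ∀ i < P.n, ts i ∈ Set.Icc (P.x i) (P.x (i+1)))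
    (h1 : ∀ i < P.n, ∀ t ∈ Set.Ioo (P.x i) (ts i), F lam t = P.c i)
    (h2 : ∀ i < P.n, ∀ t ∈ Set.Ioo (ts i) (P.x (i+1)), F lam t = lam) :
    IntervalIntegrable (Set.indicator I (F lam)) volume 0 1 ∧
    ∫ t in (0:ℝ)..1, Set.indicator I (F lam) t
      = ∑ i ∈ Finset.range P.n, Set.indicator I (fun _ => (1:ℝ)) (P.x i)
          * (P.c i * (ts i - P.x i) + lam * (P.x (i+1) - ts i)) := by
  classical
  have hpc : ∀ i < P.n, IntervalIntegrable (Set.indicator I (F lam)) volume (P.x i) (P.x (i+1)) ∧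
      ∫ t in (P.x i)..(P.x (i+1)), Set.indicator I (F lam) t
        = Set.indicator I (fun _ => (1:ℝ)) (P.x i)
            * (P.c i * (ts i - P.x i) + lam * (P.x (i+1) - ts i)) :=
    fun i hi => P.piece_int I F lam hi (hIc i hi) (hts i hi) (h1 i hi) (h2 i hi)
  have hint : ∀ i < P.n, IntervalIntegrable (Set.indicator I (F lam)) volume (P.x i) (P.x (i+1)) :=
    fun i hi => (hpc i hi).1
  have hint01 : IntervalIntegrable (Set.indicator I (F lam)) volume 0 1 := by
    have := IntervalIntegrable.trans_iterate (f := Set.indicator I (F lam)) (μ := volume)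
      (a := P.x) (n := P.n) hint
    rwa [P.hx0, P.hxn] at this
  refine ⟨hint01, ?_⟩
  have hsum := intervalIntegral.sum_integral_adjacent_intervals (f := Set.indicator I (F lam))
    (μ := volume) (a := P.x) (n := P.n) hint
  rw [P.hx0, P.hxn] at hsum
  rw [← hsum]
  exact Finset.sum_congr rfl fun i hi => (hpc i (Finset.mem_range.1 hi)).2

include P in
/-- the value of the per-piece quantity sums to `lam` -/
lemma sum_val (F : ℝ → ℝ → ℝ)
    (hF1 : ∀ μ t, (∀ t₁ < t, μ * (t - t₁) ≤ ∫ s in t₁..t, A s) → F μ t = μ)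
    (hF2 : ∀ μ t, ¬ (∀ t₁ < t, μ * (t - t₁) ≤ ∫ s in t₁..t, A s) → F μ t = A t)
    {lam : ℝ} (hL : lam ≤ ∫ s in (0:ℝ)..1, A s)
    (ts : ℕ → ℝ)
    (hval : ∀ i < P.n, P.c i * (ts i - P.x i) + lam * (P.x (i+1) - ts i)
        = lam * (P.x (i+1) - P.x i) + (Bf A lam (P.x (i+1)) - Bf A lam (P.x i))
          - (P.Cg lam (i+1) - P.Cg lam i)) :
    ∑ i ∈ Finset.range P.n, (P.c i * (ts i - P.x i) + lam * (P.x (i+1) - ts i)) = lam := by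
  have hrw : ∑ i ∈ Finset.range P.n, (P.c i * (ts i - P.x i) + lam * (P.x (i+1) - ts i))
      = ∑ i ∈ Finset.range P.n, ((lam * P.x (i+1) - lam * P.x i)
        + (Bf A lam (P.x (i+1)) - Bf A lam (P.x i)) - (P.Cg lam (i+1) - P.Cg lam i)) := by
    refine Finset.sum_congr rfl fun i hi => ?_
    rw [hval i (Finset.mem_range.1 hi)]
    ring
  rw [hrw]
  have hs1 := Finset.sum_range_sub (fun i => lam * P.x i) P.n
  have hs2 := Finset.sum_range_sub (fun i => Bf A lam (P.x i)) P.n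
  have hs3 := Finset.sum_range_sub (fun i => P.Cg lam i) P.n
  have hsplit : ∑ i ∈ Finset.range P.n, ((lam * P.x (i+1) - lam * P.x i)
        + (Bf A lam (P.x (i+1)) - Bf A lam (P.x i)) - (P.Cg lam (i+1) - P.Cg lam i))
      = (∑ i ∈ Finset.range P.n, (lam * P.x (i+1) - lam * P.x i))
        + (∑ i ∈ Finset.range P.n, (Bf A lam (P.x (i+1)) - Bf A lam (P.x i)))
        - ∑ i ∈ Finset.range P.n, (P.Cg lam (i+1) - P.Cg lam i) := by
    rw [← Finset.sum_add_distrib, ← Finset.sum_sub_distrib]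
  rw [hsplit, hs1, hs2, hs3]
  have hx0' : P.x 0 = 0 := P.hx0
  have hxn' : P.x P.n = 1 := P.hxn
  have hB0 : Bf A lam (P.x 0) = 0 := by
    rw [hx0']
    unfold Bf
    rw [intervalIntegral.integral_same]
    ring
  have hB1 : Bf A lam (P.x P.n) = (∫ s in (0:ℝ)..1, A s) - lam := by
    rw [hxn']
    unfold Bf
    ring
  have hNNge : (∫ s in (0:ℝ)..1, A s) - lam ≤ NN (fun j => Bf A lam (P.x j)) P.n := by
    have h := le_NN (fun j => Bf A lam (P.x j)) P.n P.n (le_refl _)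
    linarith [hB1, h]
  have hCg0 : P.Cg lam 0 = NN (fun j => Bf A lam (P.x j)) P.n - ((∫ s in (0:ℝ)..1, A s) - lam) := by
    unfold Cg
    rw [max_eq_left]
    rw [show NN (fun j => Bf A lam (P.x j)) 0 = Bf A lam (P.x 0) from rfl, hB0]
    linarith
  have hCgn : P.Cg lam P.n = NN (fun j => Bf A lam (P.x j)) P.n := by
    unfold Cg
    rw [max_eq_right]
    linarith
  have hm1 : lam * P.x P.n = lam := by rw [hxn']; ring
  have hm2 : lam * P.x 0 = 0 := by rw [hx0']; ring
  linarith [hB0, hB1, hCg0, hCgn, hm1, hm2]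
include P in
lemma F_nonneg (F : ℝ → ℝ → ℝ)
    (hF1 : ∀ μ t, (∀ t₁ < t, μ * (t - t₁) ≤ ∫ s in t₁..t, A s) → F μ t = μ)
    (hF2 : ∀ μ t, ¬ (∀ t₁ < t, μ * (t - t₁) ≤ ∫ s in t₁..t, A s) → F μ t = A t)
    {lam : ℝ} (h0 : 0 ≤ lam) (t : ℝ) : 0 ≤ F lam t := by
  by_cases hcnd : ∀ t₁ < t, lam * (t - t₁) ≤ ∫ s in t₁..t, A s
  · rw [hF1 lam t hcnd]; exact h0
  · rw [hF2 lam t hcnd]; exact P.hnn t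

include P in
lemma cond_imp_le (lam : ℝ) {i : ℕ} (hi : i < P.n) {t : ℝ}
    (ht : t ∈ Set.Ioo (P.x i) (P.x (i+1)))
    (h : ∀ t₁ < t, lam * (t - t₁) ≤ ∫ s in t₁..t, A s) : lam ≤ P.c i := by
  set t₁ : ℝ := (P.x i + t) / 2 with ht₁
  have h1 : P.x i < t₁ := by rw [ht₁]; linarith [ht.1]
  have h2 : t₁ < t := by rw [ht₁]; linarith [ht.1]
  have hInt : (∫ s in t₁..t, A s) = (t - t₁) * P.c i := by
    apply HLaux.integral_of_ae_const
    apply Filter.Eventually.of_forall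
    intro u hu
    rw [Set.uIoc_of_le h2.le] at hu
    exact P.hc i hi u ⟨(lt_of_lt_of_le h1 hu.1.le).le, lt_of_le_of_lt hu.2 ht.2⟩
  have h3 := h t₁ h2
  rw [hInt] at h3
  nlinarith [h2]

include P in
lemma F_mono_ae (F : ℝ → ℝ → ℝ)
    (hF1 : ∀ μ t, (∀ t₁ < t, μ * (t - t₁) ≤ ∫ s in t₁..t, A s) → F μ t = μ)
    (hF2 : ∀ μ t, ¬ (∀ t₁ < t, μ * (t - t₁) ≤ ∫ s in t₁..t, A s) → F μ t = A t)
    {lam mu : ℝ} (hlm : lam ≤ mu) (I : Set ℝ) :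
    ∀ᵐ t ∂(volume : Measure ℝ), t ∈ Set.Icc (0:ℝ) 1 →
      Set.indicator I (F lam) t ≤ Set.indicator I (F mu) t := by
  have hGfin : (P.x '' Set.Iic P.n).Finite := (Set.finite_Iic _).image _
  filter_upwards [measure_eq_zero_iff_ae_notMem.1 (hGfin.measure_zero volume)] with t htG ht
  obtain ⟨i, hi, hx1, hx2⟩ := P.find ht.1 ht.2
  have hne1 : t ≠ P.x i := fun h => htG ⟨i, Set.mem_Iic.2 (by omega), h.symm⟩
  have hne2 : t ≠ P.x (i+1) := fun h => htG ⟨i+1, Set.mem_Iic.2 (by omega), h.symm⟩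
  have htIoo : t ∈ Set.Ioo (P.x i) (P.x (i+1)) :=
    ⟨lt_of_le_of_ne hx1 (Ne.symm hne1), lt_of_le_of_ne hx2 hne2⟩
  have hAt : A t = P.c i := P.hc i hi t ⟨htIoo.1.le, htIoo.2⟩
  have hkey : F lam t ≤ F mu t := by
    by_cases hc2 : ∀ t₁ < t, mu * (t - t₁) ≤ ∫ s in t₁..t, A s
    · have hc1 : ∀ t₁ < t, lam * (t - t₁) ≤ ∫ s in t₁..t, A s := by
        intro t₁ h1
        refine le_trans ?_ (hc2 t₁ h1)
        exact mul_le_mul_of_nonneg_right hlm (by linarith)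
      rw [hF1 mu t hc2, hF1 lam t hc1]
      exact hlm
    · rw [hF2 mu t hc2]
      by_cases hc1 : ∀ t₁ < t, lam * (t - t₁) ≤ ∫ s in t₁..t, A s
      · rw [hF1 lam t hc1, hAt]
        exact P.cond_imp_le lam hi htIoo hc1
      · rw [hF2 lam t hc1]
  by_cases htI : t ∈ I
  · rw [Set.indicator_of_mem htI, Set.indicator_of_mem htI]; exact hkey
  · rw [Set.indicator_of_notMem htI]
    rw [Set.indicator_of_notMem htI]

include P in
lemma F_top_ae (F : ℝ → ℝ → ℝ)
    (hF1 : ∀ μ t, (∀ t₁ < t, μ * (t - t₁) ≤ ∫ s in t₁..t, A s) → F μ t = μ)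
    (hF2 : ∀ μ t, ¬ (∀ t₁ < t, μ * (t - t₁) ≤ ∫ s in t₁..t, A s) → F μ t = A t) :
    ∀ᵐ t ∂(volume : Measure ℝ), t ∈ Set.Icc (0:ℝ) 1 →
      F (∫ s in (0:ℝ)..1, A s) t = A t := by
  classical
  set L0 : ℝ := ∫ s in (0:ℝ)..1, A s with hL0
  set Z : ℕ → Set ℝ := fun i => {t | t ∈ Set.Ioo (P.x i) (P.x (i+1)) ∧
    (∀ t₁ < t, L0 * (t - t₁) ≤ ∫ s in t₁..t, A s) ∧ P.c i ≠ L0} with hZ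
  have hBt : ∀ i < P.n, ∀ t ∈ Z i, Bf A L0 t = NN (fun j => Bf A L0 (P.x j)) P.n := by
    intro i hi t htZ
    obtain ⟨htIoo, hcnd, hcne⟩ := htZ
    have h1 := (P.cond_iff L0 (le_refl _) hi ⟨htIoo.1, htIoo.2.le⟩).1 hcnd
    have h1' := le_trans (le_max_left _ _) h1
    have he : (∫ s in (0:ℝ)..1, A s) = L0 := hL0.symm
    have h0 : 0 ≤ P.x i := P.x_nonneg (by omega)
    have h1'' : P.x (i+1) ≤ 1 := P.x_le_one (by omega)
    have h2 := P.B_le L0 (le_trans h0 htIoo.1.le) (le_trans htIoo.2.le h1'')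
    linarith
  have hZsub : ∀ i < P.n, (Z i).Subsingleton := by
    intro i hi t htZ t' htZ'
    have h1 := hBt i hi t htZ
    have h2 := hBt i hi t' htZ'
    have haff := P.B_affine L0 hi (s := t') (t := t)
      ⟨htZ'.1.1.le, htZ'.1.2.le⟩ ⟨htZ.1.1.le, htZ.1.2.le⟩
    have hcne : P.c i ≠ L0 := htZ.2.2
    have : (P.c i - L0) * (t - t') = 0 := by rw [← haff, h1, h2]; ring
    rcases mul_eq_zero.1 this with h | h
    · exact absurd (by linarith : P.c i = L0) hcne
    · linarith
  have hZnull : volume (⋃ i ∈ Set.Iio P.n, Z i) = 0 := by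
    rw [measure_biUnion_null_iff (Set.to_countable _)]
    intro i hi
    exact ((hZsub i hi).measure_zero volume)
  have hGfin : (P.x '' Set.Iic P.n).Finite := (Set.finite_Iic _).image _
  filter_upwards [measure_eq_zero_iff_ae_notMem.1 (hGfin.measure_zero volume),
    measure_eq_zero_iff_ae_notMem.1 hZnull] with t htG htZ ht
  obtain ⟨i, hi, hx1, hx2⟩ := P.find ht.1 ht.2
  have hne1 : t ≠ P.x i := fun h => htG ⟨i, Set.mem_Iic.2 (by omega), h.symm⟩
  have hne2 : t ≠ P.x (i+1) := fun h => htG ⟨i+1, Set.mem_Iic.2 (by omega), h.symm⟩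
  have htIoo : t ∈ Set.Ioo (P.x i) (P.x (i+1)) :=
    ⟨lt_of_le_of_ne hx1 (Ne.symm hne1), lt_of_le_of_ne hx2 hne2⟩
  have hAt : A t = P.c i := P.hc i hi t ⟨htIoo.1.le, htIoo.2⟩
  by_cases hcnd : ∀ t₁ < t, L0 * (t - t₁) ≤ ∫ s in t₁..t, A s
  · by_cases hceq : P.c i = L0
    · rw [hF1 L0 t hcnd, hAt, hceq]
    · exfalso
      exact htZ (Set.mem_biUnion (Set.mem_Iio.2 hi) (⟨htIoo, hcnd, hceq⟩ : t ∈ Z i))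
  · exact hF2 L0 t hcnd

include P in
lemma piece_desc_fun (F : ℝ → ℝ → ℝ)
    (hF1 : ∀ μ t, (∀ t₁ < t, μ * (t - t₁) ≤ ∫ s in t₁..t, A s) → F μ t = μ)
    (hF2 : ∀ μ t, ¬ (∀ t₁ < t, μ * (t - t₁) ≤ ∫ s in t₁..t, A s) → F μ t = A t)
    {lam : ℝ} (hL : lam ≤ ∫ s in (0:ℝ)..1, A s) :
    ∃ ts : ℕ → ℝ, ∀ i < P.n, ts i ∈ Set.Icc (P.x i) (P.x (i+1)) ∧
      (∀ t ∈ Set.Ioo (P.x i) (ts i), F lam t = P.c i) ∧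
      (∀ t ∈ Set.Ioo (ts i) (P.x (i+1)), F lam t = lam) ∧
      P.c i * (ts i - P.x i) + lam * (P.x (i+1) - ts i)
        = lam * (P.x (i+1) - P.x i) + (Bf A lam (P.x (i+1)) - Bf A lam (P.x i))
          - (P.Cg lam (i+1) - P.Cg lam i) := by
  have h : ∀ i, ∃ ts : ℝ, i < P.n → (ts ∈ Set.Icc (P.x i) (P.x (i+1)) ∧
      (∀ t ∈ Set.Ioo (P.x i) ts, F lam t = P.c i) ∧
      (∀ t ∈ Set.Ioo ts (P.x (i+1)), F lam t = lam) ∧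
      P.c i * (ts - P.x i) + lam * (P.x (i+1) - ts)
        = lam * (P.x (i+1) - P.x i) + (Bf A lam (P.x (i+1)) - Bf A lam (P.x i))
          - (P.Cg lam (i+1) - P.Cg lam i)) := by
    intro i
    by_cases hi : i < P.n
    · obtain ⟨ts, h1, h2, h3, h4⟩ := P.piece_desc F hF1 hF2 hL hi
      exact ⟨ts, fun _ => ⟨h1, h2, h3, h4⟩⟩
    · exact ⟨0, fun h => absurd h hi⟩
  choose ts hts using h
  exact ⟨ts, fun i hi => hts i hi⟩

end PC
end HLaux

open MeasureTheory

/-- Properties of the homogenized fluxes `λ̂¹, λ̂²`: continuity, monotonicity,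
`λ̂¹ + λ̂² = λ`, and the bounds `0 ≤ λ̂ᵏ ≤ λ̄ᵏ = λ̂ᵏ(λ̄⁰)`. -/
theorem hat_lambda_properties
    (I1 I2 : Set ℝ)
    (hUnion : I1 ∪ I2 = Set.univ) (hDisj : I1 ∩ I2 = ∅)
    (hper1 : ∀ t, t + 1 ∈ I1 ↔ t ∈ I1) (hper2 : ∀ t, t + 1 ∈ I2 ↔ t ∈ I2)
    (hloc1 : ∃ S : Finset (ℝ × ℝ), I1 ∩ Set.Ico 0 1 = ⋃ p ∈ S, Set.Ico p.1 p.2)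
    (hloc2 : ∃ S : Finset (ℝ × ℝ), I2 ∩ Set.Ico 0 1 = ⋃ p ∈ S, Set.Ico p.1 p.2)
    (A : ℝ → ℝ) (hAper : ∀ t, A (t + 1) = A t) (hAnn : ∀ t, 0 ≤ A t)
    (hApc : ∃ S : Finset (ℝ × ℝ), (Set.Ico (0:ℝ) 1 ⊆ ⋃ p ∈ S, Set.Ico p.1 p.2) ∧
      ∀ p ∈ S, ∃ c, ∀ t ∈ Set.Ico p.1 p.2, A t = c)
    (lam0 lam1 lam2 : ℝ)
    (hlam0 : lam0 = ∫ t in (0:ℝ)..1, A t)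
    (hlam1 : lam1 = ∫ t in (0:ℝ)..1, Set.indicator I1 A t)
    (hlam2 : lam2 = ∫ t in (0:ℝ)..1, Set.indicator I2 A t)
    (F : ℝ → ℝ → ℝ)
    (hF1 : ∀ μ t, (∀ t₁ < t, μ * (t - t₁) ≤ ∫ s in t₁..t, A s) → F μ t = μ)
    (hF2 : ∀ μ t, ¬ (∀ t₁ < t, μ * (t - t₁) ≤ ∫ s in t₁..t, A s) → F μ t = A t)
    (lhat1 lhat2 : ℝ → ℝ)
    (hlh1 : ∀ lam, lhat1 lam = ∫ t in (0:ℝ)..1, Set.indicator I1 (F lam) t)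
    (hlh2 : ∀ lam, lhat2 lam = ∫ t in (0:ℝ)..1, Set.indicator I2 (F lam) t) :
    ContinuousOn lhat1 (Set.Icc 0 lam0) ∧ ContinuousOn lhat2 (Set.Icc 0 lam0) ∧
    MonotoneOn lhat1 (Set.Icc 0 lam0) ∧ MonotoneOn lhat2 (Set.Icc 0 lam0) ∧
    (∀ lam ∈ Set.Icc 0 lam0, lhat1 lam + lhat2 lam = lam) ∧
    (∀ lam ∈ Set.Icc 0 lam0,
      0 ≤ lhat1 lam ∧ lhat1 lam ≤ lam1 ∧ 0 ≤ lhat2 lam ∧ lhat2 lam ≤ lam2) ∧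
    lhat1 lam0 = lam1 ∧ lhat2 lam0 = lam2 := by
  classical
  obtain ⟨n, x, hn, hx0, hxn, hlt, hcex, hI1c⟩ := HLaux.exists_partition I1 A hloc1 hApc
  obtain ⟨c, hc⟩ : ∃ c : ℕ → ℝ, ∀ i < n, ∀ t ∈ Set.Ico (x i) (x (i+1)), A t = c i := by
    have h : ∀ i, ∃ cc : ℝ, i < n → ∀ t ∈ Set.Ico (x i) (x (i+1)), A t = cc := by
      intro i
      by_cases hi : i < n
      · obtain ⟨cc, hcc⟩ := hcex i hi
        exact ⟨cc, fun _ => hcc⟩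
      · exact ⟨0, fun h => absurd h hi⟩
    choose cf hcf using h
    exact ⟨cf, fun i hi => hcf i hi⟩
  let P : HLaux.PC A := ⟨n, x, c, hn, hx0, hxn, hlt, hc, hAper, hAnn⟩
  have hL0 : (∫ s in (0:ℝ)..1, A s) = lam0 := hlam0.symm
  have hI2 : ∀ t : ℝ, t ∈ I2 ↔ t ∉ I1 := by
    intro t
    constructor
    · intro h2 h1
      have : t ∈ (∅ : Set ℝ) := hDisj ▸ (⟨h1, h2⟩ : t ∈ I1 ∩ I2)
      exact this
    · intro h1
      have hu : t ∈ I1 ∪ I2 := hUnion ▸ Set.mem_univ t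
      rcases hu with h | h
      · exact absurd h h1
      · exact h
  have hI1c' : ∀ i < P.n, (∀ t ∈ Set.Ico (P.x i) (P.x (i+1)), t ∈ I1) ∨
      (∀ t ∈ Set.Ico (P.x i) (P.x (i+1)), t ∉ I1) := hI1c
  have hI2c : ∀ i < P.n, (∀ t ∈ Set.Ico (P.x i) (P.x (i+1)), t ∈ I2) ∨
      (∀ t ∈ Set.Ico (P.x i) (P.x (i+1)), t ∉ I2) := by
    intro i hi
    rcases hI1c' i hi with h | h
    · right; intro t ht h2
      exact ((hI2 t).1 h2) (h t ht)
    · left; intro t ht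
      exact (hI2 t).2 (h t ht)
  have hlam0nn : 0 ≤ lam0 := by
    rw [hlam0]
    exact intervalIntegral.integral_nonneg zero_le_one (fun u _ => hAnn u)
  have key : ∀ lam ∈ Set.Icc (0:ℝ) lam0,
      IntervalIntegrable (Set.indicator I1 (F lam)) volume 0 1 ∧
      IntervalIntegrable (Set.indicator I2 (F lam)) volume 0 1 ∧
      lhat1 lam + lhat2 lam = lam := by
    intro lam hlam
    have hL : lam ≤ ∫ s in (0:ℝ)..1, A s := by rw [hL0]; exact hlam.2
    obtain ⟨ts, hts⟩ := P.piece_desc_fun F hF1 hF2 hL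
    have hts1 : ∀ i < P.n, ts i ∈ Set.Icc (P.x i) (P.x (i+1)) := fun i hi => (hts i hi).1
    have hts2 : ∀ i < P.n, ∀ t ∈ Set.Ioo (P.x i) (ts i), F lam t = P.c i :=
      fun i hi => (hts i hi).2.1
    have hts3 : ∀ i < P.n, ∀ t ∈ Set.Ioo (ts i) (P.x (i+1)), F lam t = lam :=
      fun i hi => (hts i hi).2.2.1
    have hts4 : ∀ i < P.n, P.c i * (ts i - P.x i) + lam * (P.x (i+1) - ts i)
        = lam * (P.x (i+1) - P.x i) + (HLaux.Bf A lam (P.x (i+1)) - HLaux.Bf A lam (P.x i))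
          - (P.Cg lam (i+1) - P.Cg lam i) := fun i hi => (hts i hi).2.2.2
    obtain ⟨hint1, hval1⟩ := P.global_int I1 hI1c' F hF1 hF2 hL ts hts1 hts2 hts3
    obtain ⟨hint2, hval2⟩ := P.global_int I2 hI2c F hF1 hF2 hL ts hts1 hts2 hts3
    refine ⟨hint1, hint2, ?_⟩
    rw [hlh1, hlh2, hval1, hval2, ← Finset.sum_add_distrib]
    have hone : ∀ i ∈ Finset.range P.n,
        Set.indicator I1 (fun _ => (1:ℝ)) (P.x i)
            * (P.c i * (ts i - P.x i) + lam * (P.x (i+1) - ts i))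
          + Set.indicator I2 (fun _ => (1:ℝ)) (P.x i)
            * (P.c i * (ts i - P.x i) + lam * (P.x (i+1) - ts i))
        = P.c i * (ts i - P.x i) + lam * (P.x (i+1) - ts i) := by
      intro i _
      by_cases hm : P.x i ∈ I1
      · rw [Set.indicator_of_mem hm, Set.indicator_of_notMem (fun h2 => ((hI2 _).1 h2) hm)]
        ring
      · rw [Set.indicator_of_notMem hm, Set.indicator_of_mem ((hI2 _).2 hm)]
        ring
    rw [Finset.sum_congr rfl hone]
    exact P.sum_val F hF1 hF2 hL ts hts4
  have hmono1 : MonotoneOn lhat1 (Set.Icc 0 lam0) := by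
    intro a ha b hb hab
    rw [hlh1 a, hlh1 b]
    refine intervalIntegral.integral_mono_ae_restrict zero_le_one (key a ha).1 (key b hb).1 ?_
    rw [Filter.EventuallyLE, ae_restrict_iff' measurableSet_Icc]
    exact P.F_mono_ae F hF1 hF2 hab I1
  have hmono2 : MonotoneOn lhat2 (Set.Icc 0 lam0) := by
    intro a ha b hb hab
    rw [hlh2 a, hlh2 b]
    refine intervalIntegral.integral_mono_ae_restrict zero_le_one (key a ha).2.1 (key b hb).2.1 ?_
    rw [Filter.EventuallyLE, ae_restrict_iff' measurableSet_Icc]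
    exact P.F_mono_ae F hF1 hF2 hab I2
  have htopae : ∀ᵐ t ∂(volume : Measure ℝ), t ∈ Set.Icc (0:ℝ) 1 → F lam0 t = A t := by
    have hae := P.F_top_ae F hF1 hF2
    rwa [hL0] at hae
  have htop : ∀ (I : Set ℝ) (g : ℝ → ℝ), (∀ lam, g lam = ∫ t in (0:ℝ)..1, Set.indicator I (F lam) t) →
      g lam0 = ∫ t in (0:ℝ)..1, Set.indicator I A t := by
    intro I g hg
    rw [hg]
    apply intervalIntegral.integral_congr_ae
    filter_upwards [htopae] with t h htI
    have htIcc : t ∈ Set.Icc (0:ℝ) 1 := by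
      rw [Set.uIoc_of_le zero_le_one] at htI
      exact ⟨htI.1.le, htI.2⟩
    by_cases hm : t ∈ I
    · rw [Set.indicator_of_mem hm, Set.indicator_of_mem hm, h htIcc]
    · rw [Set.indicator_of_notMem hm, Set.indicator_of_notMem hm]
  have htop1 : lhat1 lam0 = lam1 := by rw [htop I1 lhat1 hlh1, hlam1]
  have htop2 : lhat2 lam0 = lam2 := by rw [htop I2 lhat2 hlh2, hlam2]
  have hnn : ∀ (I : Set ℝ) (g : ℝ → ℝ), (∀ lam, g lam = ∫ t in (0:ℝ)..1, Set.indicator I (F lam) t) →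
      ∀ lam, 0 ≤ lam → 0 ≤ g lam := by
    intro I g hg lam h0
    rw [hg]
    exact intervalIntegral.integral_nonneg zero_le_one
      (fun u _ => Set.indicator_nonneg (fun a _ => P.F_nonneg F hF1 hF2 h0 a) u)
  have hlam0mem : lam0 ∈ Set.Icc (0:ℝ) lam0 := ⟨hlam0nn, le_refl _⟩
  have hsum : ∀ lam ∈ Set.Icc (0:ℝ) lam0, lhat1 lam + lhat2 lam = lam :=
    fun lam h => (key lam h).2.2
  have hlip : ∀ f g : ℝ → ℝ, MonotoneOn f (Set.Icc 0 lam0) → MonotoneOn g (Set.Icc 0 lam0) →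
      (∀ lam ∈ Set.Icc (0:ℝ) lam0, f lam + g lam = lam) →
      LipschitzOnWith 1 f (Set.Icc 0 lam0) := by
    intro f g hf hg hfg
    rw [lipschitzOnWith_iff_dist_le_mul]
    intro a ha b hb
    rw [Real.dist_eq, Real.dist_eq, NNReal.coe_one, one_mul]
    rcases le_total a b with h | h
    · have h1 := hf ha hb h
      have h2 := hg ha hb h
      have s1 := hfg a ha
      have s2 := hfg b hb
      have hab' : |a - b| = b - a := by
        rw [abs_of_nonpos (by linarith)]; ring
      rw [abs_le, hab']
      constructor <;> linarith
    · have h1 := hf hb ha h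
      have h2 := hg hb ha h
      have s1 := hfg a ha
      have s2 := hfg b hb
      have hab' : |a - b| = a - b := abs_of_nonneg (by linarith)
      rw [abs_le, hab']
      constructor <;> linarith
  have hlip1 := hlip lhat1 lhat2 hmono1 hmono2 hsum
  have hlip2 := hlip lhat2 lhat1 hmono2 hmono1
    (fun lam h => by rw [add_comm]; exact hsum lam h)
  refine ⟨hlip1.continuousOn, hlip2.continuousOn, hmono1, hmono2, hsum, ?_, htop1, htop2⟩
  intro lam hlam
  refine ⟨hnn I1 lhat1 hlh1 lam hlam.1, ?_, hnn I2 lhat2 hlh2 lam hlam.1, ?_⟩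
  · rw [← htop1]
    exact hmono1 hlam hlam0mem hlam.2
  · rw [← htop2]
    exact hmono2 hlam hlam0mem hlam.2
end

section
/- Let f : [a,b] → ℝ be C², strictly increasing, uniformly concave (f'' ≤ −δ < 0), and ξ(s,y) := max_{p∈[a,b]}(−py + sf(p)). Then ξ is globally Lipschitz continuous on [0,∞)×[0,∞), and for each ε > 0 the map (s,y) ↦ p̂_{s,y} (the unique maximizer) is Lipschitz continuous on [0,∞) × [ε,∞); in particular ξ has Lipschitz gradient (is C^{1,1}) on [0,∞) × [ε,∞). -/
open Set

/-- Midpoint strong concavity from second derivative bound. -/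
lemma midpoint_strong_concave (a b δ : ℝ) (hab : a < b) (hδ : 0 < δ) (f : ℝ → ℝ)
    (hf : ContDiffOn ℝ 2 f (Set.Icc a b))
    (hconc : ∀ p ∈ Set.Icc a b, iteratedDerivWithin 2 f (Set.Icc a b) p ≤ -δ) :
    ∀ p ∈ Set.Icc a b, ∀ q ∈ Set.Icc a b,
      f p + f q + δ / 4 * (p - q) ^ 2 ≤ 2 * f ((p + q) / 2) := by
  have hsub : Set.Ioo a b ⊆ Set.Icc a b := Set.Ioo_subset_Icc_self
  have hdiff1 : DifferentiableOn ℝ f (Set.Icc a b) :=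
    hf.differentiableOn (by norm_num)
  have hfx : ∀ x ∈ Set.Ioo a b, DifferentiableAt ℝ f x := fun x hx =>
    (hdiff1 x (hsub hx)).differentiableAt (Icc_mem_nhds hx.1 hx.2)
  have h2 : ContDiffOn ℝ 1 (deriv f) (Set.Ioo a b) :=
    (hf.mono hsub).deriv_of_isOpen isOpen_Ioo (by norm_num)
  have hdd : ∀ x ∈ Set.Ioo a b, DifferentiableAt ℝ (deriv f) x := fun x hx =>
    ((h2.differentiableOn (by norm_num)) x hx).differentiableAt (isOpen_Ioo.mem_nhds hx)
  have hid : ∀ x ∈ Set.Ioo a b,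
      iteratedDerivWithin 2 f (Set.Icc a b) x = deriv (deriv f) x := by
    intro x hx
    have hu : UniqueDiffOn ℝ (Set.Icc a b) := uniqueDiffOn_Icc hab
    have hx' : x ∈ Set.Icc a b := hsub hx
    have e1 : iteratedDerivWithin 2 f (Set.Icc a b) x
        = derivWithin (iteratedDerivWithin 1 f (Set.Icc a b)) (Set.Icc a b) x :=
      congrFun iteratedDerivWithin_succ x
    have e2 : derivWithin (iteratedDerivWithin 1 f (Set.Icc a b)) (Set.Icc a b) x
        = derivWithin (derivWithin f (Set.Icc a b)) (Set.Icc a b) x := by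
      apply derivWithin_congr
      · intro y hy; exact congrFun iteratedDerivWithin_one y
      · exact congrFun iteratedDerivWithin_one x
    have e3 : derivWithin (derivWithin f (Set.Icc a b)) (Set.Icc a b) x
        = deriv (derivWithin f (Set.Icc a b)) x :=
      derivWithin_of_mem_nhds (Icc_mem_nhds hx.1 hx.2)
    have e4 : deriv (derivWithin f (Set.Icc a b)) x = deriv (deriv f) x := by
      apply Filter.EventuallyEq.deriv_eq
      filter_upwards [isOpen_Ioo.mem_nhds hx] with y hy
      exact derivWithin_of_mem_nhds (Icc_mem_nhds hy.1 hy.2)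
    rw [e1, e2, e3, e4]
  have hgconc : ConcaveOn ℝ (Set.Icc a b) (fun x => f x + δ / 2 * x ^ 2) := by
    apply concaveOn_of_hasDerivWithinAt2_nonpos (f' := fun x => deriv f x + δ * x)
      (f'' := fun x => deriv (deriv f) x + δ) (convex_Icc a b)
    · exact hf.continuousOn.add (Continuous.continuousOn (by continuity))
    · intro x hx
      rw [interior_Icc] at hx
      have h1 : HasDerivAt (fun y : ℝ => δ / 2 * y ^ 2) (δ * x) x := by
        have : HasDerivAt (fun y : ℝ => δ / 2 * y ^ 2) (δ / 2 * ((2:ℕ) * x ^ (2 - 1))) x :=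
          (hasDerivAt_pow 2 x).const_mul (δ / 2)
        convert this using 1
        ring
      exact (((hfx x hx).hasDerivAt.add h1)).hasDerivWithinAt
    · intro x hx
      rw [interior_Icc] at hx
      have h1 : HasDerivAt (fun y : ℝ => δ * y) δ x := by
        simpa using (hasDerivAt_id x).const_mul δ
      exact (((hdd x hx).hasDerivAt.add h1)).hasDerivWithinAt
    · intro x hx
      rw [interior_Icc] at hx
      have := hconc x (hsub hx)
      rw [hid x hx] at this
      linarith
  intro p hp q hq
  have h := hgconc.2 hp hq (by norm_num : (0:ℝ) ≤ 1/2) (by norm_num : (0:ℝ) ≤ 1/2)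
    (by norm_num)
  simp only [smul_eq_mul] at h
  have hm : (1/2 : ℝ) * p + (1/2 : ℝ) * q = (p + q) / 2 := by ring
  rw [hm] at h
  nlinarith [h]

set_option maxHeartbeats 1600000 in
/-- Global Lipschitz continuity of `ξ` on `[0,∞)²`, Lipschitz continuity of the maximizer
map `(s,y) ↦ p̂_{s,y}` on `[0,∞) × [ε,∞)`, and the resulting `C^{1,1}` bound for `ξ` there. -/
theorem xi_lipschitz_properties (a b δ : ℝ) (hab : a < b) (hδ : 0 < δ) (f : ℝ → ℝ)
    (hf : ContDiffOn ℝ 2 f (Set.Icc a b))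
    (hconc : ∀ p ∈ Set.Icc a b, iteratedDerivWithin 2 f (Set.Icc a b) p ≤ -δ)
    (hmono : StrictMonoOn f (Set.Icc a b))
    (ξ : ℝ → ℝ → ℝ)
    (hξ : ∀ s y, ξ s y = sSup ((fun p => -p * y + s * f p) '' Set.Icc a b))
    (phat : ℝ × ℝ → ℝ)
    (hphat : ∀ s y : ℝ, 0 ≤ s → 0 < y →
      phat (s, y) ∈ Set.Icc a b ∧
      ∀ p ∈ Set.Icc a b, -p * y + s * f p ≤ -(phat (s, y)) * y + s * f (phat (s, y))) :
    (∃ K : NNReal, LipschitzOnWith K (fun q : ℝ × ℝ => ξ q.1 q.2)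
      (Set.Ici 0 ×ˢ Set.Ici 0)) ∧
    (∀ ε : ℝ, 0 < ε →
      (∃ K : NNReal, LipschitzOnWith K phat (Set.Ici 0 ×ˢ Set.Ici ε)) ∧
      (∃ K : NNReal, LipschitzOnWith K
        (fun q : ℝ × ℝ => ((f (phat q), -(phat q)) : ℝ × ℝ)) (Set.Ici 0 ×ˢ Set.Ici ε))) := by
  have haI : a ∈ Set.Icc a b := Set.left_mem_Icc.2 hab.le
  -- Lipschitz constant for f on [a,b]
  obtain ⟨L, hL0, hLip⟩ : ∃ L : ℝ, 0 ≤ L ∧ ∀ p ∈ Set.Icc a b, ∀ q ∈ Set.Icc a b,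
      |f p - f q| ≤ L * |p - q| := by
    have hcont : ContinuousOn (derivWithin f (Set.Icc a b)) (Set.Icc a b) :=
      (hf.derivWithin (uniqueDiffOn_Icc hab) (m := 1) (by norm_num)).continuousOn
    obtain ⟨C, hC⟩ := isCompact_Icc.exists_bound_of_continuousOn hcont
    refine ⟨max C 0, le_max_right _ _, fun p hp q hq => ?_⟩
    have h := Convex.norm_image_sub_le_of_norm_derivWithin_le (C := max C 0)
      (hf.differentiableOn (by norm_num))
      (fun x hx => le_trans (hC x hx) (le_max_left _ _)) (convex_Icc a b) hq hp
    simpa [Real.norm_eq_abs] using h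
  have hmid := midpoint_strong_concave a b δ hab hδ f hf hconc
  -- bound on |f| and |p|
  set M : ℝ := |f a| + L * (b - a) with hMdef
  have hM0 : 0 ≤ M := add_nonneg (abs_nonneg _) (mul_nonneg hL0 (by linarith))
  have hfM : ∀ p ∈ Set.Icc a b, |f p| ≤ M := by
    intro p hp
    have h1 := hLip p hp a haI
    have h2 : |p - a| ≤ b - a := by
      rw [abs_of_nonneg (by linarith [hp.1])]; linarith [hp.2]
    calc |f p| = |(f p - f a) + f a| := by ring_nf
      _ ≤ |f p - f a| + |f a| := abs_add_le _ _
      _ ≤ L * (b - a) + |f a| := by nlinarith [mul_le_mul_of_nonneg_left h2 hL0]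
      _ = M := by rw [hMdef]; ring
  set B : ℝ := max |a| |b| with hBdef
  have hB0 : 0 ≤ B := le_trans (abs_nonneg a) (le_max_left _ _)
  have hB : ∀ p ∈ Set.Icc a b, |p| ≤ B := by
    intro p hp
    rw [abs_le]
    constructor
    · linarith [hp.1, neg_abs_le a, le_max_left |a| |b|]
    · linarith [hp.2, le_abs_self b, le_max_right |a| |b|]
  -- Part 1 : Lipschitzness of ξ
  have hcontg : ∀ s y : ℝ, ContinuousOn (fun p => -p * y + s * f p) (Set.Icc a b) :=
    fun s y => (continuousOn_id.neg.mul continuousOn_const).add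
      (continuousOn_const.mul hf.continuousOn)
  have hbdd : ∀ s y : ℝ, BddAbove ((fun p => -p * y + s * f p) '' Set.Icc a b) :=
    fun s y => (isCompact_Icc.image_of_continuousOn (hcontg s y)).bddAbove
  have hne : ∀ s y : ℝ, ((fun p => -p * y + s * f p) '' Set.Icc a b).Nonempty :=
    fun s y => ⟨_, Set.mem_image_of_mem _ haI⟩
  have hxi_le : ∀ s₁ y₁ s₂ y₂ : ℝ, ξ s₁ y₁ ≤ ξ s₂ y₂ + B * |y₁ - y₂| + M * |s₁ - s₂| := by
    intro s₁ y₁ s₂ y₂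
    rw [hξ s₁ y₁]
    apply csSup_le (hne s₁ y₁)
    rintro x ⟨p, hp, rfl⟩
    dsimp only
    have h1 : -p * y₂ + s₂ * f p ≤ ξ s₂ y₂ := by
      rw [hξ s₂ y₂]; exact le_csSup (hbdd s₂ y₂) (Set.mem_image_of_mem _ hp)
    have h3 : -p * (y₁ - y₂) ≤ B * |y₁ - y₂| := by
      calc -p * (y₁ - y₂) ≤ |(-p) * (y₁ - y₂)| := le_abs_self _
        _ = |p| * |y₁ - y₂| := by rw [abs_mul, abs_neg]
        _ ≤ B * |y₁ - y₂| := mul_le_mul_of_nonneg_right (hB p hp) (abs_nonneg _)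
    have h4 : (s₁ - s₂) * f p ≤ M * |s₁ - s₂| := by
      calc (s₁ - s₂) * f p ≤ |(s₁ - s₂) * f p| := le_abs_self _
        _ = |s₁ - s₂| * |f p| := abs_mul _ _
        _ ≤ |s₁ - s₂| * M := mul_le_mul_of_nonneg_left (hfM p hp) (abs_nonneg _)
        _ = M * |s₁ - s₂| := mul_comm _ _
    linarith [h1, h3, h4]
  constructor
  · refine ⟨Real.toNNReal (B + M), ?_⟩
    rw [lipschitzOnWith_iff_dist_le_mul]
    rintro ⟨s₁, y₁⟩ ⟨hs₁, hy₁⟩ ⟨s₂, y₂⟩ ⟨hs₂, hy₂⟩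
    have hcoe : ((Real.toNNReal (B + M) : NNReal) : ℝ) = B + M :=
      Real.coe_toNNReal _ (by positivity)
    rw [hcoe, Real.dist_eq, Prod.dist_eq]
    simp only [Real.dist_eq]
    have hm1 : |s₁ - s₂| ≤ max |s₁ - s₂| |y₁ - y₂| := le_max_left _ _
    have hm2 : |y₁ - y₂| ≤ max |s₁ - s₂| |y₁ - y₂| := le_max_right _ _
    have e1 := hxi_le s₁ y₁ s₂ y₂
    have e2 := hxi_le s₂ y₂ s₁ y₁
    rw [abs_le]
    constructor
    · rw [abs_sub_comm s₂ s₁, abs_sub_comm y₂ y₁] at e2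
      nlinarith [e2, hm1, hm2]
    · nlinarith [e1, hm1, hm2]
  -- Part 2
  intro ε hε
  -- boundary lemma
  have hbdry : ∀ s y : ℝ, 0 ≤ s → 0 < y → s * L < y → phat (s, y) = a := by
    intro s y hs hy hsL
    obtain ⟨hpI, hmax⟩ := hphat s y hs hy
    by_contra hnea
    have hap : a < phat (s, y) := lt_of_le_of_ne hpI.1 (Ne.symm hnea)
    have h1 := hmax a haI
    have h2 : |f (phat (s, y)) - f a| ≤ L * |phat (s, y) - a| := hLip _ hpI a haI
    have h2' : f (phat (s, y)) - f a ≤ L * (phat (s, y) - a) := by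
      rw [abs_of_pos (by linarith : (0:ℝ) < phat (s, y) - a)] at h2
      linarith [le_abs_self (f (phat (s, y)) - f a)]
    have h4 : s * (f (phat (s, y)) - f a) ≤ s * (L * (phat (s, y) - a)) :=
      mul_le_mul_of_nonneg_left h2' hs
    nlinarith [mul_lt_mul_of_pos_right hsL (by linarith : (0:ℝ) < phat (s, y) - a)]
  -- key strong-concavity estimate
  have hkey : ∀ s₁ y₁ s₂ y₂ : ℝ, 0 ≤ s₁ → 0 < y₁ → 0 ≤ s₂ → 0 < y₂ →
      (s₁ + s₂) * (δ / 4) * (phat (s₁, y₁) - phat (s₂, y₂)) ^ 2 ≤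
        (|y₁ - y₂| + L * |s₁ - s₂|) * |phat (s₁, y₁) - phat (s₂, y₂)| := by
    intro s₁ y₁ s₂ y₂ hs₁ hy₁ hs₂ hy₂
    obtain ⟨hp₁, hmax₁⟩ := hphat s₁ y₁ hs₁ hy₁
    obtain ⟨hp₂, hmax₂⟩ := hphat s₂ y₂ hs₂ hy₂
    set p₁ := phat (s₁, y₁)
    set p₂ := phat (s₂, y₂)
    have hmI : (p₁ + p₂) / 2 ∈ Set.Icc a b :=
      ⟨by linarith [hp₁.1, hp₂.1], by linarith [hp₁.2, hp₂.2]⟩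
    have g1 := hmax₁ _ hmI
    have g2 := hmax₂ _ hmI
    have hm := hmid p₁ hp₁ p₂ hp₂
    have e1 := mul_le_mul_of_nonneg_left hm hs₁
    have e2 := mul_le_mul_of_nonneg_left hm hs₂
    have h1 : (p₂ - p₁) * (y₁ - y₂) ≤ |y₁ - y₂| * |p₁ - p₂| := by
      calc (p₂ - p₁) * (y₁ - y₂) ≤ |(p₂ - p₁) * (y₁ - y₂)| := le_abs_self _
        _ = |y₁ - y₂| * |p₁ - p₂| := by
            rw [abs_mul, abs_sub_comm p₂ p₁, mul_comm]
    have h2 : (s₁ - s₂) * (f p₁ - f p₂) ≤ L * |s₁ - s₂| * |p₁ - p₂| := by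
      calc (s₁ - s₂) * (f p₁ - f p₂) ≤ |s₁ - s₂| * |f p₁ - f p₂| := by
            rw [← abs_mul]; exact le_abs_self _
        _ ≤ |s₁ - s₂| * (L * |p₁ - p₂|) :=
            mul_le_mul_of_nonneg_left (hLip p₁ hp₁ p₂ hp₂) (abs_nonneg _)
        _ = L * |s₁ - s₂| * |p₁ - p₂| := by ring
    linarith [g1, g2, e1, e2, h1, h2]
  -- pointwise Lipschitz estimate for phat
  have hε' : (0:ℝ) < L + 1 := by linarith
  set s₀ : ℝ := ε / (2 * (L + 1)) with hs₀def
  have hs₀ : 0 < s₀ := div_pos hε (by positivity)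
  set K₀ : ℝ := (L + 1) / (s₀ * (δ / 4)) with hK₀def
  have hK₀ : 0 ≤ K₀ := by positivity
  have hPest : ∀ s₁ y₁ s₂ y₂ : ℝ, 0 ≤ s₁ → ε ≤ y₁ → 0 ≤ s₂ → ε ≤ y₂ →
      |phat (s₁, y₁) - phat (s₂, y₂)| ≤ K₀ * (|s₁ - s₂| + |y₁ - y₂|) := by
    intro s₁ y₁ s₂ y₂ hs₁ hy₁ hs₂ hy₂
    have hy₁' : 0 < y₁ := lt_of_lt_of_le hε hy₁
    have hy₂' : 0 < y₂ := lt_of_lt_of_le hε hy₂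
    have hsmall : ∀ s y : ℝ, 0 ≤ s → s ≤ s₀ → ε ≤ y → phat (s, y) = a := by
      intro s y hs hss hyy
      apply hbdry s y hs (lt_of_lt_of_le hε hyy)
      have h1 : s * L ≤ s₀ * L := mul_le_mul_of_nonneg_right hss hL0
      have h2 : s₀ * L < ε := by
        rw [hs₀def, div_mul_eq_mul_div, div_lt_iff₀ (by positivity)]
        nlinarith
      linarith
    by_cases hcase : s₁ + s₂ ≤ s₀
    · rw [hsmall s₁ y₁ hs₁ (by linarith) hy₁, hsmall s₂ y₂ hs₂ (by linarith) hy₂]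
      simp only [sub_self, abs_zero]
      positivity
    · push_neg at hcase
      have hk := hkey s₁ y₁ s₂ y₂ hs₁ hy₁' hs₂ hy₂'
      set Δ : ℝ := |phat (s₁, y₁) - phat (s₂, y₂)| with hΔdef
      have hΔ : 0 ≤ Δ := abs_nonneg _
      have hΔsq : Δ ^ 2 = (phat (s₁, y₁) - phat (s₂, y₂)) ^ 2 := sq_abs _
      have h5 : s₀ * (δ / 4) * Δ ^ 2 ≤ (|y₁ - y₂| + L * |s₁ - s₂|) * Δ := by
        rw [hΔsq]
        calc s₀ * (δ / 4) * (phat (s₁, y₁) - phat (s₂, y₂)) ^ 2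
            ≤ (s₁ + s₂) * (δ / 4) * (phat (s₁, y₁) - phat (s₂, y₂)) ^ 2 := by
              have hnn : 0 ≤ δ / 4 * (phat (s₁, y₁) - phat (s₂, y₂)) ^ 2 :=
                mul_nonneg (by positivity) (sq_nonneg _)
              linarith [mul_le_mul_of_nonneg_right hcase.le hnn]
          _ ≤ _ := hk
      rcases eq_or_lt_of_le hΔ with h0 | h0
      · rw [← h0]; positivity
      · have h6 : s₀ * (δ / 4) * Δ ≤ |y₁ - y₂| + L * |s₁ - s₂| := by
          apply le_of_mul_le_mul_right _ h0
          calc s₀ * (δ / 4) * Δ * Δ = s₀ * (δ / 4) * Δ ^ 2 := by ring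
            _ ≤ (|y₁ - y₂| + L * |s₁ - s₂|) * Δ := h5
        rw [hK₀def, div_mul_eq_mul_div, le_div_iff₀ (by positivity)]
        nlinarith [h6, abs_nonneg (s₁ - s₂), abs_nonneg (y₁ - y₂),
          mul_nonneg hL0 (abs_nonneg (y₁ - y₂)), mul_nonneg hL0 (abs_nonneg (s₁ - s₂))]
  -- convert to LipschitzOnWith
  have hplip : ∀ q₁ ∈ Set.Ici (0:ℝ) ×ˢ Set.Ici ε, ∀ q₂ ∈ Set.Ici (0:ℝ) ×ˢ Set.Ici ε,
      |phat q₁ - phat q₂| ≤ 2 * K₀ * dist q₁ q₂ := by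
    rintro ⟨s₁, y₁⟩ ⟨hs₁, hy₁⟩ ⟨s₂, y₂⟩ ⟨hs₂, hy₂⟩
    have h := hPest s₁ y₁ s₂ y₂ hs₁ hy₁ hs₂ hy₂
    rw [Prod.dist_eq]
    simp only [Real.dist_eq]
    have hm1 : |s₁ - s₂| ≤ max |s₁ - s₂| |y₁ - y₂| := le_max_left _ _
    have hm2 : |y₁ - y₂| ≤ max |s₁ - s₂| |y₁ - y₂| := le_max_right _ _
    nlinarith [h, hm1, hm2]
  constructor
  · refine ⟨Real.toNNReal (2 * K₀), ?_⟩
    rw [lipschitzOnWith_iff_dist_le_mul]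
    intro q₁ hq₁ q₂ hq₂
    have hcoe : ((Real.toNNReal (2 * K₀) : NNReal) : ℝ) = 2 * K₀ :=
      Real.coe_toNNReal _ (by positivity)
    rw [hcoe, Real.dist_eq]
    exact hplip q₁ hq₁ q₂ hq₂
  · refine ⟨Real.toNNReal ((L + 1) * (2 * K₀)), ?_⟩
    rw [lipschitzOnWith_iff_dist_le_mul]
    intro q₁ hq₁ q₂ hq₂
    have hcoe : ((Real.toNNReal ((L + 1) * (2 * K₀)) : NNReal) : ℝ) = (L + 1) * (2 * K₀) :=
      Real.coe_toNNReal _ (by positivity)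
    rw [hcoe]
    have hp₁I : phat q₁ ∈ Set.Icc a b := by
      obtain ⟨s₁, y₁⟩ := q₁
      exact (hphat s₁ y₁ hq₁.1 (lt_of_lt_of_le hε hq₁.2)).1
    have hp₂I : phat q₂ ∈ Set.Icc a b := by
      obtain ⟨s₂, y₂⟩ := q₂
      exact (hphat s₂ y₂ hq₂.1 (lt_of_lt_of_le hε hq₂.2)).1
    have hpl := hplip q₁ hq₁ q₂ hq₂
    have hd0 : 0 ≤ dist q₁ q₂ := dist_nonneg
    rw [Prod.dist_eq]
    simp only [Real.dist_eq]
    apply max_le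
    · calc |f (phat q₁) - f (phat q₂)| ≤ L * |phat q₁ - phat q₂| :=
            hLip _ hp₁I _ hp₂I
        _ ≤ L * (2 * K₀ * dist q₁ q₂) := mul_le_mul_of_nonneg_left hpl hL0
        _ ≤ (L + 1) * (2 * K₀) * dist q₁ q₂ := by nlinarith [mul_nonneg hK₀ hd0]
    · calc |-phat q₁ - -phat q₂| = |phat q₁ - phat q₂| := by
            rw [← abs_neg]; ring_nf
        _ ≤ 2 * K₀ * dist q₁ q₂ := hpl
        _ ≤ (L + 1) * (2 * K₀) * dist q₁ q₂ := by nlinarith [mul_nonneg hK₀ hd0]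
end

section
/- (Envelope theorem, directional derivative.) Let Ω ⊆ ℝⁿ be open, Y a compact topological space, and φ : Ω × Y → ℝ continuous, such that x ↦ φ(x,y) is differentiable for each y with jointly continuous derivative ∂ₓφ. Define h(x) := max_{y ∈ Y} φ(x,y). Then for every x₀ ∈ Ω and every direction v ∈ ℝⁿ, the one-sided directional derivative D⁺_v h(x₀) := lim_{ε→0⁺} (h(x₀+εv) − h(x₀))/ε exists and equals max over y₀ ∈ Argmax φ(x₀,·) of v · ∂ₓφ(x₀, y₀). -/
open Filter
open Set

/-- Envelope theorem, directional derivatives: for `h(x) = max_{y∈Y} φ(x,y)`, the one-sided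
directional derivative `D⁺_v h(x₀)` exists and equals the maximum of `∂ₓφ(x₀,y₀) v` over
the maximizers `y₀`. -/
theorem envelope_directional_derivative
    (n : ℕ) (Y : Type*) [TopologicalSpace Y] [CompactSpace Y] [Nonempty Y]
    (Ω : Set (EuclideanSpace ℝ (Fin n))) (hΩ : IsOpen Ω)
    (φ : EuclideanSpace ℝ (Fin n) → Y → ℝ)
    (hφcont : ContinuousOn (fun q : EuclideanSpace ℝ (Fin n) × Y => φ q.1 q.2)
      (Ω ×ˢ Set.univ))
    (D : EuclideanSpace ℝ (Fin n) → Y → (EuclideanSpace ℝ (Fin n) →L[ℝ] ℝ))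
    (hD : ∀ y : Y, ∀ x ∈ Ω, HasFDerivAt (fun x' => φ x' y) (D x y) x)
    (hDcont : ContinuousOn (fun q : EuclideanSpace ℝ (Fin n) × Y => D q.1 q.2)
      (Ω ×ˢ Set.univ))
    (h : EuclideanSpace ℝ (Fin n) → ℝ)
    (hh : ∀ x, h x = sSup (Set.range fun y => φ x y)) :
    ∀ x₀ ∈ Ω, ∀ v : EuclideanSpace ℝ (Fin n), ∃ L : ℝ,
      Tendsto (fun ε : ℝ => (h (x₀ + ε • v) - h x₀) / ε)
        (nhdsWithin 0 (Set.Ioi 0)) (nhds L) ∧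
      IsGreatest ((fun y₀ => D x₀ y₀ v) '' {y₀ | φ x₀ y₀ = h x₀}) L := by
  have hΩY : IsOpen (Ω ×ˢ (Set.univ : Set Y)) := hΩ.prod isOpen_univ
  -- slice continuity of φ
  have hφc : ∀ x ∈ Ω, Continuous fun y => φ x y := by
    intro x hx
    rw [continuous_iff_continuousAt]
    intro y
    have h1 : ContinuousAt (fun q : _ × Y => φ q.1 q.2) (x, y) :=
      hφcont.continuousAt (hΩY.mem_nhds ⟨hx, trivial⟩)
    exact h1.comp ((continuous_const.prodMk continuous_id).continuousAt)
  -- maximizer existence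
  have hmax : ∀ x ∈ Ω, ∃ y : Y, IsGreatest (Set.range fun y' => φ x y') (φ x y) := by
    intro x hx
    obtain ⟨y, -, hy⟩ := isCompact_univ.exists_isMaxOn univ_nonempty (hφc x hx).continuousOn
    exact ⟨y, ⟨mem_range_self y, by rintro _ ⟨y', rfl⟩; exact hy (mem_univ y')⟩⟩
  have hattain : ∀ x ∈ Ω, ∃ y : Y, φ x y = h x ∧ ∀ y', φ x y' ≤ φ x y := by
    intro x hx
    obtain ⟨y, hy⟩ := hmax x hx
    exact ⟨y, by rw [hh]; exact (hy.csSup_eq).symm,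
      fun y' => hy.2 (mem_range_self y')⟩
  have hle : ∀ x ∈ Ω, ∀ y, φ x y ≤ h x := by
    intro x hx y
    obtain ⟨ym, hym, hge⟩ := hattain x hx
    exact (hge y).trans hym.le
  intro x₀ hx₀ v
  -- the argmax set
  set M : Set Y := {y₀ | φ x₀ y₀ = h x₀} with hM
  have hMclosed : IsClosed M := isClosed_eq (hφc x₀ hx₀) continuous_const
  have hMcompact : IsCompact M := hMclosed.isCompact
  have hMne : M.Nonempty := by
    obtain ⟨y, hy, -⟩ := hattain x₀ hx₀
    exact ⟨y, hy⟩
  -- the directional derivative as a function of y, continuous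
  have happly : Continuous fun A : EuclideanSpace ℝ (Fin n) →L[ℝ] ℝ => A v :=
    (ContinuousLinearMap.apply ℝ ℝ v).continuous
  have hfc : Continuous fun y => D x₀ y v := by
    rw [continuous_iff_continuousAt]
    intro y
    have h1 : ContinuousAt (fun q : _ × Y => D q.1 q.2) (x₀, y) :=
      hDcont.continuousAt (hΩY.mem_nhds ⟨hx₀, trivial⟩)
    exact happly.continuousAt.comp
      (h1.comp ((continuous_const.prodMk continuous_id).continuousAt))
  obtain ⟨ys, hysM, hysmax⟩ :=
    hMcompact.exists_isMaxOn hMne (hfc.continuousOn : ContinuousOn (fun y => D x₀ y v) M)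
  set L : ℝ := D x₀ ys v with hL
  have hgreat : IsGreatest ((fun y₀ => D x₀ y₀ v) '' M) L :=
    ⟨mem_image_of_mem _ hysM, by rintro _ ⟨y, hy, rfl⟩; exact hysmax hy⟩
  refine ⟨L, ?_, hgreat⟩
  -- derivative along the line
  have hline : ∀ (y : Y) (t : ℝ), x₀ + t • v ∈ Ω →
      HasDerivAt (fun s : ℝ => φ (x₀ + s • v) y) (D (x₀ + t • v) y v) t := by
    intro y t ht
    have hc : HasDerivAt (fun s : ℝ => x₀ + s • v) v t := by
      simpa using ((hasDerivAt_id t).smul_const v).const_add x₀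
    exact (hD y _ ht).comp_hasDerivAt t hc
  -- the curve enters Ω eventually
  have htends : Tendsto (fun ε : ℝ => x₀ + ε • v) (nhdsWithin 0 (Set.Ioi 0)) (nhds x₀) := by
    have : Tendsto (fun ε : ℝ => x₀ + ε • v) (nhds 0) (nhds (x₀ + (0:ℝ) • v)) :=
      (continuous_const.add (continuous_id.smul continuous_const)).tendsto 0
    simpa using this.mono_left nhdsWithin_le_nhds
  have hmemΩ : ∀ᶠ ε : ℝ in nhdsWithin 0 (Set.Ioi 0), x₀ + ε • v ∈ Ω :=
    htends.eventually (hΩ.eventually_mem hx₀)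
  rw [tendsto_order]
  constructor
  · -- lower bound
    intro a ha
    have h0 : x₀ + (0:ℝ) • v = x₀ := by simp
    have hder : HasDerivAt (fun s : ℝ => φ (x₀ + s • v) ys) L 0 := by
      have := hline ys 0 (by rw [h0]; exact hx₀)
      rwa [h0] at this
    have hslope : Tendsto (fun ε : ℝ => (φ (x₀ + ε • v) ys - φ x₀ ys) / ε)
        (nhdsWithin 0 (Set.Ioi 0)) (nhds L) := by
      have := hasDerivAt_iff_tendsto_slope.1 hder
      have h2 := this.mono_left (nhdsWithin_mono 0 (fun x hx => ne_of_gt hx : Set.Ioi (0:ℝ) ⊆ {0}ᶜ))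
      refine h2.congr (fun ε => ?_)
      simp [slope_def_field, h0, div_eq_inv_mul]
    filter_upwards [hslope.eventually (eventually_gt_nhds ha), hmemΩ, self_mem_nhdsWithin]
      with ε hslopeε hΩε (hεpos : 0 < ε)
    refine lt_of_lt_of_le hslopeε ?_
    have h1 : φ (x₀ + ε • v) ys ≤ h (x₀ + ε • v) := hle _ hΩε ys
    have h2 : φ x₀ ys = h x₀ := hysM
    rw [h2]
    gcongr
  · -- upper bound
    intro b hb
    -- Step A: tube lemma for the derivative bound
    have hgcont : ContinuousOn (fun q : _ × Y => D q.1 q.2 v) (Ω ×ˢ Set.univ) :=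
      happly.comp_continuousOn hDcont
    have hWopen : IsOpen ((Ω ×ˢ (Set.univ : Set Y)) ∩
        (fun q : _ × Y => D q.1 q.2 v) ⁻¹' Set.Iio b) :=
      hgcont.isOpen_inter_preimage hΩY isOpen_Iio
    have hsub : ({x₀} ×ˢ M) ⊆ (Ω ×ˢ Set.univ) ∩
        (fun q : _ × Y => D q.1 q.2 v) ⁻¹' Set.Iio b := by
      rintro ⟨x, y⟩ ⟨hx, hy⟩
      simp only [Set.mem_singleton_iff] at hx
      subst hx
      exact ⟨⟨hx₀, trivial⟩, lt_of_le_of_lt (hysmax hy) hb⟩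
    obtain ⟨A, V, hAopen, hVopen, hx₀A, hMV, hAV⟩ :=
      generalized_tube_lemma isCompact_singleton hMcompact hWopen hsub
    have hx₀A' : x₀ ∈ A := hx₀A rfl
    obtain ⟨r, hrpos, hball⟩ := Metric.isOpen_iff.1 hAopen x₀ hx₀A'
    -- Step B: eventually all maximizers lie in V
    have hKcomp : IsCompact Vᶜ := hVopen.isClosed_compl.isCompact
    have hKbound : ∀ᶠ ε : ℝ in nhdsWithin 0 (Set.Ioi 0),
        ∀ y ∈ Vᶜ, φ (x₀ + ε • v) y < h (x₀ + ε • v) := by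
      rcases Vᶜ.eq_empty_or_nonempty with hKe | hKne
      · refine Filter.Eventually.of_forall (fun ε y hy => ?_)
        rw [hKe] at hy; exact hy.elim
      · obtain ⟨yK, hyK, hyKmax⟩ := hKcomp.exists_isMaxOn hKne (hφc x₀ hx₀).continuousOn
        have hyKlt : φ x₀ yK < h x₀ := by
          refine lt_of_le_of_ne (hle x₀ hx₀ yK) ?_
          intro heq
          exact hyK (hMV heq)
        set c : ℝ := (φ x₀ yK + h x₀) / 2 with hc
        have hclt : φ x₀ yK < c := by rw [hc]; linarith
        have hcth : c < h x₀ := by rw [hc]; linarith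
        have claim1 : ∀ᶠ x in nhds x₀, ∀ y ∈ Vᶜ, φ x y < c := by
          apply hKcomp.eventually_forall_of_forall_eventually
          intro y hy
          have hcont : ContinuousAt (fun q : _ × Y => φ q.1 q.2) (x₀, y) :=
            hφcont.continuousAt (hΩY.mem_nhds ⟨hx₀, trivial⟩)
          exact hcont.eventually_mem (Iio_mem_nhds (lt_of_le_of_lt (hyKmax hy) hclt))
        have claim2 : ∀ᶠ ε : ℝ in nhdsWithin 0 (Set.Ioi 0), ∀ y ∈ Vᶜ, φ (x₀ + ε • v) y < c :=
          htends.eventually claim1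
        have hφys : Tendsto (fun ε : ℝ => φ (x₀ + ε • v) ys)
            (nhdsWithin 0 (Set.Ioi 0)) (nhds (h x₀)) := by
          have hca : ContinuousAt (fun x => φ x ys) x₀ := (hD ys x₀ hx₀).continuousAt
          have h2 := hca.tendsto.comp htends
          rwa [show φ x₀ ys = h x₀ from hysM] at h2
        have claim3 : ∀ᶠ ε : ℝ in nhdsWithin 0 (Set.Ioi 0), c < h (x₀ + ε • v) := by
          filter_upwards [hφys.eventually (eventually_gt_nhds hcth), hmemΩ] with ε h1 h2
          exact lt_of_lt_of_le h1 (hle _ h2 ys)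
        filter_upwards [claim2, claim3] with ε h1 h2 y hy
        exact lt_trans (h1 y hy) h2
    -- Step C: conclude via the mean value theorem
    have hεsmall : ∀ᶠ ε : ℝ in nhdsWithin 0 (Set.Ioi 0), ε ∈ Set.Ioo 0 (r / (‖v‖ + 1)) :=
      Ioo_mem_nhdsGT_of_mem ⟨le_refl 0, by positivity⟩
    filter_upwards [hmemΩ, hKbound, hεsmall] with ε hΩε hKε hεI
    obtain ⟨hεpos, hεlt⟩ := hεI
    rw [lt_div_iff₀ (by positivity)] at hεlt
    have hseg : ∀ t ∈ Set.Icc (0:ℝ) ε, x₀ + t • v ∈ A := by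
      rintro t ⟨ht0, htε⟩
      apply hball
      rw [Metric.mem_ball, dist_eq_norm, add_sub_cancel_left, norm_smul, Real.norm_eq_abs,
        abs_of_nonneg ht0]
      calc t * ‖v‖ ≤ ε * (‖v‖ + 1) := by nlinarith [norm_nonneg v]
        _ < r := hεlt
    obtain ⟨yε, hyεeq, hyεmax⟩ := hattain _ hΩε
    have hyεV : yε ∈ V := by
      by_contra hyV
      exact absurd hyεeq (ne_of_lt (hKε yε hyV))
    have hsegΩ : ∀ t ∈ Set.Icc (0:ℝ) ε, x₀ + t • v ∈ Ω := fun t ht =>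
      (hAV (Set.mk_mem_prod (hseg t ht) hyεV)).1.1
    have hderiv : ∀ t ∈ Set.Ioo (0:ℝ) ε, HasDerivAt (fun s : ℝ => φ (x₀ + s • v) yε)
        (D (x₀ + t • v) yε v) t := fun t ht => hline yε t (hsegΩ t (Set.Ioo_subset_Icc_self ht))
    have hcontIcc : ContinuousOn (fun s : ℝ => φ (x₀ + s • v) yε) (Set.Icc 0 ε) := fun t ht =>
      (hline yε t (hsegΩ t ht)).continuousAt.continuousWithinAt
    obtain ⟨cc, hccIoo, hccslope⟩ := exists_hasDerivAt_eq_slope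
      (fun s : ℝ => φ (x₀ + s • v) yε) (fun t => D (x₀ + t • v) yε v) hεpos hcontIcc hderiv
    have hccA : x₀ + cc • v ∈ A := hseg cc (Set.Ioo_subset_Icc_self hccIoo)
    have hDlt : D (x₀ + cc • v) yε v < b := (hAV (Set.mk_mem_prod hccA hyεV)).2
    have h0 : x₀ + (0:ℝ) • v = x₀ := by simp
    simp only [h0, sub_zero] at hccslope
    have hnum : h (x₀ + ε • v) - h x₀ ≤ φ (x₀ + ε • v) yε - φ x₀ yε := by
      have h3 := hle x₀ hx₀ yε
      linarith [hyεeq.ge, hyεeq.le]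
    calc (h (x₀ + ε • v) - h x₀) / ε ≤ (φ (x₀ + ε • v) yε - φ x₀ yε) / ε := by gcongr
      _ = D (x₀ + cc • v) yε v := hccslope.symm
      _ < b := hDlt
end

section
/- (Envelope theorem, differentiability case.) With Ω ⊆ ℝⁿ open, Y compact, φ : Ω × Y → ℝ continuous, x-differentiable with jointly continuous ∂ₓφ, and h(x) = max_{y∈Y} φ(x,y): if h is differentiable at x₀ ∈ Ω, then ∇h(x₀) = ∂ₓφ(x₀, y₀) for every maximizer y₀ ∈ Argmax φ(x₀,·). Conversely, if Argmax φ(x₀,·) is a singleton {y₀}, then h is differentiable at x₀ and ∇h(x₀) = ∂ₓφ(x₀, y₀). -/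
set_option maxHeartbeats 1000000

open Metric Set Filter Asymptotics

/-- Envelope theorem, differentiability case: if `h = max_y φ(·,y)` is differentiable at `x₀`
then its derivative is `∂ₓφ(x₀,y₀)` for every maximizer `y₀`; conversely if the maximizer
is unique then `h` is differentiable at `x₀` with that derivative. -/
theorem envelope_differentiability
    (n : ℕ) (Y : Type*) [TopologicalSpace Y] [CompactSpace Y] [Nonempty Y]
    (Ω : Set (EuclideanSpace ℝ (Fin n))) (hΩ : IsOpen Ω)
    (φ : EuclideanSpace ℝ (Fin n) → Y → ℝ)
    (hφcont : ContinuousOn (fun q : EuclideanSpace ℝ (Fin n) × Y => φ q.1 q.2)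
      (Ω ×ˢ Set.univ))
    (D : EuclideanSpace ℝ (Fin n) → Y → (EuclideanSpace ℝ (Fin n) →L[ℝ] ℝ))
    (hD : ∀ y : Y, ∀ x ∈ Ω, HasFDerivAt (fun x' => φ x' y) (D x y) x)
    (hDcont : ContinuousOn (fun q : EuclideanSpace ℝ (Fin n) × Y => D q.1 q.2)
      (Ω ×ˢ Set.univ))
    (h : EuclideanSpace ℝ (Fin n) → ℝ)
    (hh : ∀ x, h x = sSup (Set.range fun y => φ x y)) :
    (∀ x₀ ∈ Ω, ∀ L : EuclideanSpace ℝ (Fin n) →L[ℝ] ℝ, HasFDerivAt h L x₀ →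
      ∀ y₀ : Y, φ x₀ y₀ = h x₀ → L = D x₀ y₀) ∧
    (∀ x₀ ∈ Ω, ∀ y₀ : Y, {y : Y | φ x₀ y = h x₀} = {y₀} →
      HasFDerivAt h (D x₀ y₀) x₀) := by
  have hopen : IsOpen (Ω ×ˢ (Set.univ : Set Y)) := hΩ.prod isOpen_univ
  -- slice continuity in y for x ∈ Ω
  have hslice : ∀ x ∈ Ω, Continuous (fun y => φ x y) := by
    intro x hx
    rw [continuous_iff_continuousAt]
    intro y
    have h1 : ContinuousAt (fun q : EuclideanSpace ℝ (Fin n) × Y => φ q.1 q.2) (x, y) :=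
      hφcont.continuousAt (hopen.mem_nhds ⟨hx, mem_univ _⟩)
    exact h1.comp (Continuous.continuousAt (by fun_prop))
  -- φ x y ≤ h x
  have hmem : ∀ x ∈ Ω, ∀ y : Y, φ x y ≤ h x := by
    intro x hx y
    rw [hh]
    exact le_csSup (isCompact_range (hslice x hx)).bddAbove ⟨y, rfl⟩
  -- max attained
  have hattain : ∀ x ∈ Ω, ∃ y : Y, φ x y = h x := by
    intro x hx
    have : sSup (Set.range fun y => φ x y) ∈ Set.range fun y => φ x y :=
      (isCompact_range (hslice x hx)).sSup_mem (range_nonempty _)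
    obtain ⟨y, hy⟩ := this
    exact ⟨y, by rw [hh]; exact hy⟩
  constructor
  · -- Part 1
    intro x₀ hx₀ L hL y₀ hy₀
    have hmin : IsLocalMin (fun x => h x - φ x y₀) x₀ := by
      filter_upwards [hΩ.mem_nhds hx₀] with x hx
      have := hmem x hx y₀
      simp only [hy₀, sub_self]
      linarith
    have hd : HasFDerivAt (fun x => h x - φ x y₀) (L - D x₀ y₀) x₀ :=
      hL.sub (hD y₀ x₀ hx₀)
    have := hmin.hasFDerivAt_eq_zero hd
    rwa [sub_eq_zero] at this
  · -- Part 2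
    intro x₀ hx₀ y₀ hargmax
    have hy₀ : φ x₀ y₀ = h x₀ := by
      have : y₀ ∈ ({y : Y | φ x₀ y = h x₀}) := by rw [hargmax]; rfl
      exact this
    -- maximizer localization
    have key : ∀ V : Set Y, IsOpen V → y₀ ∈ V →
        ∀ᶠ x in nhds x₀, ∀ y : Y, φ x y = h x → y ∈ V := by
      intro V hV hy₀V
      by_cases hK : Vᶜ = ∅
      · filter_upwards with x y _
        by_contra hc
        exact absurd (mem_compl hc) (by simp [hK])
      · have hKc : IsCompact (Vᶜ) := hV.isClosed_compl.isCompact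
        have hKne : (Vᶜ : Set Y).Nonempty := nonempty_iff_ne_empty.mpr hK
        obtain ⟨y₁, hy₁K, hy₁max⟩ := hKc.exists_isMaxOn hKne ((hslice x₀ hx₀).continuousOn)
        have hy₁lt : φ x₀ y₁ < φ x₀ y₀ := by
          rcases lt_or_eq_of_le (le_of_le_of_eq (hmem x₀ hx₀ y₁) hy₀.symm) with h1 | h1
          · exact h1
          · exfalso
            have : y₁ ∈ ({y : Y | φ x₀ y = h x₀}) := by
              simp only [mem_setOf_eq]; rw [h1]; exact hy₀
            rw [hargmax] at this
            exact hy₁K (this ▸ hy₀V)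
        set c : ℝ := (φ x₀ y₁ + φ x₀ y₀) / 2 with hc
        have hc1 : φ x₀ y₁ < c := by rw [hc]; linarith
        have hc2 : c < φ x₀ y₀ := by rw [hc]; linarith
        have hNopen : IsOpen ((Ω ×ˢ (Set.univ : Set Y)) ∩
            (fun q : EuclideanSpace ℝ (Fin n) × Y => φ q.1 q.2) ⁻¹' Iio c) :=
          hφcont.isOpen_inter_preimage hopen isOpen_Iio
        have hsub : ({x₀} : Set (EuclideanSpace ℝ (Fin n))) ×ˢ (Vᶜ) ⊆
            (Ω ×ˢ (Set.univ : Set Y)) ∩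
            (fun q : EuclideanSpace ℝ (Fin n) × Y => φ q.1 q.2) ⁻¹' Iio c := by
          rintro ⟨x, y⟩ ⟨hx, hyK⟩
          simp only [mem_singleton_iff] at hx
          subst hx
          exact ⟨⟨hx₀, mem_univ _⟩, lt_of_le_of_lt (hy₁max hyK) hc1⟩
        obtain ⟨u, v, hu, hv, hx₀u, hKv, huv⟩ :=
          generalized_tube_lemma isCompact_singleton hKc hNopen hsub
        have hcont₀ : ContinuousAt (fun x => φ x y₀) x₀ := by
          have h1 : ContinuousAt (fun q : EuclideanSpace ℝ (Fin n) × Y => φ q.1 q.2) (x₀, y₀) :=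
            hφcont.continuousAt (hopen.mem_nhds ⟨hx₀, mem_univ _⟩)
          have h2 : (fun x => φ x y₀) =
              (fun q : EuclideanSpace ℝ (Fin n) × Y => φ q.1 q.2) ∘ (fun x => (x, y₀)) := rfl
          rw [h2]
          have h3 : ContinuousAt (fun x : EuclideanSpace ℝ (Fin n) => (x, y₀)) x₀ :=
            ContinuousAt.prodMk continuousAt_id continuousAt_const
          exact ContinuousAt.comp h1 h3
        have hev : ∀ᶠ x in nhds x₀, c < φ x y₀ :=
          continuousAt_const.eventually_lt hcont₀ hc2
        filter_upwards [hu.mem_nhds (hx₀u rfl), hev, hΩ.mem_nhds hx₀] with x hxu hxc hxΩ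
        intro y hy
        by_contra hyV
        have : (x, y) ∈ u ×ˢ v := ⟨hxu, hKv hyV⟩
        have hlt : φ x y < c := (huv this).2
        have : h x < φ x y₀ := by rw [← hy]; linarith
        exact absurd (hmem x hxΩ y₀) (not_le.mpr this)
    -- main ε-δ argument
    rw [hasFDerivAt_iff_isLittleO_nhds_zero, isLittleO_iff]
    intro ε hε
    -- continuity of D at (x₀, y₀)
    have hNopen : IsOpen ((Ω ×ˢ (Set.univ : Set Y)) ∩
        (fun q : EuclideanSpace ℝ (Fin n) × Y => D q.1 q.2) ⁻¹' ball (D x₀ y₀) ε) :=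
      hDcont.isOpen_inter_preimage hopen isOpen_ball
    have hmemN : (x₀, y₀) ∈ (Ω ×ˢ (Set.univ : Set Y)) ∩
        (fun q : EuclideanSpace ℝ (Fin n) × Y => D q.1 q.2) ⁻¹' ball (D x₀ y₀) ε :=
      ⟨⟨hx₀, mem_univ _⟩, by simp [hε]⟩
    obtain ⟨u, v, hu, hv, hx₀u, hy₀v, huv⟩ := isOpen_prod_iff.mp hNopen x₀ y₀ hmemN
    obtain ⟨r, hr, hball⟩ := Metric.isOpen_iff.mp hu x₀ hx₀u
    have hballΩ : ball x₀ r ⊆ Ω := by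
      intro x hx
      have h2 : (x, y₀) ∈ u ×ˢ v := ⟨hball hx, hy₀v⟩
      exact ((huv h2).1).1
    -- the MVT-type bound
    have mvt : ∀ y ∈ v, ∀ x ∈ ball x₀ r,
        ‖φ x y - φ x₀ y - (D x₀ y₀) (x - x₀)‖ ≤ ε * ‖x - x₀‖ := by
      intro y hyv x hx
      have hf : ∀ ξ ∈ ball x₀ r,
          HasFDerivWithinAt (fun x' => φ x' y) (D ξ y) (ball x₀ r) ξ :=
        fun ξ hξ => (hD y ξ (hballΩ hξ)).hasFDerivWithinAt
      have hb : ∀ ξ ∈ ball x₀ r, ‖D ξ y - D x₀ y₀‖ ≤ ε := by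
        intro ξ hξ
        have h3 : (ξ, y) ∈ u ×ˢ v := ⟨hball hξ, hyv⟩
        have h2 : D ξ y ∈ ball (D x₀ y₀) ε := (huv h3).2
        rw [mem_ball_iff_norm] at h2
        exact h2.le
      exact Convex.norm_image_sub_le_of_norm_hasFDerivWithin_le' hf hb (convex_ball _ _)
        (mem_ball_self hr) hx
    have htend : Tendsto (fun w : EuclideanSpace ℝ (Fin n) => x₀ + w) (nhds 0) (nhds x₀) :=
      Continuous.tendsto' (by fun_prop) 0 x₀ (by simp)
    filter_upwards [htend.eventually (key v hv hy₀v),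
      Metric.ball_mem_nhds (0 : EuclideanSpace ℝ (Fin n)) hr] with w hmax hw
    rw [mem_ball_zero_iff] at hw
    have hxball : x₀ + w ∈ ball x₀ r := by
      rw [mem_ball_iff_norm]; simpa using hw
    have hxΩ : x₀ + w ∈ Ω := hballΩ hxball
    obtain ⟨y, hy⟩ := hattain (x₀ + w) hxΩ
    have hyv : y ∈ v := hmax y hy
    have b1 := mvt y hyv (x₀ + w) hxball
    have b2 := mvt y₀ hy₀v (x₀ + w) hxball
    simp only [add_sub_cancel_left] at b1 b2
    rw [Real.norm_eq_abs] at b1 b2 ⊢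
    rw [abs_le]
    have hupper : h (x₀ + w) - h x₀ ≤ φ (x₀ + w) y - φ x₀ y := by
      have := hmem x₀ hx₀ y
      linarith [hy.ge, hy.le]
    have hlower : φ (x₀ + w) y₀ - φ x₀ y₀ ≤ h (x₀ + w) - h x₀ := by
      have := hmem (x₀ + w) hxΩ y₀
      linarith [hy₀.ge, hy₀.le]
    rw [abs_le] at b1 b2
    constructor
    · linarith [b2.1]
    · linarith [b1.2]
end

section
/- Let Λ = (λ̄⁰, λ̄¹, λ̄², λ̂¹, λ̂²) satisfy: λ̄ʲ ∈ [0, fʲ_max] for j = 0,1,2; λ̄⁰ = λ̄¹ + λ̄²; λ̂ᵏ : [0, f⁰_max] → [0, λ̄ᵏ] continuous nondecreasing with λ̂ᵏ(0) = 0, λ̂ᵏ(λ̄⁰) = λ̄ᵏ, and λ̂¹(λ) + λ̂²(λ) = min(λ, λ̄⁰). Then the set G_Λ := {(p⁰,p¹,p²) ∈ Q : 0 ≤ fʲ(pʲ) ≤ λ̄ʲ for j = 0,1,2; f⁰(p⁰) = f¹(p¹) + f²(p²); f^{k,+}(pᵏ) ≥ λ̂ᵏ(f^{0,+}(p⁰))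 for k = 1,2} satisfies the germ (dissipation) property: for all P̄, P ∈ G_Λ, D(P̄, P) := q⁰(p̄⁰,p⁰) − q¹(p̄¹,p¹) − q²(p̄²,p²) ≥ 0, where qʲ(c̄,c) = sign(c−c̄)(fʲ(c) − fʲ(c̄)). -/
/-- Kruzhkov entropy flux `q^g(c̄,c) = sign(c − c̄)(g(c) − g(c̄))`. -/
noncomputable def entropyFlux (g : ℝ → ℝ) (cbar c : ℝ) : ℝ :=
  Real.sign (c - cbar) * (g c - g cbar)

/-- Case description of the entropy flux in terms of the monotone envelopes. -/
def Branch (M g G u U q : ℝ) : Prop :=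
  (u = g ∧ U = G ∧ q = |g - G|) ∨ (u = g ∧ U = M ∧ q = G - g) ∨
  (u = M ∧ U = G ∧ q = g - G) ∨ (u = M ∧ U = M ∧ q = -|g - G|)

lemma branch_swap {M g G u U q : ℝ} (h : Branch M g G u U q) : Branch M G g U u q := by
  rcases h with ⟨h1, h2, h3⟩ | ⟨h1, h2, h3⟩ | ⟨h1, h2, h3⟩ | ⟨h1, h2, h3⟩
  · exact Or.inl ⟨h2, h1, by rw [h3, abs_sub_comm]⟩
  · exact Or.inr (Or.inr (Or.inl ⟨h2, h1, h3⟩))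
  · exact Or.inr (Or.inl ⟨h2, h1, h3⟩)
  · exact Or.inr (Or.inr (Or.inr ⟨h2, h1, by rw [h3, abs_sub_comm]⟩))

lemma keyk_minus {L M g G u U q : ℝ} (hb : Branch M g G u U q)
    (hgL : g ≤ L) (hGL : G ≤ L) (hLu : L ≤ u) (hLU : L ≤ U) : q ≤ -|g - G| := by
  rcases hb with ⟨h1, h2, h3⟩ | ⟨h1, h2, h3⟩ | ⟨h1, h2, h3⟩ | ⟨h1, h2, h3⟩ <;>
    rcases abs_choice (g - G) with h | h <;> linarith [abs_nonneg (g - G)]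

lemma keyk_mixed {L M g G u U q : ℝ} (hb : Branch M g G u U q)
    (hgL : g ≤ L) (hGL : G ≤ L) (hLU : L ≤ U) : q ≤ G - g := by
  rcases hb with ⟨h1, h2, h3⟩ | ⟨h1, h2, h3⟩ | ⟨h1, h2, h3⟩ | ⟨h1, h2, h3⟩ <;>
    rcases abs_choice (g - G) with h | h <;> linarith [abs_nonneg (g - G)]

lemma keyA {g0 g1 g2 G0 G1 G2 M1 M2 u1 u2 U1 U2 h1 h2 H1 H2 q1 q2 : ℝ}
    (hle : G0 ≤ g0)
    (hg : g0 = g1 + g2) (hG : G0 = G1 + G2)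
    (hb1 : Branch M1 g1 G1 u1 U1 q1) (hb2 : Branch M2 g2 G2 u2 U2 q2)
    (hh1 : h1 ≤ u1) (hh2 : h2 ≤ u2) (hH1 : H1 ≤ U1) (hH2 : H2 ≤ U2)
    (hs : h1 + h2 = g0) (hS : H1 + H2 = G0)
    (hm1 : H1 ≤ h1) (hm2 : H2 ≤ h2) :
    q1 + q2 ≤ g0 - G0 := by
  rcases hb1 with ⟨e1, f1, r1⟩ | ⟨e1, f1, r1⟩ | ⟨e1, f1, r1⟩ | ⟨e1, f1, r1⟩ <;>
    rcases hb2 with ⟨e2, f2, r2⟩ | ⟨e2, f2, r2⟩ | ⟨e2, f2, r2⟩ | ⟨e2, f2, r2⟩ <;>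
    rcases abs_choice (g1 - G1) with a1 | a1 <;> rcases abs_choice (g2 - G2) with a2 | a2 <;>
    linarith [abs_nonneg (g1 - G1), abs_nonneg (g2 - G2)]

lemma key {L0 L1 L2 M0 M1 M2 g0 g1 g2 G0 G1 G2 u0 u1 u2 U0 U1 U2 h1 h2 H1 H2 q0 q1 q2 : ℝ}
    (hL : L0 = L1 + L2) (hM0 : L0 ≤ M0)
    (hg : g0 = g1 + g2) (hG : G0 = G1 + G2)
    (hg1 : g1 ≤ L1) (hg2 : g2 ≤ L2) (hG1 : G1 ≤ L1) (hG2 : G2 ≤ L2)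
    (hb0 : Branch M0 g0 G0 u0 U0 q0)
    (hb1 : Branch M1 g1 G1 u1 U1 q1) (hb2 : Branch M2 g2 G2 u2 U2 q2)
    (hh1 : h1 ≤ u1) (hh2 : h2 ≤ u2) (hH1 : H1 ≤ U1) (hH2 : H2 ≤ U2)
    (hhs : h1 + h2 = min u0 L0) (hHs : H1 + H2 = min U0 L0)
    (hmono : u0 ≤ U0 → h1 ≤ H1 ∧ h2 ≤ H2) (hmono' : U0 ≤ u0 → H1 ≤ h1 ∧ H2 ≤ h2)
    (hh1L : h1 ≤ L1) (hh2L : h2 ≤ L2) (hH1L : H1 ≤ L1) (hH2L : H2 ≤ L2) :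
    q1 + q2 ≤ q0 := by
  have hg0L : g0 ≤ L0 := by linarith
  have hG0L : G0 ≤ L0 := by linarith
  rcases hb0 with ⟨e, f, r⟩ | ⟨e, f, r⟩ | ⟨e, f, r⟩ | ⟨e, f, r⟩
  · -- u0 = g0, U0 = G0, q0 = |g0 - G0|
    have hs : h1 + h2 = g0 := by rw [hhs, e, min_eq_left hg0L]
    have hS : H1 + H2 = G0 := by rw [hHs, f, min_eq_left hG0L]
    rw [r]
    rcases le_total G0 g0 with hle | hle
    · obtain ⟨m1, m2⟩ := hmono' (by rw [e, f]; exact hle)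
      have := keyA hle hg hG hb1 hb2 hh1 hh2 hH1 hH2 hs hS m1 m2
      rw [abs_of_nonneg (by linarith)]
      linarith
    · obtain ⟨m1, m2⟩ := hmono (by rw [e, f]; exact hle)
      have := keyA hle hG hg (branch_swap hb1) (branch_swap hb2) hH1 hH2 hh1 hh2 hS hs m1 m2
      rw [abs_sub_comm, abs_of_nonneg (by linarith)]
      linarith
  · -- u0 = g0, U0 = M0, q0 = G0 - g0
    have hS : H1 + H2 = L0 := by rw [hHs, f, min_eq_right hM0]
    have hH1e : H1 = L1 := le_antisymm hH1L (by linarith)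
    have hH2e : H2 = L2 := le_antisymm hH2L (by linarith)
    have q1le := keyk_mixed hb1 hg1 hG1 (by linarith : L1 ≤ U1)
    have q2le := keyk_mixed hb2 hg2 hG2 (by linarith : L2 ≤ U2)
    linarith
  · -- u0 = M0, U0 = G0, q0 = g0 - G0
    have hs : h1 + h2 = L0 := by rw [hhs, e, min_eq_right hM0]
    have hh1e : h1 = L1 := le_antisymm hh1L (by linarith)
    have hh2e : h2 = L2 := le_antisymm hh2L (by linarith)
    have q1le := keyk_mixed (branch_swap hb1) hG1 hg1 (by linarith : L1 ≤ u1)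
    have q2le := keyk_mixed (branch_swap hb2) hG2 hg2 (by linarith : L2 ≤ u2)
    linarith
  · -- u0 = M0, U0 = M0, q0 = -|g0 - G0|
    have hs : h1 + h2 = L0 := by rw [hhs, e, min_eq_right hM0]
    have hS : H1 + H2 = L0 := by rw [hHs, f, min_eq_right hM0]
    have hh1e : h1 = L1 := le_antisymm hh1L (by linarith)
    have hh2e : h2 = L2 := le_antisymm hh2L (by linarith)
    have hH1e : H1 = L1 := le_antisymm hH1L (by linarith)
    have hH2e : H2 = L2 := le_antisymm hH2L (by linarith)
    have q1le := keyk_minus hb1 hg1 hG1 (by linarith : L1 ≤ u1) (by linarith : L1 ≤ U1)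
    have q2le := keyk_minus hb2 hg2 hG2 (by linarith : L2 ≤ u2) (by linarith : L2 ≤ U2)
    have habs := abs_add_le (g1 - G1) (g2 - G2)
    rw [r, show g0 - G0 = (g1 - G1) + (g2 - G2) by linarith]
    linarith

lemma branch_lemma {a b c : ℝ} {f fp : ℝ → ℝ}
    (hinc : StrictMonoOn f (Set.Icc a b)) (hdec : StrictAntiOn f (Set.Icc b c))
    (hfp : ∀ p, (p ≤ b → fp p = f p) ∧ (b ≤ p → fp p = f b))
    {P p : ℝ} (hP : P ∈ Set.Icc a c) (hp : p ∈ Set.Icc a c) :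
    Branch (f b) (f p) (f P) (fp p) (fp P) (entropyFlux f P p) := by
  rcases le_total p b with h1 | h1 <;> rcases le_total P b with h2 | h2
  · refine Or.inl ⟨(hfp p).1 h1, (hfp P).1 h2, ?_⟩
    have hpm : p ∈ Set.Icc a b := ⟨hp.1, h1⟩
    have hPm : P ∈ Set.Icc a b := ⟨hP.1, h2⟩
    rcases lt_trichotomy p P with h | h | h
    · have hf := hinc hpm hPm h
      rw [entropyFlux, Real.sign_of_neg (by linarith), abs_of_neg (by linarith : f p - f P < 0)]
      ring
    · subst h; simp [entropyFlux]
    · have hf := hinc hPm hpm h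
      rw [entropyFlux, Real.sign_of_pos (by linarith), abs_of_pos (by linarith : 0 < f p - f P)]
      ring
  · refine Or.inr (Or.inl ⟨(hfp p).1 h1, (hfp P).2 h2, ?_⟩)
    rcases eq_or_lt_of_le (le_trans h1 h2 : p ≤ P) with h | h
    · subst h; simp [entropyFlux]
    · rw [entropyFlux, Real.sign_of_neg (by linarith)]; ring
  · refine Or.inr (Or.inr (Or.inl ⟨(hfp p).2 h1, (hfp P).1 h2, ?_⟩))
    rcases eq_or_lt_of_le (le_trans h2 h1 : P ≤ p) with h | h
    · rw [h]; simp [entropyFlux]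
    · rw [entropyFlux, Real.sign_of_pos (by linarith)]; ring
  · refine Or.inr (Or.inr (Or.inr ⟨(hfp p).2 h1, (hfp P).2 h2, ?_⟩))
    have hpm : p ∈ Set.Icc b c := ⟨h1, hp.2⟩
    have hPm : P ∈ Set.Icc b c := ⟨h2, hP.2⟩
    rcases lt_trichotomy p P with h | h | h
    · have hf := hdec hpm hPm h
      rw [entropyFlux, Real.sign_of_neg (by linarith), abs_of_pos (by linarith : 0 < f p - f P)]
      ring
    · subst h; simp [entropyFlux]
    · have hf := hdec hPm hpm h
      rw [entropyFlux, Real.sign_of_pos (by linarith), abs_of_neg (by linarith : f p - f P < 0)]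
      ring

/-- The set `G_Λ` is a germ: the dissipation `D(P̄,P) = q⁰ − (q¹ + q²)` is nonnegative
for all `P̄, P ∈ G_Λ`. -/
theorem germ_property_GLambda
    (a0 b0 c0 a1 b1 c1 a2 b2 c2 : ℝ)
    (f0 f1 f2 : ℝ → ℝ)
    (h0ab : a0 < b0) (h0bc : b0 < c0) (h1ab : a1 < b1) (h1bc : b1 < c1)
    (h2ab : a2 < b2) (h2bc : b2 < c2)
    (hf0cont : ContinuousOn f0 (Set.Icc a0 c0))
    (hf1cont : ContinuousOn f1 (Set.Icc a1 c1))
    (hf2cont : ContinuousOn f2 (Set.Icc a2 c2))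
    (hf0inc : StrictMonoOn f0 (Set.Icc a0 b0)) (hf0dec : StrictAntiOn f0 (Set.Icc b0 c0))
    (hf1inc : StrictMonoOn f1 (Set.Icc a1 b1)) (hf1dec : StrictAntiOn f1 (Set.Icc b1 c1))
    (hf2inc : StrictMonoOn f2 (Set.Icc a2 b2)) (hf2dec : StrictAntiOn f2 (Set.Icc b2 c2))
    (hf0a : f0 a0 = 0) (hf0c : f0 c0 = 0)
    (hf1a : f1 a1 = 0) (hf1c : f1 c1 = 0)
    (hf2a : f2 a2 = 0) (hf2c : f2 c2 = 0)
    -- the monotone envelopes f^{j,+}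
    (fplus0 fplus1 fplus2 : ℝ → ℝ)
    (hfp0 : ∀ p, (p ≤ b0 → fplus0 p = f0 p) ∧ (b0 ≤ p → fplus0 p = f0 b0))
    (hfp1 : ∀ p, (p ≤ b1 → fplus1 p = f1 p) ∧ (b1 ≤ p → fplus1 p = f1 b1))
    (hfp2 : ∀ p, (p ≤ b2 → fplus2 p = f2 p) ∧ (b2 ≤ p → fplus2 p = f2 b2))
    -- the parameters Λ
    (lam0 lam1 lam2 : ℝ) (lhat1 lhat2 : ℝ → ℝ)
    (hl0 : lam0 ∈ Set.Icc 0 (f0 b0)) (hl1 : lam1 ∈ Set.Icc 0 (f1 b1))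
    (hl2 : lam2 ∈ Set.Icc 0 (f2 b2))
    (hsum : lam0 = lam1 + lam2)
    (hlhat1cont : ContinuousOn lhat1 (Set.Icc 0 (f0 b0)))
    (hlhat1mono : MonotoneOn lhat1 (Set.Icc 0 (f0 b0)))
    (hlhat1mem : ∀ lam ∈ Set.Icc 0 (f0 b0), lhat1 lam ∈ Set.Icc 0 lam1)
    (hlhat1zero : lhat1 0 = 0) (hlhat1top : lhat1 lam0 = lam1)
    (hlhat2cont : ContinuousOn lhat2 (Set.Icc 0 (f0 b0)))
    (hlhat2mono : MonotoneOn lhat2 (Set.Icc 0 (f0 b0)))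
    (hlhat2mem : ∀ lam ∈ Set.Icc 0 (f0 b0), lhat2 lam ∈ Set.Icc 0 lam2)
    (hlhat2zero : lhat2 0 = 0) (hlhat2top : lhat2 lam0 = lam2)
    (hlhatsum : ∀ lam ∈ Set.Icc 0 (f0 b0), lhat1 lam + lhat2 lam = min lam lam0)
    -- the germ G_Λ
    (G : Set (ℝ × ℝ × ℝ))
    (hG : G = {P : ℝ × ℝ × ℝ |
      P.1 ∈ Set.Icc a0 c0 ∧ P.2.1 ∈ Set.Icc a1 c1 ∧ P.2.2 ∈ Set.Icc a2 c2 ∧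
      f0 P.1 ∈ Set.Icc 0 lam0 ∧ f1 P.2.1 ∈ Set.Icc 0 lam1 ∧ f2 P.2.2 ∈ Set.Icc 0 lam2 ∧
      f0 P.1 = f1 P.2.1 + f2 P.2.2 ∧
      lhat1 (fplus0 P.1) ≤ fplus1 P.2.1 ∧ lhat2 (fplus0 P.1) ≤ fplus2 P.2.2}) :
    ∀ Pb ∈ G, ∀ P ∈ G,
      0 ≤ entropyFlux f0 Pb.1 P.1 -
          (entropyFlux f1 Pb.2.1 P.2.1 + entropyFlux f2 Pb.2.2 P.2.2) := by
  subst hG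
  intro Pb hPb P hP
  obtain ⟨hB0, hB1, hB2, hBf0, hBf1, hBf2, hBeq, hBl1, hBl2⟩ := hPb
  obtain ⟨hP0, hP1, hP2, hPf0, hPf1, hPf2, hPeq, hPl1, hPl2⟩ := hP
  -- the envelope value at the 0-component lies in the domain of the lhat's
  have memdom : ∀ x : ℝ, x ∈ Set.Icc a0 c0 → f0 x ∈ Set.Icc 0 lam0 →
      fplus0 x ∈ Set.Icc 0 (f0 b0) := by
    intro x hx hfx
    rcases le_total x b0 with h | h
    · rw [(hfp0 x).1 h]
      exact ⟨hfx.1, le_trans hfx.2 hl0.2⟩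
    · rw [(hfp0 x).2 h]
      exact ⟨le_trans hl0.1 hl0.2, le_refl _⟩
  have memP : fplus0 P.1 ∈ Set.Icc 0 (f0 b0) := memdom _ hP0 hPf0
  have memB : fplus0 Pb.1 ∈ Set.Icc 0 (f0 b0) := memdom _ hB0 hBf0
  have hb0 := branch_lemma hf0inc hf0dec hfp0 hB0 hP0
  have hb1 := branch_lemma hf1inc hf1dec hfp1 hB1 hP1
  have hb2 := branch_lemma hf2inc hf2dec hfp2 hB2 hP2
  have hk := key (L0 := lam0) (L1 := lam1) (L2 := lam2)
      hsum hl0.2 hPeq hBeq hPf1.2 hPf2.2 hBf1.2 hBf2.2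
      hb0 hb1 hb2 hPl1 hPl2 hBl1 hBl2
      (hlhatsum _ memP) (hlhatsum _ memB)
      (fun h => ⟨hlhat1mono memP memB h, hlhat2mono memP memB h⟩)
      (fun h => ⟨hlhat1mono memB memP h, hlhat2mono memB memP h⟩)
      (hlhat1mem _ memP).2 (hlhat2mem _ memP).2 (hlhat1mem _ memB).2 (hlhat2mem _ memB).2
  linarith
end

section
/- Under the assumptions of the germ theorem (fluxes fʲ continuous unimodal with fʲ(aʲ) = fʲ(cʲ) = 0, parameters Λ satisfying the compatibility conditions), let G ⊆ Q satisfy D(P̄,P) ≥ 0 for all P̄, P ∈ G, and suppose G contains the curve Γ = {(u⁰₊(λ), u¹₊(λ̂¹(λ)), u²₊(λ̂²(λ))) : λ ∈ [0,λ̄⁰]} and the three points P₁ = (u⁰₋(λ̄¹), u¹₊(λ̄¹), c²), P₂ = (u⁰₋(λ̄²), c¹, u²₊(λ̄²)), P₃ = (c⁰, c¹, c²). Then G ⊆ G_Λ. In particular, G_Λ is a maximal germ: if P ∈ Q satisfies D(P̄,P) ≥ 0 for all P̄ ∈ G_Λ, then P ∈ G_Λ. -/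
open Filter Topology

private lemma ef_of_le' (g : ℝ → ℝ) {x y : ℝ} (h : x ≤ y) :
    entropyFlux g x y = g y - g x := by
  rcases eq_or_lt_of_le h with rfl | h
  · simp [entropyFlux]
  · rw [entropyFlux, Real.sign_of_pos (by linarith), one_mul]

private lemma ef_of_ge' (g : ℝ → ℝ) {x y : ℝ} (h : y ≤ x) :
    entropyFlux g x y = g x - g y := by
  rcases eq_or_lt_of_le h with rfl | h
  · simp [entropyFlux]
  · rw [entropyFlux, Real.sign_of_neg (by linarith)]; ring

private lemma ef_comm' (g : ℝ → ℝ) (x y : ℝ) :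
    entropyFlux g x y = entropyFlux g y x := by
  rcases le_total x y with h | h
  · rw [ef_of_le' g h, ef_of_ge' g h]
  · rw [ef_of_ge' g h, ef_of_le' g h]

private lemma unimodal_nonneg' {a b c : ℝ} {f : ℝ → ℝ}
    (hab : a ≤ b) (hbc : b ≤ c)
    (hinc : StrictMonoOn f (Set.Icc a b)) (hdec : StrictAntiOn f (Set.Icc b c))
    (hfa : f a = 0) (hfc : f c = 0) {p : ℝ} (hp : p ∈ Set.Icc a c) : 0 ≤ f p := by
  rcases le_total p b with h | h
  · have := hinc.monotoneOn ⟨le_rfl, hab⟩ ⟨hp.1, h⟩ hp.1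
    rw [hfa] at this; exact this
  · have := hdec.antitoneOn ⟨h, hp.2⟩ ⟨hbc, le_rfl⟩ hp.2
    rw [hfc] at this; exact this

/-- Maximality of `G_Λ`: any dissipative set `G` containing the curve `Γ` and the points
`P₁, P₂, P₃` is contained in `G_Λ`; in particular `G_Λ` is a maximal germ. -/
theorem maximality_GLambda
    (a0 b0 c0 a1 b1 c1 a2 b2 c2 : ℝ)
    (f0 f1 f2 : ℝ → ℝ)
    (h0ab : a0 < b0) (h0bc : b0 < c0) (h1ab : a1 < b1) (h1bc : b1 < c1)
    (h2ab : a2 < b2) (h2bc : b2 < c2)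
    (hf0cont : ContinuousOn f0 (Set.Icc a0 c0))
    (hf1cont : ContinuousOn f1 (Set.Icc a1 c1))
    (hf2cont : ContinuousOn f2 (Set.Icc a2 c2))
    (hf0inc : StrictMonoOn f0 (Set.Icc a0 b0)) (hf0dec : StrictAntiOn f0 (Set.Icc b0 c0))
    (hf1inc : StrictMonoOn f1 (Set.Icc a1 b1)) (hf1dec : StrictAntiOn f1 (Set.Icc b1 c1))
    (hf2inc : StrictMonoOn f2 (Set.Icc a2 b2)) (hf2dec : StrictAntiOn f2 (Set.Icc b2 c2))
    (hf0a : f0 a0 = 0) (hf0c : f0 c0 = 0)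
    (hf1a : f1 a1 = 0) (hf1c : f1 c1 = 0)
    (hf2a : f2 a2 = 0) (hf2c : f2 c2 = 0)
    -- the monotone envelopes f^{j,+}
    (fplus0 fplus1 fplus2 : ℝ → ℝ)
    (hfp0 : ∀ p, (p ≤ b0 → fplus0 p = f0 p) ∧ (b0 ≤ p → fplus0 p = f0 b0))
    (hfp1 : ∀ p, (p ≤ b1 → fplus1 p = f1 p) ∧ (b1 ≤ p → fplus1 p = f1 b1))
    (hfp2 : ∀ p, (p ≤ b2 → fplus2 p = f2 p) ∧ (b2 ≤ p → fplus2 p = f2 b2))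
    -- the roots u^j_± of f^{j,±} = λ
    (u0p u0m u1p u1m u2p u2m : ℝ → ℝ)
    (hu0p : ∀ lam ∈ Set.Icc 0 (f0 b0), u0p lam ∈ Set.Icc a0 b0 ∧ f0 (u0p lam) = lam)
    (hu0m : ∀ lam ∈ Set.Icc 0 (f0 b0), u0m lam ∈ Set.Icc b0 c0 ∧ f0 (u0m lam) = lam)
    (hu1p : ∀ lam ∈ Set.Icc 0 (f1 b1), u1p lam ∈ Set.Icc a1 b1 ∧ f1 (u1p lam) = lam)
    (hu1m : ∀ lam ∈ Set.Icc 0 (f1 b1), u1m lam ∈ Set.Icc b1 c1 ∧ f1 (u1m lam) = lam)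
    (hu2p : ∀ lam ∈ Set.Icc 0 (f2 b2), u2p lam ∈ Set.Icc a2 b2 ∧ f2 (u2p lam) = lam)
    (hu2m : ∀ lam ∈ Set.Icc 0 (f2 b2), u2m lam ∈ Set.Icc b2 c2 ∧ f2 (u2m lam) = lam)
    -- the parameters Λ
    (lam0 lam1 lam2 : ℝ) (lhat1 lhat2 : ℝ → ℝ)
    (hl0 : lam0 ∈ Set.Icc 0 (f0 b0)) (hl1 : lam1 ∈ Set.Icc 0 (f1 b1))
    (hl2 : lam2 ∈ Set.Icc 0 (f2 b2))
    (hsum : lam0 = lam1 + lam2)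
    (hlhat1cont : ContinuousOn lhat1 (Set.Icc 0 (f0 b0)))
    (hlhat1mono : MonotoneOn lhat1 (Set.Icc 0 (f0 b0)))
    (hlhat1mem : ∀ lam ∈ Set.Icc 0 (f0 b0), lhat1 lam ∈ Set.Icc 0 lam1)
    (hlhat1zero : lhat1 0 = 0) (hlhat1top : lhat1 lam0 = lam1)
    (hlhat2cont : ContinuousOn lhat2 (Set.Icc 0 (f0 b0)))
    (hlhat2mono : MonotoneOn lhat2 (Set.Icc 0 (f0 b0)))
    (hlhat2mem : ∀ lam ∈ Set.Icc 0 (f0 b0), lhat2 lam ∈ Set.Icc 0 lam2)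
    (hlhat2zero : lhat2 0 = 0) (hlhat2top : lhat2 lam0 = lam2)
    (hlhatsum : ∀ lam ∈ Set.Icc 0 (f0 b0), lhat1 lam + lhat2 lam = min lam lam0)
    -- the germ G_Λ
    (GLam : Set (ℝ × ℝ × ℝ))
    (hGLam : GLam = {P : ℝ × ℝ × ℝ |
      P.1 ∈ Set.Icc a0 c0 ∧ P.2.1 ∈ Set.Icc a1 c1 ∧ P.2.2 ∈ Set.Icc a2 c2 ∧
      f0 P.1 ∈ Set.Icc 0 lam0 ∧ f1 P.2.1 ∈ Set.Icc 0 lam1 ∧ f2 P.2.2 ∈ Set.Icc 0 lam2 ∧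
      f0 P.1 = f1 P.2.1 + f2 P.2.2 ∧
      lhat1 (fplus0 P.1) ≤ fplus1 P.2.1 ∧ lhat2 (fplus0 P.1) ≤ fplus2 P.2.2})
    -- a dissipative set G containing Γ ∪ {P₁,P₂,P₃}
    (G : Set (ℝ × ℝ × ℝ))
    (hGQ : ∀ P ∈ G, P.1 ∈ Set.Icc a0 c0 ∧ P.2.1 ∈ Set.Icc a1 c1 ∧ P.2.2 ∈ Set.Icc a2 c2)
    (hGdiss : ∀ Pb ∈ G, ∀ P ∈ G,
      0 ≤ entropyFlux f0 Pb.1 P.1 -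
          (entropyFlux f1 Pb.2.1 P.2.1 + entropyFlux f2 Pb.2.2 P.2.2))
    (hGamma : ∀ lam ∈ Set.Icc 0 lam0,
      (u0p lam, u1p (lhat1 lam), u2p (lhat2 lam)) ∈ G)
    (hP1 : (u0m lam1, u1p lam1, c2) ∈ G)
    (hP2 : (u0m lam2, c1, u2p lam2) ∈ G)
    (hP3 : (c0, c1, c2) ∈ G) :
    G ⊆ GLam ∧
    (∀ P : ℝ × ℝ × ℝ,
      P.1 ∈ Set.Icc a0 c0 → P.2.1 ∈ Set.Icc a1 c1 → P.2.2 ∈ Set.Icc a2 c2 →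
      (∀ Pb ∈ GLam,
        0 ≤ entropyFlux f0 Pb.1 P.1 -
            (entropyFlux f1 Pb.2.1 P.2.1 + entropyFlux f2 Pb.2.2 P.2.2)) →
      P ∈ GLam) := by
  have hf0b0 : 0 < f0 b0 := by
    have h := hf0inc ⟨le_rfl, h0ab.le⟩ ⟨h0ab.le, le_rfl⟩ h0ab
    rw [hf0a] at h; exact h
  have hf1b1 : 0 < f1 b1 := by
    have h := hf1inc ⟨le_rfl, h1ab.le⟩ ⟨h1ab.le, le_rfl⟩ h1ab
    rw [hf1a] at h; exact h
  have hf2b2 : 0 < f2 b2 := by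
    have h := hf2inc ⟨le_rfl, h2ab.le⟩ ⟨h2ab.le, le_rfl⟩ h2ab
    rw [hf2a] at h; exact h
  have hlam0nn : (0:ℝ) ≤ lam0 := hl0.1
  have hl1lam0 : lam1 ≤ lam0 := by rw [hsum]; linarith [hl2.1]
  have hl2lam0 : lam2 ≤ lam0 := by rw [hsum]; linarith [hl1.1]
  have hl1f0 : lam1 ≤ f0 b0 := le_trans hl1lam0 hl0.2
  have hl2f0 : lam2 ≤ f0 b0 := le_trans hl2lam0 hl0.2
  have key : ∀ G' : Set (ℝ × ℝ × ℝ),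
      (∀ P ∈ G', P.1 ∈ Set.Icc a0 c0 ∧ P.2.1 ∈ Set.Icc a1 c1 ∧ P.2.2 ∈ Set.Icc a2 c2) →
      (∀ Pb ∈ G', ∀ P ∈ G',
        0 ≤ entropyFlux f0 Pb.1 P.1 -
            (entropyFlux f1 Pb.2.1 P.2.1 + entropyFlux f2 Pb.2.2 P.2.2)) →
      (∀ lam ∈ Set.Icc 0 lam0, (u0p lam, u1p (lhat1 lam), u2p (lhat2 lam)) ∈ G') →
      (u0m lam1, u1p lam1, c2) ∈ G' →
      (u0m lam2, c1, u2p lam2) ∈ G' →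
      (c0, c1, c2) ∈ G' →
      G' ⊆ GLam := by
    intro G' hQ hdiss hCurve hq1 hq2 hq3
    rintro ⟨p0, p1, p2⟩ hP
    obtain ⟨h0m, h1m, h2m⟩ := hQ _ hP
    simp only at h0m h1m h2m
    have h0nn : 0 ≤ f0 p0 :=
      unimodal_nonneg' h0ab.le h0bc.le hf0inc hf0dec hf0a hf0c h0m
    have h1nn : 0 ≤ f1 p1 :=
      unimodal_nonneg' h1ab.le h1bc.le hf1inc hf1dec hf1a hf1c h1m
    have h2nn : 0 ≤ f2 p2 :=
      unimodal_nonneg' h2ab.le h2bc.le hf2inc hf2dec hf2a hf2c h2m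
    -- Rankine-Hugoniot
    have hu0p0 : u0p 0 = a0 := by
      obtain ⟨hm, he⟩ := hu0p 0 ⟨le_rfl, hf0b0.le⟩
      rcases eq_or_lt_of_le hm.1 with h | h
      · exact h.symm
      · exfalso
        have := hf0inc ⟨le_rfl, h0ab.le⟩ hm h
        rw [hf0a, he] at this; exact lt_irrefl _ this
    have hu1p0 : u1p 0 = a1 := by
      obtain ⟨hm, he⟩ := hu1p 0 ⟨le_rfl, hf1b1.le⟩
      rcases eq_or_lt_of_le hm.1 with h | h
      · exact h.symm
      · exfalso
        have := hf1inc ⟨le_rfl, h1ab.le⟩ hm h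
        rw [hf1a, he] at this; exact lt_irrefl _ this
    have hu2p0 : u2p 0 = a2 := by
      obtain ⟨hm, he⟩ := hu2p 0 ⟨le_rfl, hf2b2.le⟩
      rcases eq_or_lt_of_le hm.1 with h | h
      · exact h.symm
      · exfalso
        have := hf2inc ⟨le_rfl, h2ab.le⟩ hm h
        rw [hf2a, he] at this; exact lt_irrefl _ this
    have hcurve0 := hCurve 0 ⟨le_rfl, hlam0nn⟩
    rw [hlhat1zero, hlhat2zero, hu0p0, hu1p0, hu2p0] at hcurve0
    have hd0 := hdiss _ hcurve0 _ hP
    have hd3 := hdiss _ hq3 _ hP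
    simp only at hd0 hd3
    rw [ef_of_le' f0 h0m.1, ef_of_le' f1 h1m.1, ef_of_le' f2 h2m.1,
        hf0a, hf1a, hf2a] at hd0
    rw [ef_of_ge' f0 h0m.2, ef_of_ge' f1 h1m.2, ef_of_ge' f2 h2m.2,
        hf0c, hf1c, hf2c] at hd3
    have hRH : f0 p0 = f1 p1 + f2 p2 := by linarith
    -- f1 p1 ≤ lam1
    have hmu1 : f1 p1 ≤ lam1 := by
      by_contra hc; push_neg at hc
      obtain ⟨hu1m', hu1e⟩ := hu1p lam1 hl1
      obtain ⟨hu0m', hu0e⟩ := hu0m lam1 ⟨hl1.1, hl1f0⟩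
      have hs1 : u1p lam1 < p1 := by
        by_contra hle; push_neg at hle
        have := hf1inc.monotoneOn ⟨h1m.1, le_trans hle hu1m'.2⟩ hu1m' hle
        rw [hu1e] at this; linarith
      have hd := hdiss _ hq1 _ hP
      simp only at hd
      rw [ef_of_le' f1 hs1.le, ef_of_ge' f2 h2m.2, hf2c, hu1e] at hd
      rcases lt_trichotomy p0 (u0m lam1) with h | h | h
      · rw [ef_of_ge' f0 h.le, hu0e] at hd; linarith
      · have he : f0 p0 = lam1 := by rw [h]; exact hu0e
        linarith
      · have hlt : f0 p0 < f0 (u0m lam1) :=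
          hf0dec hu0m' ⟨le_trans hu0m'.1 h.le, h0m.2⟩ h
        rw [hu0e] at hlt; linarith
    -- f2 p2 ≤ lam2
    have hmu2 : f2 p2 ≤ lam2 := by
      by_contra hc; push_neg at hc
      obtain ⟨hu2m', hu2e⟩ := hu2p lam2 hl2
      obtain ⟨hu0m', hu0e⟩ := hu0m lam2 ⟨hl2.1, hl2f0⟩
      have hs2 : u2p lam2 < p2 := by
        by_contra hle; push_neg at hle
        have := hf2inc.monotoneOn ⟨h2m.1, le_trans hle hu2m'.2⟩ hu2m' hle
        rw [hu2e] at this; linarith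
      have hd := hdiss _ hq2 _ hP
      simp only at hd
      rw [ef_of_le' f2 hs2.le, ef_of_ge' f1 h1m.2, hf1c, hu2e] at hd
      rcases lt_trichotomy p0 (u0m lam2) with h | h | h
      · rw [ef_of_ge' f0 h.le, hu0e] at hd; linarith
      · have he : f0 p0 = lam2 := by rw [h]; exact hu0e
        linarith
      · have hlt : f0 p0 < f0 (u0m lam2) :=
          hf0dec hu0m' ⟨le_trans hu0m'.1 h.le, h0m.2⟩ h
        rw [hu0e] at hlt; linarith
    have hmu0 : f0 p0 ≤ lam0 := by rw [hsum]; linarith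
    -- envelope bounds
    have hfp0p := hfp0 p0
    have hnu0mem : fplus0 p0 ∈ Set.Icc 0 (f0 b0) := by
      rcases le_total p0 b0 with h | h
      · rw [hfp0p.1 h]
        exact ⟨h0nn, hf0inc.monotoneOn ⟨h0m.1, h⟩ ⟨h0ab.le, le_rfl⟩ h⟩
      · rw [hfp0p.2 h]; exact ⟨hf0b0.le, le_rfl⟩
    -- condition for branch 1
    have hC1 : lhat1 (fplus0 p0) ≤ fplus1 p1 := by
      by_contra hc; push_neg at hc
      have hl1nu := hlhat1mem _ hnu0mem
      have hp1b : p1 < b1 := by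
        by_contra hble; push_neg at hble
        rw [(hfp1 p1).2 hble] at hc
        linarith [hl1nu.2, hl1.2]
      rw [(hfp1 p1).1 hp1b.le] at hc
      have hf1lt : f1 p1 < lam1 := lt_of_lt_of_le hc hl1nu.2
      have hnu0pos : 0 < fplus0 p0 := by
        rcases eq_or_lt_of_le hnu0mem.1 with h | h
        · exfalso; rw [← h, hlhat1zero] at hc; linarith
        · exact h
      obtain ⟨lam, hlam0le, hlamlam0, hlamlt, hlamgt⟩ :
          ∃ lam, 0 ≤ lam ∧ lam ≤ lam0 ∧ lam < fplus0 p0 ∧ f1 p1 < lhat1 lam := by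
        rcases le_or_gt (fplus0 p0) lam0 with hle | hlt
        · have hcwa := hlhat1cont _ hnu0mem
          have hev : ∀ᶠ x in 𝓝[Set.Icc 0 (f0 b0)] (fplus0 p0), f1 p1 < lhat1 x :=
            hcwa.eventually (eventually_gt_nhds hc)
          have hle' : 𝓝[Set.Ioo 0 (fplus0 p0)] (fplus0 p0) ≤
              𝓝[Set.Icc 0 (f0 b0)] (fplus0 p0) :=
            nhdsWithin_mono _ (fun x hx => ⟨hx.1.le, le_trans hx.2.le hnu0mem.2⟩)
          have hev2 := hev.filter_mono hle'
          have hmem : ∀ᶠ x in 𝓝[Set.Ioo 0 (fplus0 p0)] (fplus0 p0),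
              x ∈ Set.Ioo 0 (fplus0 p0) := eventually_mem_nhdsWithin
          have hne : (𝓝[Set.Ioo 0 (fplus0 p0)] (fplus0 p0)).NeBot := by
            rw [nhdsWithin_Ioo_eq_nhdsLT hnu0pos]; infer_instance
          obtain ⟨x, hx1, hx2⟩ := (hmem.and hev2).exists
          exact ⟨x, hx1.1.le, le_trans hx1.2.le hle, hx1.2, hx2⟩
        · exact ⟨lam0, hlam0nn, le_rfl, hlt, by rw [hlhat1top]; exact hf1lt⟩
      have hlmem : lam ∈ Set.Icc 0 (f0 b0) := ⟨hlam0le, le_trans hlamlam0 hl0.2⟩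
      have hl1m := hlhat1mem _ hlmem
      have hl2m := hlhat2mem _ hlmem
      have hsum2 : lhat1 lam + lhat2 lam = lam := by
        rw [hlhatsum _ hlmem, min_eq_left hlamlam0]
      obtain ⟨hu0m', hu0e⟩ := hu0p lam hlmem
      obtain ⟨hu1m', hu1e⟩ := hu1p _ ⟨hl1m.1, le_trans hl1m.2 hl1.2⟩
      obtain ⟨hu2m', hu2e⟩ := hu2p _ ⟨hl2m.1, le_trans hl2m.2 hl2.2⟩
      have hd := hdiss _ (hCurve lam ⟨hlam0le, hlamlam0⟩) _ hP
      simp only at hd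
      have hs0 : u0p lam < p0 := by
        rcases le_total p0 b0 with h | h
        · by_contra hle; push_neg at hle
          have hmono := hf0inc.monotoneOn ⟨h0m.1, le_trans hle hu0m'.2⟩ hu0m' hle
          rw [hu0e] at hmono
          rw [hfp0p.1 h] at hlamlt; linarith
        · rcases eq_or_lt_of_le (le_trans hu0m'.2 h) with he | hlt'
          · exfalso
            have hp0b : p0 = b0 := le_antisymm (he ▸ hu0m'.2) h
            rw [hfp0p.2 h, ← hp0b, ← he, hu0e] at hlamlt
            exact lt_irrefl _ hlamlt
          · exact hlt'
      have hs1 : p1 < u1p (lhat1 lam) := by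
        by_contra hle; push_neg at hle
        have := hf1inc.monotoneOn hu1m' ⟨h1m.1, hp1b.le⟩ hle
        rw [hu1e] at this; linarith
      rw [ef_of_le' f0 hs0.le, ef_of_ge' f1 hs1.le, hu0e, hu1e] at hd
      have hEF2 : f2 p2 - lhat2 lam ≤ entropyFlux f2 (u2p (lhat2 lam)) p2 := by
        rcases lt_trichotomy p2 (u2p (lhat2 lam)) with h | h | h
        · rw [ef_of_ge' f2 h.le, hu2e]
          have := hf2inc ⟨h2m.1, le_trans h.le hu2m'.2⟩ hu2m' h
          rw [hu2e] at this; linarith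
        · rw [h, ef_of_le' f2 le_rfl]
          linarith [hu2e]
        · rw [ef_of_le' f2 h.le, hu2e]
      linarith
    -- condition for branch 2
    have hC2 : lhat2 (fplus0 p0) ≤ fplus2 p2 := by
      by_contra hc; push_neg at hc
      have hl2nu := hlhat2mem _ hnu0mem
      have hp2b : p2 < b2 := by
        by_contra hble; push_neg at hble
        rw [(hfp2 p2).2 hble] at hc
        linarith [hl2nu.2, hl2.2]
      rw [(hfp2 p2).1 hp2b.le] at hc
      have hf2lt : f2 p2 < lam2 := lt_of_lt_of_le hc hl2nu.2
      have hnu0pos : 0 < fplus0 p0 := by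
        rcases eq_or_lt_of_le hnu0mem.1 with h | h
        · exfalso; rw [← h, hlhat2zero] at hc; linarith
        · exact h
      obtain ⟨lam, hlam0le, hlamlam0, hlamlt, hlamgt⟩ :
          ∃ lam, 0 ≤ lam ∧ lam ≤ lam0 ∧ lam < fplus0 p0 ∧ f2 p2 < lhat2 lam := by
        rcases le_or_gt (fplus0 p0) lam0 with hle | hlt
        · have hcwa := hlhat2cont _ hnu0mem
          have hev : ∀ᶠ x in 𝓝[Set.Icc 0 (f0 b0)] (fplus0 p0), f2 p2 < lhat2 x :=
            hcwa.eventually (eventually_gt_nhds hc)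
          have hle' : 𝓝[Set.Ioo 0 (fplus0 p0)] (fplus0 p0) ≤
              𝓝[Set.Icc 0 (f0 b0)] (fplus0 p0) :=
            nhdsWithin_mono _ (fun x hx => ⟨hx.1.le, le_trans hx.2.le hnu0mem.2⟩)
          have hev2 := hev.filter_mono hle'
          have hmem : ∀ᶠ x in 𝓝[Set.Ioo 0 (fplus0 p0)] (fplus0 p0),
              x ∈ Set.Ioo 0 (fplus0 p0) := eventually_mem_nhdsWithin
          have hne : (𝓝[Set.Ioo 0 (fplus0 p0)] (fplus0 p0)).NeBot := by
            rw [nhdsWithin_Ioo_eq_nhdsLT hnu0pos]; infer_instance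
          obtain ⟨x, hx1, hx2⟩ := (hmem.and hev2).exists
          exact ⟨x, hx1.1.le, le_trans hx1.2.le hle, hx1.2, hx2⟩
        · exact ⟨lam0, hlam0nn, le_rfl, hlt, by rw [hlhat2top]; exact hf2lt⟩
      have hlmem : lam ∈ Set.Icc 0 (f0 b0) := ⟨hlam0le, le_trans hlamlam0 hl0.2⟩
      have hl1m := hlhat1mem _ hlmem
      have hl2m := hlhat2mem _ hlmem
      have hsum2 : lhat1 lam + lhat2 lam = lam := by
        rw [hlhatsum _ hlmem, min_eq_left hlamlam0]
      obtain ⟨hu0m', hu0e⟩ := hu0p lam hlmem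
      obtain ⟨hu1m', hu1e⟩ := hu1p _ ⟨hl1m.1, le_trans hl1m.2 hl1.2⟩
      obtain ⟨hu2m', hu2e⟩ := hu2p _ ⟨hl2m.1, le_trans hl2m.2 hl2.2⟩
      have hd := hdiss _ (hCurve lam ⟨hlam0le, hlamlam0⟩) _ hP
      simp only at hd
      have hs0 : u0p lam < p0 := by
        rcases le_total p0 b0 with h | h
        · by_contra hle; push_neg at hle
          have hmono := hf0inc.monotoneOn ⟨h0m.1, le_trans hle hu0m'.2⟩ hu0m' hle
          rw [hu0e] at hmono
          rw [hfp0p.1 h] at hlamlt; linarith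
        · rcases eq_or_lt_of_le (le_trans hu0m'.2 h) with he | hlt'
          · exfalso
            have hp0b : p0 = b0 := le_antisymm (he ▸ hu0m'.2) h
            rw [hfp0p.2 h, ← hp0b, ← he, hu0e] at hlamlt
            exact lt_irrefl _ hlamlt
          · exact hlt'
      have hs2 : p2 < u2p (lhat2 lam) := by
        by_contra hle; push_neg at hle
        have := hf2inc.monotoneOn hu2m' ⟨h2m.1, hp2b.le⟩ hle
        rw [hu2e] at this; linarith
      rw [ef_of_le' f0 hs0.le, ef_of_ge' f2 hs2.le, hu0e, hu2e] at hd
      have hEF1 : f1 p1 - lhat1 lam ≤ entropyFlux f1 (u1p (lhat1 lam)) p1 := by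
        rcases lt_trichotomy p1 (u1p (lhat1 lam)) with h | h | h
        · rw [ef_of_ge' f1 h.le, hu1e]
          have := hf1inc ⟨h1m.1, le_trans h.le hu1m'.2⟩ hu1m' h
          rw [hu1e] at this; linarith
        · rw [h, ef_of_le' f1 le_rfl]
          linarith [hu1e]
        · rw [ef_of_le' f1 h.le, hu1e]
      linarith
    rw [hGLam]
    exact ⟨h0m, h1m, h2m, ⟨h0nn, hmu0⟩, ⟨h1nn, hmu1⟩, ⟨h2nn, hmu2⟩, hRH, hC1, hC2⟩
  have part1 : G ⊆ GLam := key G hGQ hGdiss hGamma hP1 hP2 hP3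
  refine ⟨part1, ?_⟩
  intro P hQ0 hQ1 hQ2 hdissP
  have hsub : G ⊆ insert P G := Set.subset_insert _ _
  refine key (insert P G) ?_ ?_ (fun lam h => hsub (hGamma lam h))
    (hsub hP1) (hsub hP2) (hsub hP3) (Set.mem_insert _ _)
  · rintro Q hQ
    rcases Set.mem_insert_iff.1 hQ with rfl | hQ
    · exact ⟨hQ0, hQ1, hQ2⟩
    · exact hGQ Q hQ
  · intro Pb hPb Q hQmem
    rcases Set.mem_insert_iff.1 hPb with hPbe | hPb
    · rcases Set.mem_insert_iff.1 hQmem with hQe | hQmem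
      · rw [hPbe, hQe]; simp [entropyFlux]
      · rw [hPbe, ef_comm' f0, ef_comm' f1, ef_comm' f2]
        exact hdissP Q (part1 hQmem)
    · rcases Set.mem_insert_iff.1 hQmem with hQe | hQmem
      · rw [hQe]; exact hdissP Pb (part1 hPb)
      · exact hGdiss Pb hPb Q hQmem
end
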